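/- arXiv:2408.04433 — 11 statements merged into one kernel-verified Lean document; each statement's English description precedes it below -/
import Mathlib

section
/- Let ν ∈ {1,2}. If a, b : ℤ → ℝ are both ν-symmetric-unimodal, then their pointwise sum a + b and their convolution a∗b are ν-symmetric-unimodal. (This is the closure under addition and multiplication of the class 𝒰_x^ν of symmetric unimodal Laurent polynomials, i.e. Proposition 1.2 of the paper for 𝒰_x^ν.) -/
/-- A finitely supported `c : ℤ → ℝ` is ν-symmetric-unimodal if it is symmetric
(`c (-i) = c i`), nonnegative, and `c (n + ν) ≤ c n` for all `n ≥ 0`. -/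
def SymUnimodal (ν : ℤ) (c : ℤ → ℝ) : Prop :=
  (Function.support c).Finite ∧
  (∀ i : ℤ, c (-i) = c i) ∧
  (∀ i : ℤ, 0 ≤ c i) ∧
  (∀ n : ℤ, 0 ≤ n → c (n + ν) ≤ c n)

private lemma symUnimodal_steps {ν : ℤ} {a : ℤ → ℝ} (ha : SymUnimodal ν a)
    (hν0 : 0 ≤ ν) (k : ℕ) {p : ℤ} (hp : 0 ≤ p) : a (p + ν * k) ≤ a p := by
  induction k with
  | zero => simp
  | succ k ih =>
    have h1 : p + ν * (k + 1 : ℕ) = (p + ν * k) + ν := by push_cast; ring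
    have h2 : (0 : ℤ) ≤ p + ν * k := by positivity
    calc a (p + ν * (k + 1 : ℕ)) = a ((p + ν * k) + ν) := by rw [h1]
      _ ≤ a (p + ν * k) := ha.2.2.2 _ h2
      _ ≤ a p := ih

private lemma symUnimodal_key {ν : ℤ} (hν : ν = 1 ∨ ν = 2) {a : ℤ → ℝ}
    (ha : SymUnimodal ν a) {n m : ℤ} (hn : 0 ≤ n) (hm : 0 ≤ m) :
    a (n + m + ν) ≤ a (n - m) := by
  have hν0 : (0 : ℤ) ≤ ν := by rcases hν with h | h <;> omega
  have aux : ∀ n m : ℤ, 0 ≤ m → m ≤ n → a (n + m + ν) ≤ a (n - m) := by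
    intro n m hm hmn
    obtain ⟨k, hk⟩ : ∃ k : ℕ, (ν : ℤ) * k = ν + 2 * m := by
      rcases hν with h | h
      · exact ⟨(1 + 2 * m).toNat, by simp [h]; omega⟩
      · exact ⟨(1 + m).toNat, by simp [h]; omega⟩
    have he : n + m + ν = (n - m) + ν * k := by rw [hk]; ring
    rw [he]
    exact symUnimodal_steps ha hν0 k (by omega)
  rcases le_total m n with h | h
  · exact aux n m hm h
  · have h1 : a (n - m) = a (m - n) := by
      rw [show n - m = -(m - n) by ring, ha.2.1]
    have h2 : n + m + ν = m + n + ν := by ring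
    rw [h1, h2]
    exact aux m n hn h

/-- Proposition 1.2 of the paper for `𝒰_x^ν`: the class of ν-symmetric-unimodal
coefficient functions is closed under pointwise addition and convolution. -/
theorem symUnimodal_add_and_mul (ν : ℤ) (hν : ν = 1 ∨ ν = 2)
    (a b : ℤ → ℝ) (ha : SymUnimodal ν a) (hb : SymUnimodal ν b) :
    SymUnimodal ν (fun i => a i + b i) ∧
    SymUnimodal ν (fun n => ∑ᶠ r : ℤ, a r * b (n - r)) := by
  classical
  obtain ⟨haf, has, han, hau⟩ := ha
  obtain ⟨hbf, hbs, hbn, hbu⟩ := hb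
  constructor
  · refine ⟨?_, ?_, ?_, ?_⟩
    · refine (haf.union hbf).subset ?_
      intro i hi
      simp only [Function.mem_support, Set.mem_union] at *
      by_contra h
      push_neg at h
      exact hi (by rw [h.1, h.2, add_zero])
    · intro i
      show a (-i) + b (-i) = a i + b i
      rw [has i, hbs i]
    · intro i; exact add_nonneg (han i) (hbn i)
    · intro n hn; exact add_le_add (hau n hn) (hbu n hn)
  · set c : ℤ → ℝ := fun n => ∑ᶠ r : ℤ, a r * b (n - r) with hc
    refine ⟨?_, ?_, ?_, ?_⟩
    · -- finiteness of support
      refine (Set.Finite.image2 (· + ·) haf hbf).subset ?_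
      intro n hn
      simp only [Function.mem_support, hc] at hn
      obtain ⟨r, hr⟩ : ∃ r : ℤ, a r * b (n - r) ≠ 0 := by
        by_contra h
        push_neg at h
        exact hn (finsum_eq_zero_of_forall_eq_zero h)
      have h1 : a r ≠ 0 := fun h => hr (by rw [h, zero_mul])
      have h2 : b (n - r) ≠ 0 := fun h => hr (by rw [h, mul_zero])
      exact ⟨r, h1, n - r, h2, by ring⟩
    · -- symmetry
      intro i
      simp only [hc]
      calc (∑ᶠ r : ℤ, a r * b (-i - r))
          = ∑ᶠ r : ℤ, a ((Equiv.neg ℤ) r) * b (-i - (Equiv.neg ℤ) r) :=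
            (finsum_comp_equiv (Equiv.neg ℤ)).symm
        _ = ∑ᶠ r : ℤ, a r * b (i - r) := by
            apply finsum_congr
            intro r
            simp only [Equiv.neg_apply]
            rw [has r, show -i - -r = -(i - r) by ring, hbs]
    · -- nonnegativity
      intro i
      exact finsum_nonneg fun r => mul_nonneg (han r) (hbn (i - r))
    · -- unimodality
      intro n hn
      have hν0 : (0 : ℤ) < ν := by rcases hν with h | h <;> omega
      -- rewrite c n as a sum over m = n - r
      have h1 : ∀ t : ℤ, c t = ∑ᶠ m : ℤ, a (t - m) * b m := by
        intro t
        simp only [hc]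
        rw [← finsum_comp_equiv (Equiv.subLeft t)]
        apply finsum_congr
        intro m
        simp [Equiv.subLeft]
      -- rewrite c (n + ν)
      have h2 : c (n + ν) = ∑ᶠ m : ℤ, a (n - m) * b (m + ν) := by
        rw [h1]
        rw [← finsum_comp_equiv (Equiv.addRight ν)]
        apply finsum_congr
        intro m
        simp only [Equiv.coe_addRight]
        congr 2
        ring
      set f : ℤ → ℝ := fun m => b m - b (m + ν) with hfdef
      set g : ℤ → ℝ := fun m => a (n - m) * f m with hgdef
      have hsupp1 : (Function.support fun m : ℤ => a (n - m) * b m).Finite := by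
        refine hbf.subset ?_
        intro m hm
        simp only [Function.mem_support] at *
        exact fun h => hm (by rw [h, mul_zero])
      have hsupp2 : (Function.support fun m : ℤ => a (n - m) * b (m + ν)).Finite := by
        refine (hbf.image (fun x => x - ν)).subset ?_
        intro m hm
        simp only [Function.mem_support] at hm
        have : b (m + ν) ≠ 0 := fun h => hm (by rw [h, mul_zero])
        exact ⟨m + ν, this, by ring⟩
      have hdiff : c n - c (n + ν) = ∑ᶠ m : ℤ, g m := by
        rw [h1, h2, ← finsum_sub_distrib hsupp1 hsupp2]
        apply finsum_congr
        intro m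
        simp only [hgdef, hfdef]
        ring
      -- choose a σ-invariant finset containing the support of g
      set σ : ℤ → ℤ := fun m => -m - ν with hσdef
      set B : Finset ℤ := hbf.toFinset with hB
      set T₀ : Finset ℤ := B ∪ B.image (fun x => x - ν) with hT₀
      set T : Finset ℤ := T₀ ∪ T₀.image σ with hT
      have hT₀sub : T₀ ⊆ T := Finset.subset_union_left
      have hσT : ∀ m ∈ T, σ m ∈ T := by
        intro m hm
        rw [hT, Finset.mem_union] at hm ⊢
        rcases hm with hm | hm
        · exact Or.inr (Finset.mem_image.mpr ⟨m, hm, rfl⟩)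
        · obtain ⟨x, hx, hxm⟩ := Finset.mem_image.mp hm
          left
          have hx2 : σ m = x := by subst hxm; simp only [hσdef]; ring
          rwa [hx2]
      have hsuppg : Function.support g ⊆ ↑T := by
        intro m hm
        simp only [Function.mem_support, hgdef, hfdef] at hm
        have hf : b m - b (m + ν) ≠ 0 := fun h => hm (by rw [h, mul_zero])
        have : b m ≠ 0 ∨ b (m + ν) ≠ 0 := by
          by_contra h
          push_neg at h
          exact hf (by rw [h.1, h.2, sub_zero])
        apply hT₀sub
        rw [hT₀, Finset.mem_union]
        rcases this with h | h
        · exact Or.inl (by simp [hB, h])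
        · refine Or.inr (Finset.mem_image.mpr ⟨m + ν, by simp [hB, h], by ring⟩)
      have hfin : (∑ᶠ m : ℤ, g m) = ∑ m ∈ T, g m :=
        finsum_eq_sum_of_support_subset g hsuppg
      -- split into m ≥ 0, m ≤ -ν, and the rest
      have hsplit : (∑ m ∈ T, g m) =
          (∑ m ∈ T.filter (fun m => 0 ≤ m), g m) +
          (∑ m ∈ T.filter (fun m => ¬ 0 ≤ m), g m) :=
        (Finset.sum_filter_add_sum_filter_not T _ g).symm
      have hneg : (∑ m ∈ T.filter (fun m => ¬ 0 ≤ m), g m) =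
          ∑ m ∈ T.filter (fun m => m ≤ -ν), g m := by
        symm
        apply Finset.sum_subset
        · intro m hm
          rw [Finset.mem_filter] at hm
          obtain ⟨hm1, hm2⟩ := hm
          exact Finset.mem_filter.mpr ⟨hm1, by omega⟩
        · intro m hm hm'
          simp only [Finset.mem_filter, not_and, not_le] at hm hm'
          have hm2 : -ν < m := hm' hm.1
          have hm3 : m < 0 := hm.2
          rcases hν with h | h
          · omega
          · have hm1 : m = -1 := by omega
            simp only [hgdef, hfdef, hm1, h]
            have : b (-1 + 2) = b (-1 : ℤ) := by
              rw [show (-1 : ℤ) + 2 = 1 by ring, ← hbs 1]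
            rw [this]
            simp
      -- reindex the negative part by σ
      have hbij : (∑ m ∈ T.filter (fun m => m ≤ -ν), g m) =
          ∑ m ∈ T.filter (fun m => 0 ≤ m), g (σ m) := by
        refine Finset.sum_bij' (fun m _ => σ m) (fun m _ => σ m) ?_ ?_ ?_ ?_ ?_
        · intro m hm
          rw [Finset.mem_filter] at hm ⊢
          obtain ⟨hm1, hm2⟩ := hm
          refine ⟨hσT m hm1, ?_⟩
          simp only [hσdef]; omega
        · intro m hm
          rw [Finset.mem_filter] at hm ⊢
          obtain ⟨hm1, hm2⟩ := hm
          refine ⟨hσT m hm1, ?_⟩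
          simp only [hσdef]; omega
        · intro m _; simp only [hσdef]; ring
        · intro m _; simp only [hσdef]; ring
        · intro m _
          have hx : σ (σ m) = m := by simp only [hσdef]; ring
          rw [hx]
      have hterm : ∀ m ∈ T.filter (fun m => 0 ≤ m), 0 ≤ g m + g (σ m) := by
        intro m hm
        simp only [Finset.mem_filter] at hm
        have hm0 : 0 ≤ m := hm.2
        have hgs : g (σ m) = -(a (n + m + ν) * f m) := by
          simp only [hgdef, hσdef, hfdef]
          have e1 : n - (-m - ν) = n + m + ν := by ring
          have e2 : b (-m - ν) = b (m + ν) := by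
            rw [show -m - ν = -(m + ν) by ring, hbs]
          have e3 : b (-m - ν + ν) = b m := by
            rw [show -m - ν + ν = -m by ring, hbs]
          rw [e1, e2, e3]
          ring
        have : g m + g (σ m) = (a (n - m) - a (n + m + ν)) * f m := by
          rw [hgs]; simp only [hgdef]; ring
        rw [this]
        apply mul_nonneg
        · have := symUnimodal_key hν ⟨haf, has, han, hau⟩ hn hm0
          linarith
        · simp only [hfdef]
          have := hbu m hm0
          linarith
      have hfinal : 0 ≤ ∑ m ∈ T, g m := by
        rw [hsplit, hneg, hbij, ← Finset.sum_add_distrib]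
        exact Finset.sum_nonneg hterm
      rw [hfin] at hdiff
      linarith
end

section
/- Let ν ∈ {1,2}. If a, b : ℤ → ℝ are both ν-symmetric-strictly-unimodal, then their pointwise sum a + b and their convolution a∗b are ν-symmetric-strictly-unimodal. (This is the closure under addition and multiplication of the class 𝒯_x^ν of symmetric strictly unimodal Laurent polynomials, i.e. Proposition 1.2 of the paper for 𝒯_x^ν.) -/
/-- A finitely supported `c : ℤ → ℝ` is ν-symmetric-strictly-unimodal if it is symmetric
(`c (-i) = c i`), nonnegative, and for every `n ≥ 0`: `c (n + ν) < c n` whenever `c n > 0`,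
and `c (n + ν) = 0` whenever `c n = 0`. -/
def SymStrictUnimodal (ν : ℤ) (c : ℤ → ℝ) : Prop :=
  (Function.support c).Finite ∧
  (∀ i : ℤ, c (-i) = c i) ∧
  (∀ i : ℤ, 0 ≤ c i) ∧
  (∀ n : ℤ, 0 ≤ n → (0 < c n → c (n + ν) < c n) ∧ (c n = 0 → c (n + ν) = 0))

lemma ssu_symm_abs {ν : ℤ} {a : ℤ → ℝ} (ha : SymStrictUnimodal ν a) (i : ℤ) : a |i| = a i := by
  rcases abs_cases i with ⟨h, _⟩ | ⟨h, _⟩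
  · rw [h]
  · rw [h]; exact ha.2.1 i

lemma ssu_step {ν : ℤ} {a : ℤ → ℝ} (ha : SymStrictUnimodal ν a) {n : ℤ} (hn : 0 ≤ n) :
    a (n + ν) ≤ a n := by
  rcases (ha.2.2.1 n).eq_or_lt with h | h
  · rw [(ha.2.2.2 n hn).2 h.symm]; exact ha.2.2.1 n
  · exact ((ha.2.2.2 n hn).1 h).le

lemma ssu_antitone {ν : ℤ} {a : ℤ → ℝ} (hν0 : 0 < ν) (ha : SymStrictUnimodal ν a) :
    ∀ (k : ℕ) (m : ℤ), 0 ≤ m → a (m + ν * k) ≤ a m := by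
  intro k
  induction k with
  | zero => intro m hm; norm_num
  | succ k ih =>
    intro m hm
    have h1 : a (m + ν) ≤ a m := ssu_step ha hm
    have h2 : a (m + ν + ν * k) ≤ a (m + ν) := ih (m + ν) (by omega)
    have e : m + ν * ((k : ℤ) + 1) = m + ν + ν * k := by ring
    have e2 : ((k + 1 : ℕ) : ℤ) = (k : ℤ) + 1 := by push_cast; ring
    calc a (m + ν * ((k + 1 : ℕ) : ℤ)) = a (m + ν + ν * k) := by rw [e2, e]
    _ ≤ a (m + ν) := h2
    _ ≤ a m := h1

lemma ssu_mono {ν : ℤ} {a : ℤ → ℝ} (hν0 : 0 < ν) (ha : SymStrictUnimodal ν a)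
    {m m' : ℤ} (hm : 0 ≤ m) (hle : m ≤ m') (hdvd : ν ∣ m' - m) : a m' ≤ a m := by
  obtain ⟨k, hk⟩ := hdvd
  have hk0 : 0 ≤ k := by
    by_contra h
    push_neg at h
    have := mul_neg_of_pos_of_neg hν0 h
    linarith
  have h2 := ssu_antitone hν0 ha k.toNat m hm
  rw [Int.toNat_of_nonneg hk0] at h2
  have e : m' = m + ν * k := by linarith
  rw [e]; exact h2

lemma ssu_strict {ν : ℤ} {a : ℤ → ℝ} (hν0 : 0 < ν) (ha : SymStrictUnimodal ν a)
    {m m' : ℤ} (hm : 0 ≤ m) (hlt : m < m') (hdvd : ν ∣ m' - m) (hpos : 0 < a m) :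
    a m' < a m := by
  obtain ⟨k, hk⟩ := hdvd
  have hk1 : 1 ≤ k := by
    by_contra h
    push_neg at h
    have h0 : k ≤ 0 := by omega
    have := mul_nonpos_of_nonneg_of_nonpos hν0.le h0
    linarith
  have hle' : m + ν ≤ m' := by
    have : ν ≤ ν * k := le_mul_of_one_le_right hν0.le hk1
    linarith
  have hdvd' : ν ∣ m' - (m + ν) := ⟨k - 1, by
    calc m' - (m + ν) = (m' - m) - ν := by ring
    _ = ν * k - ν := by rw [hk]
    _ = ν * (k - 1) := by ring⟩
  have h1 : a (m + ν) < a m := (ha.2.2.2 m hm).1 hpos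
  have h2 : a m' ≤ a (m + ν) := ssu_mono hν0 ha (by omega) hle' hdvd'
  exact lt_of_le_of_lt h2 h1

lemma conv_diff (ν : ℤ) (hν : ν = 1 ∨ ν = 2) (a b : ℤ → ℝ) (ha : SymStrictUnimodal ν a)
    (hb : SymStrictUnimodal ν b) (n : ℤ) (hn : 0 ≤ n) :
    (∑ᶠ r : ℤ, a r * b (n + ν - r)) ≤ (∑ᶠ r : ℤ, a r * b (n - r)) ∧
    (0 < (∑ᶠ r : ℤ, a r * b (n - r)) →
      (∑ᶠ r : ℤ, a r * b (n + ν - r)) < ∑ᶠ r : ℤ, a r * b (n - r)) := by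
  have hν0 : 0 < ν := by rcases hν with rfl | rfl <;> norm_num
  -- finiteness facts
  have hfinb2 : (Function.support fun s : ℤ => b (s + ν)).Finite := by
    apply (hb.1.image (fun x => x - ν)).subset
    intro s hs
    exact ⟨s + ν, hs, by ring⟩
  have fin1 : (Function.support fun s : ℤ => a (n - s) * b s).Finite := by
    apply hb.1.subset
    intro s hs
    simp only [Function.mem_support] at hs ⊢
    exact fun h => hs (by rw [h, mul_zero])
  have fin2 : (Function.support fun s : ℤ => a (n - s) * b (s + ν)).Finite := by
    apply hfinb2.subset
    intro s hs
    simp only [Function.mem_support] at hs ⊢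
    exact fun h => hs (by rw [h, mul_zero])
  have fin3 : (Function.support fun s : ℤ => a (n - s) * (b s - b (s + ν))).Finite := by
    apply (hb.1.union hfinb2).subset
    intro s hs
    simp only [Function.mem_support] at hs
    by_contra hc
    simp only [Set.mem_union, Function.mem_support, not_or, not_not] at hc
    exact hs (by rw [hc.1, hc.2, sub_zero, mul_zero])
  have fin4 : (Function.support fun s : ℤ => a (n + s + ν) * (b (s + ν) - b s)).Finite := by
    apply (hb.1.union hfinb2).subset
    intro s hs
    simp only [Function.mem_support] at hs
    by_contra hc
    simp only [Set.mem_union, Function.mem_support, not_or, not_not] at hc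
    exact hs (by rw [hc.1, hc.2, sub_zero, mul_zero])
  have fin5 : (Function.support fun s : ℤ =>
      (a (n - s) - a (n + s + ν)) * (b s - b (s + ν))).Finite := by
    apply (hb.1.union hfinb2).subset
    intro s hs
    simp only [Function.mem_support] at hs
    by_contra hc
    simp only [Set.mem_union, Function.mem_support, not_or, not_not] at hc
    exact hs (by rw [hc.1, hc.2, sub_zero, mul_zero])
  -- reindexing steps
  have step1 : ∀ m : ℤ, (∑ᶠ r : ℤ, a r * b (m - r)) = ∑ᶠ s : ℤ, a (m - s) * b s := by
    intro m
    have hbij : Function.Bijective (fun s : ℤ => m - s) :=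
      ⟨fun x y h => by have h' : m - x = m - y := h; omega,
       fun y => ⟨m - y, show m - (m - y) = y by ring⟩⟩
    rw [← finsum_comp (g := fun r => a r * b (m - r)) (fun s : ℤ => m - s) hbij]
    apply finsum_congr
    intro s
    show a (m - s) * b (m - (m - s)) = a (m - s) * b s
    rw [show m - (m - s) = s by ring]
  have step2 : (∑ᶠ r : ℤ, a r * b (n + ν - r)) = ∑ᶠ s : ℤ, a (n - s) * b (s + ν) := by
    rw [step1 (n + ν)]
    have hbij : Function.Bijective (fun s : ℤ => s + ν) :=
      ⟨fun x y h => by have h' : x + ν = y + ν := h; omega,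
       fun y => ⟨y - ν, show y - ν + ν = y by ring⟩⟩
    rw [← finsum_comp (g := fun s => a (n + ν - s) * b s) (fun s : ℤ => s + ν) hbij]
    apply finsum_congr
    intro s
    show a (n + ν - (s + ν)) * b (s + ν) = a (n - s) * b (s + ν)
    rw [show n + ν - (s + ν) = n - s by ring]
  have step3 : (∑ᶠ r : ℤ, a r * b (n - r)) - (∑ᶠ r : ℤ, a r * b (n + ν - r))
      = ∑ᶠ s : ℤ, a (n - s) * (b s - b (s + ν)) := by
    rw [step1 n, step2, ← finsum_sub_distrib fin1 fin2]
    exact finsum_congr fun s => (mul_sub _ _ _).symm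
  have step4 : (∑ᶠ s : ℤ, a (n - s) * (b s - b (s + ν)))
      = ∑ᶠ s : ℤ, a (n + s + ν) * (b (s + ν) - b s) := by
    have hbij : Function.Bijective (fun s : ℤ => -s - ν) :=
      ⟨fun x y h => by have h' : -x - ν = -y - ν := h; omega,
       fun y => ⟨-y - ν, show -(-y - ν) - ν = y by ring⟩⟩
    rw [← finsum_comp (g := fun s => a (n - s) * (b s - b (s + ν))) (fun s : ℤ => -s - ν) hbij]
    apply finsum_congr
    intro s
    show a (n - (-s - ν)) * (b (-s - ν) - b (-s - ν + ν)) = a (n + s + ν) * (b (s + ν) - b s)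
    rw [show n - (-s - ν) = n + s + ν by ring, show -s - ν + ν = -s by ring,
      show -s - ν = -(s + ν) by ring, hb.2.1, hb.2.1]
  have step5 : 2 * ((∑ᶠ r : ℤ, a r * b (n - r)) - ∑ᶠ r : ℤ, a r * b (n + ν - r))
      = ∑ᶠ s : ℤ, (a (n - s) - a (n + s + ν)) * (b s - b (s + ν)) := by
    rw [step3, two_mul]
    nth_rewrite 2 [step4]
    rw [← finsum_add_distrib fin3 fin4]
    apply finsum_congr
    intro s
    show a (n - s) * (b s - b (s + ν)) + a (n + s + ν) * (b (s + ν) - b s)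
      = (a (n - s) - a (n + s + ν)) * (b s - b (s + ν))
    ring
  -- key positivity facts for s ≥ 0
  have key : ∀ s : ℤ, 0 ≤ s →
      0 ≤ (a (n - s) - a (n + s + ν)) * (b s - b (s + ν)) ∧
      (0 < a (n - s) → 0 < b s →
        0 < (a (n - s) - a (n + s + ν)) * (b s - b (s + ν))) := by
    intro s hs
    have habs : a (n - s) = a |n - s| := (ssu_symm_abs ha _).symm
    have hle1 : |n - s| ≤ n + s + ν := by
      rcases abs_cases (n - s) with ⟨h, _⟩ | ⟨h, _⟩ <;> rw [h] <;> omega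
    have hlt1 : |n - s| < n + s + ν := by
      rcases abs_cases (n - s) with ⟨h, _⟩ | ⟨h, _⟩ <;> rw [h] <;> omega
    have hdvd1 : ν ∣ n + s + ν - |n - s| := by
      rcases abs_cases (n - s) with ⟨h, _⟩ | ⟨h, _⟩ <;> rw [h] <;> rcases hν with rfl | rfl
      · exact one_dvd _
      · exact ⟨s + 1, by ring⟩
      · exact one_dvd _
      · exact ⟨n + 1, by ring⟩
    have hmono : a (n + s + ν) ≤ a |n - s| := ssu_mono hν0 ha (abs_nonneg _) hle1 hdvd1
    constructor
    · apply mul_nonneg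
      · rw [habs]; linarith
      · exact sub_nonneg.mpr (ssu_step hb hs)
    · intro hpa hpb
      apply mul_pos
      · rw [habs] at hpa ⊢
        exact sub_pos.mpr (ssu_strict hν0 ha (abs_nonneg _) hlt1 hdvd1 hpa)
      · exact sub_pos.mpr ((hb.2.2.2 s hs).1 hpb)
  -- all terms are nonnegative
  have hnn : ∀ s : ℤ, 0 ≤ (a (n - s) - a (n + s + ν)) * (b s - b (s + ν)) := by
    intro s
    rcases le_or_gt 0 s with hs | hs
    · exact (key s hs).1
    rcases le_or_gt ν (-s) with hs2 | hs2
    · have h0 := (key (-s - ν) (by omega)).1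
      rw [show n - (-s - ν) = n + s + ν from by ring, show n + (-s - ν) + ν = n - s from by ring,
        show -s - ν + ν = -s from by ring, show -s - ν = -(s + ν) from by ring,
        hb.2.1, hb.2.1] at h0
      have e3 : (a (n - s) - a (n + s + ν)) * (b s - b (s + ν))
          = (a (n + s + ν) - a (n - s)) * (b (s + ν) - b s) := by ring
      rw [e3]; exact h0
    · have hν2 : ν = 2 := by rcases hν with rfl | rfl <;> omega
      have hs1 : s = -1 := by omega
      subst hs1
      rw [hν2, show (-1 : ℤ) + 2 = 1 from by norm_num, hb.2.1 1, sub_self, mul_zero]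
  have hS : 0 ≤ ∑ᶠ s : ℤ, (a (n - s) - a (n + s + ν)) * (b s - b (s + ν)) :=
    finsum_nonneg hnn
  constructor
  · linarith [step5, hS]
  · intro hpos
    obtain ⟨r0, hr0⟩ : ∃ r : ℤ, 0 < a r * b (n - r) := by
      by_contra hcon
      push_neg at hcon
      have hz : ∀ r : ℤ, a r * b (n - r) = 0 := fun r =>
        le_antisymm (hcon r) (mul_nonneg (ha.2.2.1 r) (hb.2.2.1 _))
      rw [finsum_eq_zero_of_forall_eq_zero hz] at hpos
      exact lt_irrefl 0 hpos
    have har : 0 < a r0 := by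
      rcases (ha.2.2.1 r0).eq_or_lt with h | h
      · rw [← h, zero_mul] at hr0; exact absurd hr0 (lt_irrefl 0)
      · exact h
    have hbr : 0 < b (n - r0) := by
      rcases (hb.2.2.1 (n - r0)).eq_or_lt with h | h
      · rw [← h, mul_zero] at hr0; exact absurd hr0 (lt_irrefl 0)
      · exact h
    set s0 := |n - r0| with hs0
    have hs0nn : 0 ≤ s0 := abs_nonneg _
    have hbs0 : 0 < b s0 := by rw [hs0, ssu_symm_abs hb]; exact hbr
    have has0 : 0 < a (n - s0) := by
      rw [show a (n - s0) = a |n - s0| from (ssu_symm_abs ha _).symm]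
      rcases le_or_gt r0 n with hrn | hrn
      · have h1 : s0 = n - r0 := by rw [hs0]; exact abs_of_nonneg (by omega)
        rw [h1, show n - (n - r0) = r0 by ring, ssu_symm_abs ha]
        exact har
      · have h1 : s0 = r0 - n := by
          rw [hs0, abs_of_neg (show n - r0 < 0 by omega)]; ring
        rw [h1]
        have hm : (0 : ℤ) ≤ |n - (r0 - n)| := abs_nonneg _
        have hle2 : |n - (r0 - n)| ≤ r0 := by
          rcases abs_cases (n - (r0 - n)) with ⟨h, _⟩ | ⟨h, _⟩ <;> rw [h] <;> omega
        have hdvd2 : ν ∣ r0 - |n - (r0 - n)| := by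
          rcases abs_cases (n - (r0 - n)) with ⟨h, _⟩ | ⟨h, _⟩ <;> rw [h] <;>
            rcases hν with rfl | rfl
          · exact one_dvd _
          · exact ⟨r0 - n, by ring⟩
          · exact one_dvd _
          · exact ⟨n, by ring⟩
        exact lt_of_lt_of_le har (ssu_mono hν0 ha hm hle2 hdvd2)
    have hterm : 0 < (a (n - s0) - a (n + s0 + ν)) * (b s0 - b (s0 + ν)) :=
      (key s0 hs0nn).2 has0 hbs0
    have hle3 : (a (n - s0) - a (n + s0 + ν)) * (b s0 - b (s0 + ν))
        ≤ ∑ᶠ s : ℤ, (a (n - s) - a (n + s + ν)) * (b s - b (s + ν)) :=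
      single_le_finsum s0 fin5 hnn
    linarith [step5, hterm, hle3]

/-- Proposition 1.2 of the paper for `𝒯_x^ν`: the class of ν-symmetric-strictly-unimodal
coefficient functions is closed under pointwise addition and convolution. -/
theorem symStrictUnimodal_add_and_mul (ν : ℤ) (hν : ν = 1 ∨ ν = 2)
    (a b : ℤ → ℝ) (ha : SymStrictUnimodal ν a) (hb : SymStrictUnimodal ν b) :
    SymStrictUnimodal ν (fun i => a i + b i) ∧
    SymStrictUnimodal ν (fun n => ∑ᶠ r : ℤ, a r * b (n - r)) := by
  have hν0 : 0 < ν := by rcases hν with rfl | rfl <;> norm_num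
  constructor
  · refine ⟨?_, ?_, ?_, ?_⟩
    · apply (ha.1.union hb.1).subset
      intro i hi
      simp only [Function.mem_support] at hi
      by_contra hc
      simp only [Set.mem_union, Function.mem_support, not_or, not_not] at hc
      exact hi (by rw [hc.1, hc.2, add_zero])
    · intro i
      show a (-i) + b (-i) = a i + b i
      rw [ha.2.1, hb.2.1]
    · intro i
      exact add_nonneg (ha.2.2.1 i) (hb.2.2.1 i)
    · intro m hm
      constructor
      · intro hpos
        have hpos' : 0 < a m + b m := hpos
        show a (m + ν) + b (m + ν) < a m + b m
        rcases (ha.2.2.1 m).eq_or_lt with h | h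
        · have hb0 : 0 < b m := by linarith
          have h1 : a (m + ν) = 0 := (ha.2.2.2 m hm).2 h.symm
          have h2 : b (m + ν) < b m := (hb.2.2.2 m hm).1 hb0
          linarith
        · have h1 : a (m + ν) < a m := (ha.2.2.2 m hm).1 h
          have h2 : b (m + ν) ≤ b m := ssu_step hb hm
          linarith
      · intro h0
        have h0' : a m + b m = 0 := h0
        have h1 : a m = 0 := le_antisymm (by linarith [hb.2.2.1 m]) (ha.2.2.1 m)
        have h2 : b m = 0 := by linarith [ha.2.2.1 m]
        show a (m + ν) + b (m + ν) = 0
        rw [(ha.2.2.2 m hm).2 h1, (hb.2.2.2 m hm).2 h2, add_zero]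
  · refine ⟨?_, ?_, ?_, ?_⟩
    · apply Set.Finite.subset (Set.Finite.image2 (· + ·) ha.1 hb.1)
      intro m hm
      simp only [Function.mem_support] at hm
      obtain ⟨r, hr⟩ : ∃ r : ℤ, a r * b (m - r) ≠ 0 := by
        by_contra hc
        push_neg at hc
        exact hm (finsum_eq_zero_of_forall_eq_zero hc)
      have hr1 : a r ≠ 0 := fun h => hr (by rw [h, zero_mul])
      have hr2 : b (m - r) ≠ 0 := fun h => hr (by rw [h, mul_zero])
      exact ⟨r, hr1, m - r, hr2, by show r + (m - r) = m; ring⟩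
    · intro i
      show (∑ᶠ r : ℤ, a r * b (-i - r)) = ∑ᶠ r : ℤ, a r * b (i - r)
      have hbij : Function.Bijective (fun r : ℤ => -r) :=
        ⟨fun x y h => by have h' : -x = -y := h; omega,
         fun y => ⟨-y, show -(-y) = y by ring⟩⟩
      rw [← finsum_comp (g := fun r => a r * b (-i - r)) (fun r : ℤ => -r) hbij]
      apply finsum_congr
      intro r
      show a (-r) * b (-i - -r) = a r * b (i - r)
      rw [ha.2.1, show -i - -r = -(i - r) by ring, hb.2.1]
    · intro i
      exact finsum_nonneg fun r => mul_nonneg (ha.2.2.1 r) (hb.2.2.1 _)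
    · intro m hm
      have hd := conv_diff ν hν a b ha hb m hm
      constructor
      · intro hpos
        exact hd.2 hpos
      · intro h0
        have h0' : (∑ᶠ r : ℤ, a r * b (m - r)) = 0 := h0
        have h2 : 0 ≤ ∑ᶠ r : ℤ, a r * b (m + ν - r) :=
          finsum_nonneg fun r => mul_nonneg (ha.2.2.1 r) (hb.2.2.1 _)
        have h1 := hd.1
        show (∑ᶠ r : ℤ, a r * b (m + ν - r)) = 0
        linarith
end

section
/- Let ν ∈ {1,2}. Let a, b : ℤ → ℤ → ℝ be coefficient arrays of formal bivariate Laurent series (a j i is the coefficient of x^i y^j), such that: there exist integers N_a, N_b with a j = 0 for all j < −N_a and b j = 0 for all j < −N_b; for every j ∈ ℤ the function i ↦ a j i is ν-symmetric-unimodal, and likewise for b. Define the product coefficients c j i = Σ_{j₁+j₂=j} Σ_{r∈ℤ} a j₁ r · b j₂ (i−r) (all sums are finite). Then for every j ∈ ℤ the function i ↦ c j i is ν-symmetric-unimodal. (This is the closure of the class 𝒰_{x,y}^ν under multiplication of formal bivariate Laurent series, i.e. Theorem 1.5 of the paper for 𝒰_{x,y}^ν.) -/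
lemma SymUnimodal.abs' {ν : ℤ} {f : ℤ → ℝ} (hf : SymUnimodal ν f) (i : ℤ) : f i = f |i| := by
  rcases abs_choice i with h | h
  · rw [h]
  · rw [h, hf.2.1]

lemma SymUnimodal.mono_nat {ν : ℤ} (hν : 0 < ν) {f : ℤ → ℝ} (hf : SymUnimodal ν f)
    (p : ℤ) (hp : 0 ≤ p) : ∀ k : ℕ, f (p + ν * k) ≤ f p := by
  intro k
  induction k with
  | zero => simp
  | succ m ih =>
    have h1 : f (p + ν * m + ν) ≤ f (p + ν * m) := by
      apply hf.2.2.2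
      positivity
    calc f (p + ν * (m + 1 : ℕ)) = f (p + ν * m + ν) := by push_cast; ring_nf
      _ ≤ f (p + ν * m) := h1
      _ ≤ f p := ih

lemma SymUnimodal.le_of_abs_le {ν : ℤ} (hν : ν = 1 ∨ ν = 2) {f : ℤ → ℝ} (hf : SymUnimodal ν f)
    {p q : ℤ} (hpq : |p| ≤ |q|) (hd : ν ∣ q - p) : f q ≤ f p := by
  have hν0 : 0 < ν := by rcases hν with h | h <;> omega
  rw [hf.abs' p, hf.abs' q]
  have hd' : ν ∣ |q| - |p| := by
    rcases hν with h | h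
    · simp [h]
    · subst h
      rcases hd with ⟨m, hm⟩
      rcases abs_choice p with hp | hp <;> rcases abs_choice q with hq | hq <;> omega
  rcases hd' with ⟨k, hk⟩
  have hk0 : 0 ≤ k := by nlinarith [abs_nonneg p, abs_nonneg q]
  have hkt : ((k.toNat : ℤ)) = k := Int.toNat_of_nonneg hk0
  have : |q| = |p| + ν * k.toNat := by rw [hkt]; linarith
  rw [this]
  exact hf.mono_nat hν0 _ (abs_nonneg p) k.toNat

/-- Key pairing inequality. -/
lemma pair_nonneg {ν : ℤ} (hν : ν = 1 ∨ ν = 2) {f g : ℤ → ℝ}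
    (hf : SymUnimodal ν f) (hg : SymUnimodal ν g) {n : ℤ} (hn : 0 ≤ n) (r : ℤ) :
    0 ≤ (f r - f (2 * n + ν - r)) * (g (n - r) - g (n + ν - r)) := by
  have hν0 : 0 < ν := by rcases hν with h | h <;> omega
  rcases le_or_gt r n with hr | hr
  · -- r ≤ n : both factors nonneg
    have h1 : f (2 * n + ν - r) ≤ f r := by
      apply hf.le_of_abs_le hν
      · have h2 : (0:ℤ) ≤ 2 * n + ν - r := by omega
        rcases abs_cases r with ⟨h, _⟩ | ⟨h, _⟩ <;> rcases abs_cases (2*n+ν-r) with ⟨h', _⟩ | ⟨h', _⟩ <;> omega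
      · rcases hν with h | h
        · simp [h]
        · subst h; refine ⟨n - r + 1, by ring⟩
    have h2 : g (n + ν - r) ≤ g (n - r) := by
      have := hg.2.2.2 (n - r) (by omega)
      have e : n - r + ν = n + ν - r := by ring
      rwa [e] at this
    exact mul_nonneg (by linarith) (by linarith)
  · rcases le_or_gt (n + ν) r with hr2 | hr2
    · -- r ≥ n + ν : both factors nonpos
      have h1 : f r ≤ f (2 * n + ν - r) := by
        apply hf.le_of_abs_le hν
        · rcases abs_cases r with ⟨h, _⟩ | ⟨h, _⟩ <;> rcases abs_cases (2*n+ν-r) with ⟨h', _⟩ | ⟨h', _⟩ <;> omega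
        · rcases hν with h | h
          · simp [h]
          · subst h; refine ⟨r - n - 1, by ring⟩
      have h2 : g (n - r) ≤ g (n + ν - r) := by
        have := hg.2.2.2 (r - n - ν) (by omega)
        have e1 : r - n - ν + ν = r - n := by ring
        rw [e1] at this
        have e2 : g (r - n) = g (n - r) := by
          have := hg.2.1 (r - n); rw [neg_sub] at this; exact this.symm
        have e3 : g (r - n - ν) = g (n + ν - r) := by
          have := hg.2.1 (r - n - ν)
          have e : -(r - n - ν) = n + ν - r := by ring
          rw [e] at this; exact this.symm
        rw [e2, e3] at this; exact this
      have := mul_nonneg (a := f (2*n+ν-r) - f r) (b := g (n+ν-r) - g (n-r))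
        (by linarith) (by linarith)
      nlinarith [this]
    · -- n < r < n + ν : forces ν = 2, r = n + 1, second factor zero
      have hν2 : ν = 2 := by rcases hν with h | h <;> omega
      have hr1 : r = n + 1 := by omega
      have : g (n - r) = g (n + ν - r) := by
        subst hν2 hr1
        have := hg.2.1 1
        have e1 : n - (n+1) = -1 := by ring
        have e2 : n + 2 - (n+1) = 1 := by ring
        rw [e1, e2]; simpa using this
      rw [this]
      simp

/-- The convolution of two ν-symmetric-unimodal functions is ν-symmetric-unimodal. -/
lemma SymUnimodal.conv {ν : ℤ} (hν : ν = 1 ∨ ν = 2) {f g : ℤ → ℝ}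
    (hf : SymUnimodal ν f) (hg : SymUnimodal ν g) :
    SymUnimodal ν (fun i => ∑ᶠ r : ℤ, f r * g (i - r)) := by
  have hν0 : 0 < ν := by rcases hν with h | h <;> omega
  have hsupp : ∀ i : ℤ, (Function.support fun r => f r * g (i - r)) ⊆ Function.support f := by
    intro i r hr
    simp only [Function.mem_support] at hr ⊢
    intro h0; apply hr; rw [h0, zero_mul]
  have hfin : ∀ i : ℤ, (Function.support fun r => f r * g (i - r)).Finite :=
    fun i => hf.1.subset (hsupp i)
  refine ⟨?_, ?_, ?_, ?_⟩
  · -- finite support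
    apply Set.Finite.subset (hf.1.add hg.1)
    intro i hi
    simp only [Function.mem_support] at hi
    by_contra hmem
    apply hi
    apply finsum_eq_zero_of_forall_eq_zero
    intro r
    rcases eq_or_ne (f r) 0 with h | h
    · rw [h, zero_mul]
    rcases eq_or_ne (g (i - r)) 0 with h' | h'
    · rw [h', mul_zero]
    exfalso
    apply hmem
    rw [Set.mem_add]
    exact ⟨r, h, i - r, h', by ring⟩
  · -- symmetry
    intro i
    simp only
    have e := finsum_comp_equiv (Equiv.neg ℤ) (f := fun r => f r * g (-i - r))
    rw [← e]
    apply finsum_congr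
    intro r
    simp only [Equiv.neg_apply]
    rw [hf.2.1 r]
    congr 1
    have : -i - -r = -(i - r) := by ring
    rw [this, hg.2.1]
  · -- nonneg
    intro i
    exact finsum_nonneg fun r => mul_nonneg (hf.2.2.1 r) (hg.2.2.1 _)
  · -- unimodality
    intro n hn
    simp only
    rw [← sub_nonneg, ← finsum_sub_distrib (hfin n) (hfin (n + ν))]
    set F : ℤ → ℝ := fun r => f r * g (n - r) - f r * g (n + ν - r) with hF
    have hFsupp : (Function.support F).Finite := by
      apply hf.1.subset
      intro r hr
      simp only [Function.mem_support, hF] at hr ⊢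
      intro h0; apply hr; rw [h0]; ring
    have hgoal : ∑ᶠ r, (f r * g (n - r) - f r * g (n + ν - r)) = ∑ᶠ r, F r := rfl
    rw [hgoal]
    -- involution e r = 2n + ν - r
    let e : ℤ ≃ ℤ := ⟨fun r => 2 * n + ν - r, fun r => 2 * n + ν - r,
      fun r => by simp, fun r => by simp⟩
    have he : ∑ᶠ r, F (e r) = ∑ᶠ r, F r := finsum_comp_equiv e
    have hFe : (Function.support fun r => F (e r)).Finite := by
      have : (Function.support fun r => F (e r)) = e ⁻¹' Function.support F := rfl
      rw [this]
      exact hFsupp.preimage (e.injective.injOn)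
    have hsum : ∑ᶠ r, F r + ∑ᶠ r, F r = ∑ᶠ r, (F r + F (e r)) :=
      by nth_rewrite 2 [← he]; rw [← finsum_add_distrib hFsupp hFe]
    have hterm : ∀ r : ℤ, 0 ≤ F r + F (e r) := by
      intro r
      have key := pair_nonneg hν hf hg hn r
      have hge : F (e r) = f (2 * n + ν - r) * (g (n + ν - r) - g (n - r)) := by
        simp only [hF, e, Equiv.coe_fn_mk]
        have e1 : n - (2 * n + ν - r) = -(n + ν - r) := by ring
        have e2 : n + ν - (2 * n + ν - r) = -(n - r) := by ring
        rw [e1, e2, hg.2.1, hg.2.1]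
        ring
      have : F r + F (e r) = (f r - f (2 * n + ν - r)) * (g (n - r) - g (n + ν - r)) := by
        rw [hge]; simp only [hF]; ring
      rw [this]
      exact key
    have h2 : 0 ≤ ∑ᶠ r, (F r + F (e r)) := finsum_nonneg hterm
    linarith [hsum ▸ h2]

/-- Theorem 1.5 of the paper for `𝒰_{x,y}^ν`: if all slices of the bivariate coefficient
arrays `a` and `b` are ν-symmetric-unimodal and `a`, `b` vanish for small enough `j`, then
all slices of the product array are ν-symmetric-unimodal. -/
theorem symUnimodal_bivariate_mul (ν : ℤ) (hν : ν = 1 ∨ ν = 2)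
    (a b : ℤ → ℤ → ℝ)
    (hNa : ∃ Na : ℤ, ∀ j : ℤ, j < -Na → a j = 0)
    (hNb : ∃ Nb : ℤ, ∀ j : ℤ, j < -Nb → b j = 0)
    (ha : ∀ j : ℤ, SymUnimodal ν (a j))
    (hb : ∀ j : ℤ, SymUnimodal ν (b j)) :
    ∀ j : ℤ, SymUnimodal ν
      (fun i => ∑ᶠ j₁ : ℤ, ∑ᶠ r : ℤ, a j₁ r * b (j - j₁) (i - r)) := by
  obtain ⟨Na, hNa⟩ := hNa
  obtain ⟨Nb, hNb⟩ := hNb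
  intro j
  set h : ℤ → ℤ → ℝ := fun j₁ i => ∑ᶠ r : ℤ, a j₁ r * b (j - j₁) (i - r) with hh
  have hH : ∀ j₁ : ℤ, SymUnimodal ν (h j₁) :=
    fun j₁ => SymUnimodal.conv hν (ha j₁) (hb (j - j₁))
  set s : Finset ℤ := Finset.Icc (-Na) (j + Nb) with hs
  have hzero : ∀ j₁ : ℤ, j₁ ∉ s → h j₁ = 0 := by
    intro j₁ hj₁
    simp only [hs, Finset.mem_Icc, not_and_or, not_le] at hj₁
    funext i
    simp only [hh, Pi.zero_apply]
    apply finsum_eq_zero_of_forall_eq_zero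
    intro r
    rcases hj₁ with h1 | h1
    · rw [hNa j₁ h1]; simp
    · rw [hNb (j - j₁) (by omega)]; simp
  have hsum : ∀ i : ℤ, ∑ᶠ j₁ : ℤ, h j₁ i = ∑ j₁ ∈ s, h j₁ i := by
    intro i
    apply finsum_eq_finset_sum_of_support_subset
    intro j₁ hj₁
    simp only [Function.mem_support] at hj₁
    simp only [Finset.coe_Icc, Set.mem_Icc, hs]
    by_contra hmem
    apply hj₁
    rw [hzero j₁ (by simpa [hs, Finset.mem_Icc] using hmem)]
    rfl
  have hfun : (fun i => ∑ᶠ j₁ : ℤ, ∑ᶠ r : ℤ, a j₁ r * b (j - j₁) (i - r)) =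
      fun i => ∑ j₁ ∈ s, h j₁ i := by
    funext i
    exact hsum i
  rw [hfun]
  refine ⟨?_, ?_, ?_, ?_⟩
  · -- finite support
    apply Set.Finite.subset (Set.Finite.biUnion s.finite_toSet (fun j₁ _ => (hH j₁).1))
    intro i hi
    simp only [Function.mem_support] at hi
    obtain ⟨j₁, hj₁, hne⟩ := Finset.exists_ne_zero_of_sum_ne_zero hi
    exact Set.mem_biUnion hj₁ hne
  · intro i
    apply Finset.sum_congr rfl
    intro j₁ _
    exact (hH j₁).2.1 i
  · intro i
    exact Finset.sum_nonneg fun j₁ _ => (hH j₁).2.2.1 i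
  · intro n hn
    exact Finset.sum_le_sum fun j₁ _ => (hH j₁).2.2.2 n hn
end

section
/- Let ν ∈ {1,2}. Let a, b : ℤ → ℤ → ℝ be coefficient arrays of formal bivariate Laurent series (a j i is the coefficient of x^i y^j), such that: there exist integers N_a, N_b with a j = 0 for all j < −N_a and b j = 0 for all j < −N_b; for every j ∈ ℤ the function i ↦ a j i is ν-symmetric-strictly-unimodal, and likewise for b. Define the product coefficients c j i = Σ_{j₁+j₂=j} Σ_{r∈ℤ} a j₁ r · b j₂ (i−r) (all sums are finite). Then for every j ∈ ℤ the function i ↦ c j i is ν-symmetric-strictly-unimodal. (This is the closure of the class 𝒯_{x,y}^ν under multiplication of formal bivariate Laurent series, i.e. Theorem 1.5 of the paper for 𝒯_{x,y}^ν.) -/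
open Function

private lemma ssu_zero (ν : ℤ) : SymStrictUnimodal ν (fun _ => (0:ℝ)) := by
  refine ⟨by simp [Function.support], fun i => rfl, fun i => le_refl 0, fun n hn => ⟨?_, ?_⟩⟩ <;> simp

private lemma ssu_step_le {ν : ℤ} {c : ℤ → ℝ} (hc : SymStrictUnimodal ν c)
    {n : ℤ} (hn : 0 ≤ n) : c (n + ν) ≤ c n := by
  rcases (hc.2.2.1 n).eq_or_lt with h | h
  · rw [(hc.2.2.2 n hn).2 h.symm]; exact hc.2.2.1 n
  · exact ((hc.2.2.2 n hn).1 h).le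

private lemma ssu_add {ν : ℤ} {c d : ℤ → ℝ} (hc : SymStrictUnimodal ν c)
    (hd : SymStrictUnimodal ν d) : SymStrictUnimodal ν (fun x => c x + d x) := by
  refine ⟨?_, fun i => by show c (-i) + d (-i) = c i + d i; rw [hc.2.1, hd.2.1],
    fun i => add_nonneg (hc.2.2.1 i) (hd.2.2.1 i), fun n hn => ⟨?_, ?_⟩⟩
  · refine (hc.1.union hd.1).subset fun x hx => ?_
    by_contra h
    simp only [Set.mem_union, mem_support, not_or, not_not] at h
    simp [mem_support, h.1, h.2] at hx
  · intro hpos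
    show c (n + ν) + d (n + ν) < c n + d n
    simp only at hpos
    have h1 := ssu_step_le hc hn
    have h2 := ssu_step_le hd hn
    rcases lt_or_ge 0 (c n) with h | h
    · have := (hc.2.2.2 n hn).1 h; linarith
    · have hc0 : c n = 0 := le_antisymm h (hc.2.2.1 n)
      have hd0 : 0 < d n := by linarith
      have := (hd.2.2.2 n hn).1 hd0
      have := (hc.2.2.2 n hn).2 hc0
      linarith
  · intro h0
    simp only at h0
    have hc0 : c n = 0 := le_antisymm (by nlinarith [hd.2.2.1 n, hc.2.2.1 n]) (hc.2.2.1 n)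
    have hd0 : d n = 0 := by linarith
    show c (n + ν) + d (n + ν) = 0
    rw [(hc.2.2.2 n hn).2 hc0, (hd.2.2.2 n hn).2 hd0, add_zero]

private lemma ssu_sum {ν : ℤ} {ι : Type*} (s : Finset ι) (f : ι → ℤ → ℝ)
    (h : ∀ i ∈ s, SymStrictUnimodal ν (f i)) :
    SymStrictUnimodal ν (fun x => ∑ i ∈ s, f i x) := by
  induction s using Finset.cons_induction with
  | empty => simpa using ssu_zero ν
  | cons a s ha ih =>
    simp only [Finset.sum_cons]
    exact ssu_add (h a (Finset.mem_cons_self a s))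
      (ih fun i hi => h i (Finset.mem_cons_of_mem hi))

private lemma ssu_chain {ν : ℤ} (hν : 0 < ν) {c : ℤ → ℝ} (hc : SymStrictUnimodal ν c) :
    ∀ (k : ℕ) (w : ℤ), 0 ≤ w →
      c (w + ν * k) ≤ c w ∧ (c w = 0 → c (w + ν * k) = 0) ∧
      (0 < c w → k ≠ 0 → c (w + ν * k) < c w) := by
  intro k
  induction k with
  | zero => intro w hw; simp
  | succ k ih =>
    intro w hw
    have hk0 : (0:ℤ) ≤ ν * k := mul_nonneg hν.le (Int.ofNat_nonneg k)
    have hw' : 0 ≤ w + ν * k := by linarith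
    have ihw := ih w hw
    have hstep := hc.2.2.2 (w + ν * k) hw'
    have he : w + ν * ((k + 1 : ℕ) : ℤ) = (w + ν * k) + ν := by push_cast; ring
    rw [he]
    rcases (hc.2.2.1 (w + ν * k)).eq_or_lt with h0 | h0
    · have hz := hstep.2 h0.symm
      exact ⟨by rw [hz]; exact hc.2.2.1 w, fun _ => hz, fun hpos _ => by rw [hz]; exact hpos⟩
    · have hlt := hstep.1 h0
      refine ⟨le_trans hlt.le ihw.1, ?_, fun hpos _ => lt_of_lt_of_le hlt ihw.1⟩
      intro hz
      have := ihw.2.1 hz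
      linarith

private lemma ssu_sym_abs {ν : ℤ} {c : ℤ → ℝ} (hc : SymStrictUnimodal ν c) (u : ℤ) :
    c u = c |u| := by
  rcases abs_cases u with ⟨h, _⟩ | ⟨h, _⟩
  · rw [h]
  · rw [h, hc.2.1]

private lemma ssu_key {ν : ℤ} (hν : 0 < ν) {c : ℤ → ℝ} (hc : SymStrictUnimodal ν c)
    (u v : ℤ) (hdvd : ν ∣ v - |u|) (hle : |u| + ν ≤ v) :
    c v ≤ c u ∧ (0 < c u → c v < c u) := by
  obtain ⟨t, ht⟩ := hdvd
  have ht1 : 1 ≤ t := by nlinarith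
  have hv : v = |u| + ν * ((t.toNat : ℤ)) := by
    rw [Int.toNat_of_nonneg (by linarith)]; linarith
  have hcu : c u = c |u| := ssu_sym_abs hc u
  have hch := ssu_chain hν hc t.toNat |u| (abs_nonneg u)
  rw [hcu, hv]
  exact ⟨hch.1, fun hpos => hch.2.2 hpos (by omega)⟩

private lemma ssu_pos_transfer {ν : ℤ} (hν : 0 < ν) {c : ℤ → ℝ} (hc : SymStrictUnimodal ν c)
    {w r : ℤ} (h0 : 0 ≤ w) (hle : w ≤ r) (hdvd : ν ∣ r - w) (hr : 0 < c r) : 0 < c w := by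
  rcases (hc.2.2.1 w).eq_or_lt with h | h
  · exfalso
    obtain ⟨t, ht⟩ := hdvd
    have ht0 : 0 ≤ t := by nlinarith
    have hrw : r = w + ν * ((t.toNat : ℤ)) := by
      rw [Int.toNat_of_nonneg ht0]; linarith
    have := (ssu_chain hν hc t.toNat w h0).2.1 h.symm
    rw [← hrw] at this
    linarith
  · exact h

private noncomputable def convZ (c d : ℤ → ℝ) : ℤ → ℝ := fun i => ∑ᶠ r, c r * d (i - r)

private lemma convZ_exists {c d : ℤ → ℝ} {i : ℤ} (h : convZ c d i ≠ 0) :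
    ∃ r, c r ≠ 0 ∧ d (i - r) ≠ 0 := by
  by_contra hcon
  push_neg at hcon
  apply h
  apply finsum_eq_zero_of_forall_eq_zero
  intro r
  rcases eq_or_ne (c r) 0 with h1 | h1
  · rw [h1, zero_mul]
  · rw [hcon r h1, mul_zero]

private lemma convZ_delta {ν : ℤ} (hν : ν = 1 ∨ ν = 2) {c d : ℤ → ℝ}
    (hc : SymStrictUnimodal ν c) (hd : SymStrictUnimodal ν d) {n : ℤ} (hn : 0 ≤ n) :
    convZ c d (n + ν) ≤ convZ c d n ∧ (0 < convZ c d n → convZ c d (n + ν) < convZ c d n) := by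
  have hν0 : 0 < ν := by rcases hν with h | h <;> simp [h]
  have hν2 : ν ∣ 2 := by rcases hν with h | h <;> simp [h]
  set e : ℤ → ℝ := fun x => d x - d (x + ν) with he
  set F : ℤ → ℝ := fun x => c (n - x) * e x with hF
  set G : ℤ → ℝ := fun x => e x * (c (n - x) - c (n + ν + x)) with hG
  have hFsupp : (Function.support F).Finite := by
    apply (hc.1.image (fun r => n - r)).subset
    intro x hx
    have hcx : c (n - x) ≠ 0 := left_ne_zero_of_mul hx
    exact ⟨n - x, hcx, by ring⟩
  have hFσsupp : (Function.support (fun x => F (-ν - x))).Finite := by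
    apply (hFsupp.image (fun x => -ν - x)).subset
    intro x hx
    exact ⟨-ν - x, hx, by ring⟩
  have hGsupp : (Function.support G).Finite := by
    apply ((hd.1).union ((hd.1).image (fun y => y - ν))).subset
    intro x hx
    have hex : e x ≠ 0 := left_ne_zero_of_mul hx
    rcases eq_or_ne (d x) 0 with h1 | h1
    · right
      refine ⟨x + ν, ?_, by ring⟩
      intro h2
      apply hex
      show d x - d (x + ν) = 0
      rw [h1, h2, sub_zero]
    · exact Or.inl h1
  have keyc : ∀ x : ℤ, 0 ≤ x →
      c (n + ν + x) ≤ c (n - x) ∧ (0 < c (n - x) → c (n + ν + x) < c (n - x)) := by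
    intro x hx
    apply ssu_key hν0 hc
    · rcases abs_cases (n - x) with ⟨h, _⟩ | ⟨h, _⟩
      · rw [h, show (n + ν + x) - (n - x) = 2 * x + ν by ring]
        exact dvd_add (hν2.mul_right x) dvd_rfl
      · rw [h, show (n + ν + x) - (-(n - x)) = 2 * n + ν by ring]
        exact dvd_add (hν2.mul_right n) dvd_rfl
    · rcases abs_cases (n - x) with ⟨h, _⟩ | ⟨h, _⟩ <;> rw [h] <;> linarith
  have keyd : ∀ x : ℤ, 0 ≤ x → 0 ≤ e x := fun x hx => sub_nonneg.2 (ssu_step_le hd hx)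
  have hG0 : ∀ x, 0 ≤ G x := by
    intro x
    rcases le_or_gt 0 x with hx | hx
    · exact mul_nonneg (keyd x hx) (sub_nonneg.2 (keyc x hx).1)
    · rcases le_or_gt x (-ν) with hx2 | hx2
      · set y : ℤ := -ν - x with hy
        have hy0 : 0 ≤ y := by omega
        have h1 : e x = -(e y) := by
          show d x - d (x + ν) = -(d y - d (y + ν))
          have e1 : d x = d (y + ν) := by rw [← hd.2.1 (y + ν)]; congr 1; omega
          have e2 : d (x + ν) = d y := by rw [← hd.2.1 y]; congr 1; omega
          rw [e1, e2]; ring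
        have h2 : c (n - x) = c (n + ν + y) := by congr 1; omega
        have h3 : c (n + ν + x) = c (n - y) := by congr 1; omega
        show 0 ≤ e x * (c (n - x) - c (n + ν + x))
        rw [h1, h2, h3]
        have k1 := keyd y hy0
        have k2 := (keyc y hy0).1
        nlinarith
      · have hx3 : x + ν = -x := by rcases hν with h | h <;> omega
        have hz : e x = 0 := by
          show d x - d (x + ν) = 0
          rw [hx3, hd.2.1]; ring
        show 0 ≤ e x * (c (n - x) - c (n + ν + x))
        rw [hz, zero_mul]
  have hsuppc : ∀ m : ℤ, (Function.support fun r => c r * d (m - r)).Finite := by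
    intro m
    exact hc.1.subset fun r hr => left_ne_zero_of_mul hr
  have hD : convZ c d n - convZ c d (n + ν) = ∑ᶠ x, F x := by
    have h1 : convZ c d n - convZ c d (n + ν)
        = ∑ᶠ r, (c r * d (n - r) - c r * d (n + ν - r)) :=
      (finsum_sub_distrib (hsuppc n) (hsuppc (n + ν))).symm
    have h2 : ∑ᶠ r, (c r * d (n - r) - c r * d (n + ν - r))
        = ∑ᶠ x, (c (n - x) * d (n - (n - x)) - c (n - x) * d (n + ν - (n - x))) :=
      (finsum_comp_equiv (Equiv.subLeft n)
        (f := fun r => c r * d (n - r) - c r * d (n + ν - r))).symm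
    rw [h1, h2]
    apply finsum_congr
    intro x
    rw [show n - (n - x) = x by ring, show n + ν - (n - x) = x + ν by ring]
    show _ = c (n - x) * (d x - d (x + ν))
    ring
  have hFG : ∀ x, F x + F (-ν - x) = G x := by
    intro x
    show c (n - x) * e x + c (n - (-ν - x)) * e (-ν - x)
        = e x * (c (n - x) - c (n + ν + x))
    have e1 : n - (-ν - x) = n + ν + x := by ring
    have e2 : e (-ν - x) = -(e x) := by
      show d (-ν - x) - d (-ν - x + ν) = -(d x - d (x + ν))
      have a1 : d (-ν - x) = d (x + ν) := by rw [← hd.2.1 (x + ν)]; congr 1; ring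
      have a2 : d (-ν - x + ν) = d x := by rw [← hd.2.1 x]; congr 1; ring
      rw [a1, a2]; ring
    rw [e1, e2]; ring
  have hσ : ∑ᶠ x, F x = ∑ᶠ x, F (-ν - x) :=
    (finsum_comp_equiv (Equiv.subLeft (-ν)) (f := F)).symm
  have h2 : (2:ℝ) * (convZ c d n - convZ c d (n + ν)) = ∑ᶠ x, G x := by
    calc (2:ℝ) * (convZ c d n - convZ c d (n + ν))
        = ∑ᶠ x, F x + ∑ᶠ x, F (-ν - x) := by rw [hD, ← hσ]; ring
      _ = ∑ᶠ x, (F x + F (-ν - x)) := (finsum_add_distrib hFsupp hFσsupp).symm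
      _ = ∑ᶠ x, G x := finsum_congr hFG
  have hGnn : 0 ≤ ∑ᶠ x, G x := finsum_nonneg hG0
  constructor
  · linarith
  · intro hp
    obtain ⟨r, hcr, hdr⟩ := convZ_exists (ne_of_gt hp)
    have hcr' : 0 < c r := lt_of_le_of_ne (hc.2.2.1 r) (Ne.symm hcr)
    have hdr' : 0 < d (n - r) := lt_of_le_of_ne (hd.2.2.1 _) (Ne.symm hdr)
    obtain ⟨x₀, hx₀, hcx₀, hdx₀⟩ : ∃ x₀, 0 ≤ x₀ ∧ 0 < c (n - x₀) ∧ 0 < d x₀ := by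
      rcases le_or_gt r n with hrn | hrn
      · exact ⟨n - r, by omega, by rwa [show n - (n - r) = r by ring], hdr'⟩
      · refine ⟨r - n, by omega, ?_, ?_⟩
        · rw [show n - (r - n) = 2 * n - r by ring, ssu_sym_abs hc]
          refine ssu_pos_transfer hν0 hc (abs_nonneg _) ?_ ?_ hcr'
          · rcases abs_cases (2 * n - r) with ⟨h, _⟩ | ⟨h, _⟩ <;> omega
          · rcases abs_cases (2 * n - r) with ⟨h, _⟩ | ⟨h, _⟩
            · rw [h, show r - (2 * n - r) = 2 * (r - n) by ring]
              exact hν2.mul_right _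
            · rw [h, show r - (-(2 * n - r)) = 2 * n by ring]
              exact hν2.mul_right _
        · have : d (r - n) = d (n - r) := by rw [← hd.2.1 (n - r)]; congr 1; ring
          rw [this]; exact hdr'
    have he0 : 0 < e x₀ := sub_pos.2 ((hd.2.2.2 x₀ hx₀).1 hdx₀)
    have hG0' : 0 < G x₀ := mul_pos he0 (sub_pos.2 ((keyc x₀ hx₀).2 hcx₀))
    have hle : G x₀ ≤ ∑ᶠ x, G x := single_le_finsum x₀ hGsupp hG0
    linarith

private lemma ssu_convZ {ν : ℤ} (hν : ν = 1 ∨ ν = 2) {c d : ℤ → ℝ}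
    (hc : SymStrictUnimodal ν c) (hd : SymStrictUnimodal ν d) :
    SymStrictUnimodal ν (convZ c d) := by
  have hnn : ∀ i, 0 ≤ convZ c d i :=
    fun i => finsum_nonneg fun r => mul_nonneg (hc.2.2.1 r) (hd.2.2.1 (i - r))
  refine ⟨?_, ?_, hnn, fun n hn => ?_⟩
  · apply (Set.Finite.image2 (fun x y => x + y) hc.1 hd.1).subset
    intro i hi
    obtain ⟨r, h1, h2⟩ := convZ_exists hi
    exact ⟨r, h1, i - r, h2, by ring⟩
  · intro i
    show ∑ᶠ r, c r * d (-i - r) = ∑ᶠ r, c r * d (i - r)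
    rw [← finsum_comp_equiv (Equiv.neg ℤ) (f := fun r => c r * d (-i - r))]
    apply finsum_congr
    intro x
    show c (-x) * d (-i - (-x)) = c x * d (i - x)
    have a2 : d (-i - (-x)) = d (i - x) := by rw [← hd.2.1 (i - x)]; congr 1; ring
    rw [hc.2.1, a2]
  · have h := convZ_delta hν hc hd hn
    exact ⟨h.2, fun h0 => le_antisymm (h0 ▸ h.1) (hnn _)⟩

/-- Theorem 1.5 of the paper for `𝒯_{x,y}^ν`: if all slices of the bivariate coefficient
arrays `a` and `b` are ν-symmetric-strictly-unimodal and `a`, `b` vanish for small enough `j`,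
then all slices of the product array are ν-symmetric-strictly-unimodal. -/
theorem symStrictUnimodal_bivariate_mul (ν : ℤ) (hν : ν = 1 ∨ ν = 2)
    (a b : ℤ → ℤ → ℝ)
    (hNa : ∃ Na : ℤ, ∀ j : ℤ, j < -Na → a j = 0)
    (hNb : ∃ Nb : ℤ, ∀ j : ℤ, j < -Nb → b j = 0)
    (ha : ∀ j : ℤ, SymStrictUnimodal ν (a j))
    (hb : ∀ j : ℤ, SymStrictUnimodal ν (b j)) :
    ∀ j : ℤ, SymStrictUnimodal ν
      (fun i => ∑ᶠ j₁ : ℤ, ∑ᶠ r : ℤ, a j₁ r * b (j - j₁) (i - r)) := by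
  obtain ⟨Na, hNa⟩ := hNa
  obtain ⟨Nb, hNb⟩ := hNb
  intro j
  have heq : (fun i => ∑ᶠ j₁ : ℤ, ∑ᶠ r : ℤ, a j₁ r * b (j - j₁) (i - r)) =
      fun i => ∑ j₁ ∈ Finset.Icc (-Na) (j + Nb), convZ (a j₁) (b (j - j₁)) i := by
    funext i
    apply finsum_eq_finset_sum_of_support_subset
    intro j₁ hj₁
    simp only [Finset.coe_Icc, Set.mem_Icc]
    by_contra hmem
    apply hj₁
    show (∑ᶠ r : ℤ, a j₁ r * b (j - j₁) (i - r)) = 0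
    apply finsum_eq_zero_of_forall_eq_zero
    intro r
    rcases (not_and_or.mp hmem) with h | h
    · rw [hNa j₁ (by omega), Pi.zero_apply, zero_mul]
    · rw [hNb (j - j₁) (by omega), Pi.zero_apply, mul_zero]
  rw [heq]
  exact ssu_sum _ _ fun j₁ _ => ssu_convZ hν (ha j₁) (hb (j - j₁))
end

section
/- Let ν ∈ {1,2} and let c : ℤ → ℕ → ℝ satisfy: (i) c i n = c (−i) n ≥ 0 for all i ∈ ℤ, n ∈ ℕ; (ii) for each n ∈ ℕ the function i ↦ c i n is ν-symmetric-unimodal; (iii) for each residue t ∈ {0,…,ν−1} and each n ∈ ℕ there is an integer ℓ(t,n) such that for every integer i with i ≡ t (mod ν): c i n > 0 if |i| ≤ ℓ(t,n), and c i n = 0 if |i| > ℓ(t,n). Assume moreover: for every t ∈ {0,…,ν−1} and all integers i, n ≥ 0 with i ≡ t (mod ν), i ≤ max_{0≤r≤n} ℓ(t,r), and ℓ(t,n) ≥ 0, there exists an integer 0 ≤ r ≤ n with ℓ(t,r) ≥ i and c i r > c (i+ν) r. Then for every n ∈ ℕ, the partial-sum function i ↦ Σ_{r=0}^{n} c i r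 is ν-symmetric-strictly-unimodal. (Proposition 3.1 of the paper: the criterion ensuring (1−q)^{−1} f(z,q) ∈ 𝒯_{z,q}^ν for f(z,q) = Σ_{n,i} c_{i,n} z^i q^n ∈ 𝒰_{z,q}^ν.) -/
/-- Proposition 3.1 of the paper: criterion for strict unimodality induced by unimodality.
If `f(z,q) = Σ_{n,i} c i n z^i q^n ∈ 𝒰_{z,q}^ν` with symmetric nonnegative slices whose
positivity ranges are described by `ℓ`, and if for every admissible `i ≤ max_{0≤r≤n} ℓ t r`
there is some `r ≤ n` with `ℓ t r ≥ i` and `c i r > c (i+ν) r`, then the partial sums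
`i ↦ Σ_{r=0}^n c i r` (the coefficient slices of `(1-q)⁻¹ f(z,q)`) are
ν-symmetric-strictly-unimodal. -/
theorem strict_unimodality_criterion (ν : ℤ) (hν : ν = 1 ∨ ν = 2)
    (c : ℤ → ℕ → ℝ) (ℓ : ℤ → ℕ → ℤ)
    (hsymm : ∀ (i : ℤ) (n : ℕ), c (-i) n = c i n ∧ 0 ≤ c i n)
    (huni : ∀ n : ℕ, SymUnimodal ν (fun i => c i n))
    (hℓ : ∀ t : ℤ, 0 ≤ t → t < ν → ∀ (n : ℕ) (i : ℤ), i % ν = t →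
      (|i| ≤ ℓ t n → 0 < c i n) ∧ (ℓ t n < |i| → c i n = 0))
    (hmax : ∀ t : ℤ, 0 ≤ t → t < ν → ∀ (i : ℤ) (n : ℕ), 0 ≤ i → i % ν = t →
      (∃ r ≤ n, i ≤ ℓ t r) → 0 ≤ ℓ t n →
      ∃ r ≤ n, i ≤ ℓ t r ∧ c (i + ν) r < c i r) :
    ∀ n : ℕ, SymStrictUnimodal ν (fun i => ∑ r ∈ Finset.range (n + 1), c i r) := by
  intro n
  have hνpos : (0:ℤ) < ν := by rcases hν with h | h <;> simp [h]
  refine ⟨?_, ?_, ?_, ?_⟩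
  · apply Set.Finite.subset (Set.Finite.biUnion (Finset.range (n+1)).finite_toSet
      (fun r _ => (huni r).1))
    intro i hi
    simp only [Function.mem_support] at hi
    by_contra h
    simp only [Set.mem_iUnion, Function.mem_support, not_exists, not_not,
      Finset.mem_coe] at h
    exact hi (Finset.sum_eq_zero fun r hr => h r hr)
  · intro i
    exact Finset.sum_congr rfl fun r _ => (hsymm i r).1
  · intro i
    exact Finset.sum_nonneg fun r _ => (hsymm i r).2
  · intro m hm
    constructor
    · intro hpos
      obtain ⟨r₀, hr₀, hc⟩ : ∃ r ∈ Finset.range (n+1), (0:ℝ) < c m r := by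
        by_contra h
        push_neg at h
        have : ∑ r ∈ Finset.range (n+1), c m r = 0 :=
          le_antisymm (Finset.sum_nonpos h) (Finset.sum_nonneg fun r _ => (hsymm m r).2)
        simp only [this, lt_irrefl] at hpos
      have hr₀n : r₀ ≤ n := Nat.lt_succ_iff.mp (Finset.mem_range.mp hr₀)
      set t := m % ν with ht
      have ht0 : 0 ≤ t := Int.emod_nonneg m (ne_of_gt hνpos)
      have htν : t < ν := Int.emod_lt_of_pos m hνpos
      have hmℓ : m ≤ ℓ t r₀ := by
        by_contra h
        push_neg at h
        have habs : ℓ t r₀ < |m| := lt_of_lt_of_le h (le_abs_self m)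
        exact absurd ((hℓ t ht0 htν r₀ m rfl).2 habs) (ne_of_gt hc)
      obtain ⟨r, hrr₀, hℓr, hlt⟩ := hmax t ht0 htν m r₀ hm rfl ⟨r₀, le_refl _, hmℓ⟩
        (le_trans hm hmℓ)
      apply Finset.sum_lt_sum (fun j _ => (huni j).2.2.2 m hm)
      exact ⟨r, Finset.mem_range.mpr (Nat.lt_succ_of_le (le_trans hrr₀ hr₀n)), hlt⟩
    · intro hzero
      apply Finset.sum_eq_zero
      intro r hr
      have h1 : c m r = 0 :=
        (Finset.sum_eq_zero_iff_of_nonneg (fun j _ => (hsymm m j).2)).mp hzero r hr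
      have h2 := (huni r).2.2.2 m hm
      have h3 := (hsymm (m + ν) r).2
      simp only at h2
      linarith
end

section
/- For every nonnegative integer b, the following identity of Laurent polynomials in x with coefficients in ℤ[q] holds: (1+q) · (Σ_{r=0}^{b} x^r q^r) · (Σ_{s=0}^{b} x^{−s} q^s) = Σ_{k=0}^{2b+1} q^k · Σ_{r=−min(k,2b+1−k)}^{min(k,2b+1−k)} x^r. (This is identity (3.5) in the proof of Lemma 3.5 of the paper, equivalent to (1+q)(1−(xq)^{b+1})(1−(x^{−1}q)^{b+1})/((1−xq)(1−x^{−1}q)) = Σ_{k=0}^{2b+1} q^k Σ_{|r|≤min(k,2b+1−k)} x^r.) -/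
open LaurentPolynomial

private lemma identity_3_5_cell (r s : ℕ) :
    (1 + LaurentPolynomial.C (Polynomial.X : Polynomial ℤ)) *
      (LaurentPolynomial.C ((Polynomial.X : Polynomial ℤ) ^ r) * T (r : ℤ)) *
      (LaurentPolynomial.C ((Polynomial.X : Polynomial ℤ) ^ s) * T (-(s : ℤ))) =
    ∑ ε ∈ Finset.range 2,
      LaurentPolynomial.C ((Polynomial.X : Polynomial ℤ) ^ (r + s + ε)) * T ((r:ℤ) - s) := by
  rw [Finset.sum_range_succ, Finset.sum_range_one,
    show ((r:ℤ) - s) = (r:ℤ) + (-(s:ℤ)) by ring, T_add]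
  simp only [pow_add, pow_succ, pow_zero, map_mul, map_one]
  ring

/-- Identity (3.5) in the proof of Lemma 3.5 of the paper:
`(1+q) · (Σ_{r=0}^{b} x^r q^r) · (Σ_{s=0}^{b} x^{-s} q^s)
  = Σ_{k=0}^{2b+1} q^k Σ_{|r| ≤ min(k, 2b+1-k)} x^r`
in the ring of Laurent polynomials in `x` (here `T 1`) over `ℤ[q]`
(here `q = Polynomial.X`). -/
theorem identity_3_5 (b : ℕ) :
    ((1 + LaurentPolynomial.C (Polynomial.X : Polynomial ℤ)) *
      (∑ r ∈ Finset.range (b + 1),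
        LaurentPolynomial.C ((Polynomial.X : Polynomial ℤ) ^ r) * T (r : ℤ)) *
      (∑ s ∈ Finset.range (b + 1),
        LaurentPolynomial.C ((Polynomial.X : Polynomial ℤ) ^ s) * T (-(s : ℤ)))) =
    ∑ k ∈ Finset.range (2 * b + 2),
      LaurentPolynomial.C ((Polynomial.X : Polynomial ℤ) ^ k) *
        ∑ r ∈ Finset.Icc (-(min (k : ℤ) (2 * b + 1 - (k : ℤ))))
            (min (k : ℤ) (2 * b + 1 - (k : ℤ))), T r := by
  simp only [Finset.mul_sum, Finset.sum_mul]
  simp only [identity_3_5_cell]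
  simp only [Finset.sum_sigma']
  refine Finset.sum_nbij'
    (fun p => (⟨p.2.1 + p.1 + p.2.2, (p.2.1 : ℤ) - p.1⟩ : Σ _ : ℕ, ℤ))
    (fun q =>
      (⟨((((q.1 : ℤ) - (if ((q.1 : ℤ) - q.2) % 2 = 0 then 0 else 1)) - q.2) / 2).toNat,
        ((((q.1 : ℤ) - (if ((q.1 : ℤ) - q.2) % 2 = 0 then 0 else 1)) + q.2) / 2).toNat,
        (if ((q.1 : ℤ) - q.2) % 2 = 0 then (0:ℤ) else 1).toNat⟩ : Σ _ : ℕ, Σ _ : ℕ, ℕ))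
    ?_ ?_ ?_ ?_ ?_
  · rintro ⟨x, i, ε⟩ hp
    simp only [Finset.mem_sigma, Finset.mem_range, Finset.mem_Icc] at hp ⊢
    omega
  · rintro ⟨k, m⟩ hq
    simp only [Finset.mem_sigma, Finset.mem_range, Finset.mem_Icc] at hq ⊢
    split_ifs with h <;> omega
  · rintro ⟨x, i, ε⟩ hp
    simp only [Finset.mem_sigma, Finset.mem_range] at hp
    have : ∀ a b c : ℕ, a = x → b = i → c = ε →
        (⟨a, b, c⟩ : Σ _ : ℕ, Σ _ : ℕ, ℕ) = ⟨x, i, ε⟩ := by rintro _ _ _ rfl rfl rfl; rfl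
    dsimp only
    apply this <;> split_ifs with h <;> omega
  · rintro ⟨k, m⟩ hq
    simp only [Finset.mem_sigma, Finset.mem_range, Finset.mem_Icc] at hq
    have : ∀ (a : ℕ) (c : ℤ), a = k → c = m → (⟨a, c⟩ : Σ _ : ℕ, ℤ) = ⟨k, m⟩ := by
      rintro _ _ rfl rfl; rfl
    dsimp only
    apply this <;> split_ifs with h <;> omega
  · rintro ⟨x, i, ε⟩ _
    rfl
end

section
/- Let S be a set of positive integers, a ∈ {1,2}, and b ∈ ℕ ∪ {∞}. For integers n ≥ 0 and m ∈ ℤ, let p_{ab,S}(m,n) be the number of triples (f_red, f_green, f_blue) of finitely supported functions ℕ → ℕ with supports contained in S, satisfying f_red(ℓ) ≤ 2−a, f_green(ℓ) ≤ b and f_blue(ℓ) ≤ b for all ℓ (inequalities in ℕ ∪ {∞}), Σ_ℓ ℓ·(f_red(ℓ)+f_green(ℓ)+f_blue(ℓ)) = n, and Σ_ℓ (f_green(ℓ) − f_blue(ℓ)) = m. Then p_{ab,S}(m,n) ≥ p_{ab,S}(m+a,n) for all integers m, n ≥ 0. (Part of Theorem 3.4 of the paper.) -/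
open Finset
open scoped Classical


/-- Symmetric about `0` with nonincreasing step `a` on the nonnegative side. -/
def SymStep (a : ℕ) (f : ℤ → ℕ) : Prop :=
  (∀ x : ℤ, f (-x) = f x) ∧ ∀ x : ℤ, 0 ≤ x → f (x + a) ≤ f x

lemma symStep_chain {a : ℕ} {f : ℤ → ℕ} (hf : SymStep a f) :
    ∀ (k : ℕ) (u : ℤ), 0 ≤ u → f (u + a * k) ≤ f u := by
  intro k
  induction k with
  | zero => simp
  | succ k ih =>
    intro u hu
    have h1 : f (u + a * (k + 1 : ℕ)) = f ((u + a) + a * k) := by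
      push_cast; ring_nf
    rw [h1]
    exact (ih (u + a) (by positivity)).trans (hf.2 u hu)

lemma symStep_mono {a : ℕ} (ha : a = 1 ∨ a = 2) {f : ℤ → ℕ} (hf : SymStep a f)
    {u v : ℤ} (huv : u ≤ v) (hsum : 0 ≤ u + v) (hdvd : (a : ℤ) ∣ v - u) : f v ≤ f u := by
  have ha0 : 0 < (a : ℤ) := by rcases ha with h | h <;> simp [h]
  have key : ∀ u v : ℤ, 0 ≤ u → u ≤ v → (a : ℤ) ∣ v - u → f v ≤ f u := by
    intro u v hu huv hdvd
    obtain ⟨k, hk⟩ := hdvd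
    have hk0 : 0 ≤ k := by nlinarith
    obtain ⟨k', rfl⟩ := Int.eq_ofNat_of_zero_le hk0
    have : v = u + a * k' := by linarith
    subst this
    exact symStep_chain hf k' u hu
  rcases le_or_gt 0 u with hu | hu
  · exact key u v hu huv hdvd
  · have h1 : f u = f (-u) := (hf.1 u).symm
    rw [h1]
    apply key (-u) v (by linarith) (by linarith)
    have h2 : (a : ℤ) ∣ 2 * u := by
      rcases ha with h | h
      · simp [h]
      · exact ⟨u, by rw [h]; push_cast; ring⟩
    have : v - -u = (v - u) + 2 * u := by ring
    rw [this]
    exact dvd_add hdvd h2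

lemma symStep_sum {a : ℕ} {ι : Type*} (W : Finset ι) (F : ι → ℤ → ℕ)
    (h : ∀ w ∈ W, SymStep a (F w)) : SymStep a (fun m => ∑ w ∈ W, F w m) := by
  constructor
  · intro x
    exact Finset.sum_congr rfl fun w hw => (h w hw).1 x
  · intro x hx
    exact Finset.sum_le_sum fun w hw => (h w hw).2 x hx

lemma symStep_conv {a : ℕ} (ha : a = 1 ∨ a = 2) {f g : ℤ → ℕ}
    (hfs : (Function.support f).Finite) (hf : SymStep a f) (hg : SymStep a g) :
    SymStep a (fun x => ∑ᶠ j : ℤ, f j * g (x - j)) := by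
  have hsub : ∀ x : ℤ, (Function.support fun j => f j * g (x - j)) ⊆ hfs.toFinset := by
    intro x j hj
    simp only [Function.mem_support] at hj
    simp only [Set.Finite.coe_toFinset, Set.Finite.mem_toFinset, Function.mem_support]
    intro h0
    simp [h0] at hj
  have heq : ∀ (x : ℤ) (s : Finset ℤ), (hfs.toFinset : Set ℤ) ⊆ s →
      (∑ᶠ j : ℤ, f j * g (x - j)) = ∑ j ∈ s, f j * g (x - j) := by
    intro x s hs
    apply finsum_eq_sum_of_support_subset
    exact (hsub x).trans (by exact_mod_cast hs)
  constructor
  · intro x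
    show (∑ᶠ j : ℤ, f j * g (-x - j)) = ∑ᶠ j : ℤ, f j * g (x - j)
    rw [heq (-x) (hfs.toFinset ∪ hfs.toFinset.image (fun j => -j)) (by simp [Finset.coe_union])]
    rw [heq x (hfs.toFinset ∪ hfs.toFinset.image (fun j => -j)) (by simp [Finset.coe_union])]
    have hmem : ∀ j ∈ hfs.toFinset ∪ hfs.toFinset.image (fun j : ℤ => -j),
        -j ∈ hfs.toFinset ∪ hfs.toFinset.image (fun j : ℤ => -j) := by
      intro j hj
      simp only [Finset.mem_union, Finset.mem_image] at hj ⊢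
      rcases hj with hj | hj
      · right; exact ⟨j, hj, rfl⟩
      · left; obtain ⟨k, hk, rfl⟩ := hj; simpa using hk
    apply Finset.sum_nbij' (fun j => -j) (fun j => -j) hmem hmem
      (fun j _ => by ring) (fun j _ => by ring)
    intro j _
    have h1 : f j = f (-j) := (hf.1 j).symm
    have h2 : g (-x - j) = g (x - -j) := by
      have e : -x - j = -(x - -j) := by ring
      rw [e, hg.1]
    rw [h1, h2]
  · intro x hx
    show (∑ᶠ j : ℤ, f j * g (x + a - j)) ≤ ∑ᶠ j : ℤ, f j * g (x - j)
    set σ : ℤ → ℤ := fun j => 2 * x + a - j with hσ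
    set s : Finset ℤ := hfs.toFinset ∪ hfs.toFinset.image σ with hs
    have hmaps : ∀ j ∈ s, σ j ∈ s := by
      intro j hj
      simp only [hs, Finset.mem_union, Finset.mem_image] at hj ⊢
      rcases hj with hj | hj
      · right; exact ⟨j, hj, rfl⟩
      · left; obtain ⟨k, hk, rfl⟩ := hj
        simpa [hσ] using hk
    have hsupset : (hfs.toFinset : Set ℤ) ⊆ s := by simp [hs, Finset.coe_union]
    rw [heq (x + a) s hsupset, heq x s hsupset]
    -- work in ℤ
    have key : (0 : ℤ) ≤ ∑ j ∈ s, ((f j : ℤ) * g (x - j) - (f j : ℤ) * g (x + a - j)) := by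
      set t : ℤ → ℤ := fun j => (f j : ℤ) * g (x - j) - (f j : ℤ) * g (x + a - j) with ht
      have htσ : ∀ j, t j + t (σ j) = ((f j : ℤ) - f (σ j)) * ((g (x - j) : ℤ) - g (x + a - j)) := by
        intro j
        have e1 : g (x - σ j) = g (x + a - j) := by
          have : x - σ j = -(x + a - j) := by simp [hσ]; ring
          rw [this, hg.1]
        have e2 : g (x + a - σ j) = g (x - j) := by
          have : x + a - σ j = -(x - j) := by simp [hσ]; ring
          rw [this, hg.1]
        simp only [ht, e1, e2]
        ring
      have hpair : ∀ j, 0 ≤ t j + t (σ j) := by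
        intro j
        rw [htσ j]
        have hjs : j + σ j = 2 * x + a := by simp only [hσ]; ring
        rcases le_total j (σ j) with hle | hle
        · apply mul_nonneg
          · have : f (σ j) ≤ f j := by
              apply symStep_mono ha hf hle (by omega) 
              rcases ha with h | h
              · simp [h]
              · subst h; refine ⟨x + 1 - j, by simp only [hσ]; push_cast; ring⟩
            simp only [sub_nonneg]
            exact_mod_cast this
          · have : g (x + a - j) ≤ g (x - j) := by
              apply symStep_mono ha hg (by push_cast; linarith) (by push_cast; omega)
              · simp
            simp only [sub_nonneg]
            exact_mod_cast this
        · apply mul_nonneg_of_nonpos_of_nonpos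
          · have : f j ≤ f (σ j) := by
              apply symStep_mono ha hf hle (by omega)
              rcases ha with h | h
              · simp [h]
              · subst h; refine ⟨j - x - 1, by simp only [hσ]; push_cast; ring⟩
            simp only [sub_nonpos]
            exact_mod_cast this
          · have h1 : g (x - j) = g (j - x) := by
              rw [← hg.1 (j - x)]; ring_nf
            have : g (j - x) ≤ g (x + a - j) := by
              apply symStep_mono ha hg
              · simp only [hσ] at hle; push_cast; omega
              · push_cast; ring_nf; positivity
              · rcases ha with h | h
                · simp [h]
                · subst h; refine ⟨j - x - 1, by push_cast; ring⟩
            rw [h1]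
            simp only [sub_nonpos]
            exact_mod_cast this
      have hre : ∑ j ∈ s, t (σ j) = ∑ j ∈ s, t j := by
        apply Finset.sum_nbij' σ σ hmaps hmaps
          (fun j _ => by simp only [hσ]; ring) (fun j _ => by simp only [hσ]; ring)
          (fun j _ => rfl)
      have : 0 ≤ ∑ j ∈ s, (t j + t (σ j)) := Finset.sum_nonneg fun j _ => hpair j
      rw [Finset.sum_add_distrib, hre] at this
      linarith
    have : (∑ j ∈ s, (f j : ℤ) * g (x + a - j)) ≤ ∑ j ∈ s, (f j : ℤ) * g (x - j) := by
      have := key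
      rw [Finset.sum_sub_distrib] at this
      linarith
    have hc : ((∑ j ∈ s, f j * g (x + a - j) : ℕ) : ℤ) ≤ ((∑ j ∈ s, f j * g (x - j) : ℕ) : ℤ) := by
      push_cast
      convert this using 2 <;> push_cast <;> ring_nf
    have hfin : (∑ j ∈ s, f j * g (x + a - j)) ≤ ∑ j ∈ s, f j * g (x - j) := by exact_mod_cast hc
    calc (∑ j ∈ s, f j * g (x + ↑a - j)) ≤ _ := hfin

def okb (a : ℕ) (b : ℕ∞) (x : ℕ × ℕ × ℕ) : Prop :=
  x.1 ≤ 2 - a ∧ (x.2.1 : ℕ∞) ≤ b ∧ (x.2.2 : ℕ∞) ≤ b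

def wt (ℓ : ℕ) (x : ℕ × ℕ × ℕ) : ℕ := ℓ * (x.1 + x.2.1 + x.2.2)

def df (x : ℕ × ℕ × ℕ) : ℤ := (x.2.1 : ℤ) - (x.2.2 : ℤ)

noncomputable def Apart (a : ℕ) (b : ℕ∞) (ℓ n w : ℕ) (d : ℤ) : ℕ :=
  (((range (n+1) ×ˢ range (n+1) ×ˢ range (n+1)).filter
    fun x => okb a b x ∧ wt ℓ x = w ∧ df x = d)).card

lemma enat_le_of_le {u v : ℕ} {b : ℕ∞} (h : u ≤ v) (hv : (v : ℕ∞) ≤ b) : (u : ℕ∞) ≤ b :=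
  le_trans (by exact_mod_cast h) hv

lemma Apart_support {a : ℕ} {b : ℕ∞} {ℓ n w : ℕ} {d : ℤ}
    (h : Apart a b ℓ n w d ≠ 0) : -(n : ℤ) ≤ d ∧ d ≤ n := by
  rw [Apart] at h
  obtain ⟨x, hx⟩ := Finset.card_pos.mp (Nat.pos_of_ne_zero h)
  simp only [Finset.mem_filter, Finset.mem_product, Finset.mem_range] at hx
  obtain ⟨⟨h1, h2, h3⟩, _, _, hd⟩ := hx
  rw [← hd]; unfold df; omega

lemma Apart_symm (a : ℕ) (b : ℕ∞) (ℓ n w : ℕ) (d : ℤ) :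
    Apart a b ℓ n w (-d) = Apart a b ℓ n w d := by
  unfold Apart
  apply Finset.card_nbij' (fun x => (x.1, x.2.2, x.2.1)) (fun x => (x.1, x.2.2, x.2.1)) <;>
    first
      | (intro x hx
         obtain ⟨r, g, h⟩ := x
         simp only [Finset.mem_coe, Finset.mem_filter, Finset.mem_product, Finset.mem_range] at hx ⊢
         simp only [okb, wt, df] at hx ⊢
         obtain ⟨⟨m1, m2, m3⟩, ⟨b1, b2, b3⟩, hw, hd⟩ := hx
         exact ⟨⟨m1, m3, m2⟩, ⟨b1, b3, b2⟩,
           by rw [show r + h + g = r + g + h from by omega]; exact hw, by omega⟩)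
      | (intro x _; rfl)

lemma Apart_step {a : ℕ} (ha : a = 1 ∨ a = 2) (b : ℕ∞) (ℓ n w : ℕ) {d : ℤ} (hd : 0 ≤ d) :
    Apart a b ℓ n w (d + a) ≤ Apart a b ℓ n w d := by
  unfold Apart
  rcases ha with rfl | rfl
  · -- a = 1 : map (0,g,h) ↦ (1,g-1,h) and (1,g,h) ↦ (0,g,h+1)
    apply Finset.card_le_card_of_injOn
      (fun x => match x with
        | (0, g, h) => (1, g - 1, h)
        | (_ + 1, g, h) => (0, g, h + 1))
    · intro x hx
      obtain ⟨r, g, h⟩ := x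
      simp only [Finset.mem_coe, Finset.mem_filter, Finset.mem_product, Finset.mem_range] at hx
      simp only [okb, wt, df] at hx
      obtain ⟨⟨m1, m2, m3⟩, ⟨b1, b2, b3⟩, hw, hdf⟩ := hx
      have hgh : (h : ℤ) + d + 1 = g := by omega
      have hg1 : h < g := by omega
      match r, b1 with
      | 0, _ =>
        show (1, g - 1, h) ∈ _
        simp only [Finset.mem_coe, Finset.mem_filter, Finset.mem_product, Finset.mem_range]
        simp only [okb, wt, df]
        refine ⟨⟨by omega, by omega, m3⟩, ⟨by norm_num, enat_le_of_le (by omega) b2, b3⟩,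
          ?_, by push_cast; omega⟩
        rw [show 1 + (g - 1) + h = 0 + g + h from by omega]; exact hw
      | 1, _ =>
        show (0, g, h + 1) ∈ _
        simp only [Finset.mem_coe, Finset.mem_filter, Finset.mem_product, Finset.mem_range]
        simp only [okb, wt, df]
        refine ⟨⟨by omega, m2, by omega⟩, ⟨by norm_num, b2, enat_le_of_le (by omega) b2⟩,
          ?_, by push_cast; omega⟩
        rw [show 0 + g + (h + 1) = 1 + g + h from by omega]; exact hw
    · intro x hx y hy hxy
      obtain ⟨r, g, h⟩ := x; obtain ⟨r', g', h'⟩ := y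
      simp only [Finset.mem_coe, Finset.mem_filter, Finset.mem_product, Finset.mem_range] at hx hy
      simp only [okb, wt, df] at hx hy
      have hgx : (h : ℤ) + d + 1 = g := by have := hx.2.2.2; omega
      have hgy : (h' : ℤ) + d + 1 = g' := by have := hy.2.2.2; omega
      have hr : r ≤ 1 := hx.2.1.1
      have hr' : r' ≤ 1 := hy.2.1.1
      match r, hr, r', hr' with
      | 0, _, 0, _ =>
        have e : ((1:ℕ), g - 1, h) = (1, g' - 1, h') := hxy
        simp only [Prod.mk.injEq] at e ⊢
        refine ⟨trivial, by omega, by omega⟩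
      | 0, _, 1, _ =>
        have e : ((1:ℕ), g - 1, h) = (0, g', h' + 1) := hxy
        exact absurd (congrArg Prod.fst e) (by norm_num)
      | 1, _, 0, _ =>
        have e : ((0:ℕ), g, h + 1) = (1, g' - 1, h') := hxy
        exact absurd (congrArg Prod.fst e) (by norm_num)
      | 1, _, 1, _ =>
        have e : ((0:ℕ), g, h + 1) = (0, g', h' + 1) := hxy
        simp only [Prod.mk.injEq] at e ⊢
        refine ⟨trivial, by omega, by omega⟩
  · -- a = 2 : map (r,g,h) ↦ (r,g-1,h+1)
    apply Finset.card_le_card_of_injOn (fun x => (x.1, x.2.1 - 1, x.2.2 + 1))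
    · intro x hx
      obtain ⟨r, g, h⟩ := x
      simp only [Finset.mem_coe, Finset.mem_filter, Finset.mem_product, Finset.mem_range] at hx ⊢
      simp only [okb, wt, df] at hx ⊢
      obtain ⟨⟨m1, m2, m3⟩, ⟨b1, b2, b3⟩, hw, hdf⟩ := hx
      have hgh : (h : ℤ) + d + 2 = g := by omega
      have hg2 : h + 2 ≤ g := by omega
      refine ⟨⟨m1, by omega, by omega⟩,
        ⟨b1, enat_le_of_le (by omega) b2, enat_le_of_le (by omega) b2⟩,
        ?_, by push_cast; omega⟩
      rw [show r + (g - 1) + (h + 1) = r + g + h from by omega]; exact hw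
    · intro x hx y hy hxy
      obtain ⟨r, g, h⟩ := x; obtain ⟨r', g', h'⟩ := y
      simp only [Finset.mem_coe, Finset.mem_filter, Finset.mem_product, Finset.mem_range] at hx hy
      simp only [okb, wt, df] at hx hy
      have hgx : (h : ℤ) + d + 2 = g := by have := hx.2.2.2; omega
      have hgy : (h' : ℤ) + d + 2 = g' := by have := hy.2.2.2; omega
      have e : ((r:ℕ), g - 1, h + 1) = (r', g' - 1, h' + 1) := hxy
      simp only [Prod.mk.injEq] at e ⊢
      refine ⟨e.1, by omega, by omega⟩

lemma Apart_symStep {a : ℕ} (ha : a = 1 ∨ a = 2) (b : ℕ∞) (ℓ n w : ℕ) :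
    SymStep a (fun d => Apart a b ℓ n w d) := by
  constructor
  · intro d
    rcases le_or_gt 0 d with h | h
    · exact Apart_symm a b ℓ n w d
    · have := Apart_symm a b ℓ n w (-d)
      simpa using this.symm
  · intro d hd
    exact Apart_step ha b ℓ n w hd

section Part3

def OkT (a : ℕ) (b : ℕ∞) (K : Finset ℕ) (m : ℤ) (n : ℕ)
    (t : (ℕ →₀ ℕ) × (ℕ →₀ ℕ) × (ℕ →₀ ℕ)) : Prop :=
  t.1.support ⊆ K ∧ t.2.1.support ⊆ K ∧ t.2.2.support ⊆ K ∧
  (∀ ℓ : ℕ, t.1 ℓ ≤ 2 - a) ∧ (∀ ℓ : ℕ, (t.2.1 ℓ : ℕ∞) ≤ b) ∧ (∀ ℓ : ℕ, (t.2.2 ℓ : ℕ∞) ≤ b) ∧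
  (∑ ℓ ∈ K, ℓ * (t.1 ℓ + t.2.1 ℓ + t.2.2 ℓ)) = n ∧
  (∑ ℓ ∈ K, ((t.2.1 ℓ : ℤ) - (t.2.2 ℓ : ℤ))) = m

noncomputable def cnt (a : ℕ) (b : ℕ∞) (K : Finset ℕ) (m : ℤ) (n : ℕ) : ℕ :=
  Nat.card {t : (ℕ →₀ ℕ) × (ℕ →₀ ℕ) × (ℕ →₀ ℕ) // OkT a b K m n t}

variable {a : ℕ} {b : ℕ∞} {K : Finset ℕ} {m : ℤ} {n : ℕ}

lemma okT_term_le {t : (ℕ →₀ ℕ) × (ℕ →₀ ℕ) × (ℕ →₀ ℕ)} (ht : OkT a b K m n t)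
    {ℓ : ℕ} (hℓ : ℓ ∈ K) : ℓ * (t.1 ℓ + t.2.1 ℓ + t.2.2 ℓ) ≤ n := by
  rw [← ht.2.2.2.2.2.2.1]
  exact Finset.single_le_sum (f := fun j => j * (t.1 j + t.2.1 j + t.2.2 j))
    (fun j _ => Nat.zero_le _) hℓ

lemma okT_bounds (hK : ∀ ℓ ∈ K, 0 < ℓ) {t : (ℕ →₀ ℕ) × (ℕ →₀ ℕ) × (ℕ →₀ ℕ)}
    (ht : OkT a b K m n t) (ℓ : ℕ) :
    t.1 ℓ ≤ n ∧ t.2.1 ℓ ≤ n ∧ t.2.2 ℓ ≤ n := by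
  by_cases hℓ : ℓ ∈ K
  · have h1 := okT_term_le ht hℓ
    have h2 := hK ℓ hℓ
    have : t.1 ℓ + t.2.1 ℓ + t.2.2 ℓ ≤ n := by
      calc t.1 ℓ + t.2.1 ℓ + t.2.2 ℓ ≤ ℓ * (t.1 ℓ + t.2.1 ℓ + t.2.2 ℓ) :=
        Nat.le_mul_of_pos_left _ h2
      _ ≤ n := h1
    omega
  · have e1 : t.1 ℓ = 0 := Finsupp.notMem_support_iff.mp (fun hs => hℓ (ht.1 hs))
    have e2 : t.2.1 ℓ = 0 := Finsupp.notMem_support_iff.mp (fun hs => hℓ (ht.2.1 hs))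
    have e3 : t.2.2 ℓ = 0 := Finsupp.notMem_support_iff.mp (fun hs => hℓ (ht.2.2.1 hs))
    omega

lemma okT_finite (hK : ∀ ℓ ∈ K, 0 < ℓ) :
    Finite {t : (ℕ →₀ ℕ) × (ℕ →₀ ℕ) × (ℕ →₀ ℕ) // OkT a b K m n t} := by
  let F : {t : (ℕ →₀ ℕ) × (ℕ →₀ ℕ) × (ℕ →₀ ℕ) // OkT a b K m n t} →
      (K → Fin (n+1) × Fin (n+1) × Fin (n+1)) := fun t ℓ =>
    (⟨t.1.1 ℓ, by have := okT_bounds hK t.2 ℓ; omega⟩,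
     ⟨t.1.2.1 ℓ, by have := okT_bounds hK t.2 ℓ; omega⟩,
     ⟨t.1.2.2 ℓ, by have := okT_bounds hK t.2 ℓ; omega⟩)
  apply Finite.of_injective F
  intro t t' h
  have hv : ∀ ℓ (hℓ : ℓ ∈ K), t.1.1 ℓ = t'.1.1 ℓ ∧ t.1.2.1 ℓ = t'.1.2.1 ℓ ∧
      t.1.2.2 ℓ = t'.1.2.2 ℓ := by
    intro ℓ hℓ
    have := congrFun h ⟨ℓ, hℓ⟩
    rw [Prod.ext_iff, Prod.ext_iff] at this
    exact ⟨congrArg Fin.val this.1, congrArg Fin.val this.2.1, congrArg Fin.val this.2.2⟩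
  have hz : ∀ (f f' : ℕ →₀ ℕ), f.support ⊆ K → f'.support ⊆ K →
      (∀ ℓ ∈ K, f ℓ = f' ℓ) → f = f' := by
    intro f f' hf hf' he
    ext ℓ
    by_cases hℓ : ℓ ∈ K
    · exact he ℓ hℓ
    · rw [Finsupp.notMem_support_iff.mp (fun hs => hℓ (hf hs)),
        Finsupp.notMem_support_iff.mp (fun hs => hℓ (hf' hs))]
  apply Subtype.ext
  have e1 := hz t.1.1 t'.1.1 t.2.1 t'.2.1 (fun ℓ hℓ => (hv ℓ hℓ).1)
  have e2 := hz t.1.2.1 t'.1.2.1 t.2.2.1 t'.2.2.1 (fun ℓ hℓ => (hv ℓ hℓ).2.1)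
  have e3 := hz t.1.2.2 t'.1.2.2 t.2.2.2.1 t'.2.2.2.1 (fun ℓ hℓ => (hv ℓ hℓ).2.2)
  exact Prod.ext e1 (Prod.ext e2 e3)

lemma cnt_bound (hK : ∀ ℓ ∈ K, 0 < ℓ) (h : cnt a b K m n ≠ 0) : m.natAbs ≤ n := by
  have hne : Nonempty {t : (ℕ →₀ ℕ) × (ℕ →₀ ℕ) × (ℕ →₀ ℕ) // OkT a b K m n t} := by
    by_contra hc
    rw [not_nonempty_iff] at hc
    exact h (by rw [cnt]; exact Nat.card_of_isEmpty)
  obtain ⟨t, ht⟩ := hne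
  have h1 : |m| ≤ ∑ ℓ ∈ K, |(t.2.1 ℓ : ℤ) - (t.2.2 ℓ : ℤ)| := by
    rw [← ht.2.2.2.2.2.2.2]
    exact Finset.abs_sum_le_sum_abs _ _
  have h2 : ∑ ℓ ∈ K, |(t.2.1 ℓ : ℤ) - (t.2.2 ℓ : ℤ)|
      ≤ ∑ ℓ ∈ K, ((ℓ * (t.1 ℓ + t.2.1 ℓ + t.2.2 ℓ) : ℕ) : ℤ) := by
    apply Finset.sum_le_sum
    intro ℓ hℓ
    have hp := hK ℓ hℓ
    have : t.2.1 ℓ + t.2.2 ℓ ≤ ℓ * (t.1 ℓ + t.2.1 ℓ + t.2.2 ℓ) := by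
      calc t.2.1 ℓ + t.2.2 ℓ ≤ t.1 ℓ + t.2.1 ℓ + t.2.2 ℓ := by omega
        _ ≤ ℓ * (t.1 ℓ + t.2.1 ℓ + t.2.2 ℓ) := Nat.le_mul_of_pos_left _ hp
    have hc : ((t.2.1 ℓ : ℤ) + (t.2.2 ℓ : ℤ)) ≤ ((ℓ * (t.1 ℓ + t.2.1 ℓ + t.2.2 ℓ) : ℕ) : ℤ) := by
      exact_mod_cast this
    rw [abs_le]
    omega
  have h3 : (∑ ℓ ∈ K, ((ℓ * (t.1 ℓ + t.2.1 ℓ + t.2.2 ℓ) : ℕ) : ℤ)) = (n : ℤ) := by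
    exact_mod_cast ht.2.2.2.2.2.2.1
  have h4 : |m| ≤ (n : ℤ) := h1.trans (h2.trans_eq h3)
  rw [Int.abs_eq_natAbs] at h4
  exact_mod_cast h4

lemma cnt_empty (m : ℤ) (n : ℕ) : cnt a b ∅ m n = if m = 0 ∧ n = 0 then 1 else 0 := by
  rw [cnt]
  split_ifs with h
  · obtain ⟨rfl, rfl⟩ := h
    rw [Nat.card_eq_one_iff_unique]
    constructor
    · constructor
      intro t t'
      have hz : ∀ (f : ℕ →₀ ℕ), f.support ⊆ (∅ : Finset ℕ) → f = 0 := by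
        intro f hf
        ext ℓ
        exact Finsupp.notMem_support_iff.mp (fun hs => absurd (hf hs) (Finset.notMem_empty ℓ))
      apply Subtype.ext
      rw [Prod.ext_iff, Prod.ext_iff]
      obtain ⟨h1, h2, h3, -⟩ := t.2
      obtain ⟨h1', h2', h3', -⟩ := t'.2
      exact ⟨(hz _ h1).trans (hz _ h1').symm, (hz _ h2).trans (hz _ h2').symm,
        (hz _ h3).trans (hz _ h3').symm⟩
    · refine ⟨⟨(0, 0, 0), ?_⟩⟩
      refine ⟨by simp, by simp, by simp, fun ℓ => by simp, fun ℓ => by simp,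
        fun ℓ => by simp, by simp, by simp⟩
  · have : IsEmpty {t : (ℕ →₀ ℕ) × (ℕ →₀ ℕ) × (ℕ →₀ ℕ) // OkT a b ∅ m n t} := by
      constructor
      intro t
      obtain ⟨-, -, -, -, -, -, h7, h8⟩ := t.2
      simp only [Finset.sum_empty] at h7 h8
      exact h (by constructor <;> omega)
    exact Nat.card_of_isEmpty

end Part3

lemma cnt_insert {a : ℕ} (b : ℕ∞) {ℓ : ℕ} {K : Finset ℕ} (hℓK : ℓ ∉ K) (hℓ : 0 < ℓ)
    (hK : ∀ j ∈ K, 0 < j) (m : ℤ) (n : ℕ) :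
    cnt a b (insert ℓ K) m n
      = ∑ x ∈ (Finset.range (n+1) ×ˢ Finset.range (n+1) ×ˢ Finset.range (n+1)).filter
          (fun x => okb a b x ∧ wt ℓ x ≤ n),
        cnt a b K (m - df x) (n - wt ℓ x) := by
  classical
  set Tn := (Finset.range (n+1) ×ˢ Finset.range (n+1) ×ˢ Finset.range (n+1)).filter
      (fun x => okb a b x ∧ wt ℓ x ≤ n) with hTn
  have hIns : ∀ j ∈ insert ℓ K, 0 < j := by
    intro j hj
    rcases Finset.mem_insert.mp hj with rfl | hj
    · exact hℓ
    · exact hK j hj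
  haveI hfin : Finite {t : (ℕ →₀ ℕ) × (ℕ →₀ ℕ) × (ℕ →₀ ℕ) // OkT a b (insert ℓ K) m n t} :=
    okT_finite hIns
  have hmemT : ∀ t : {t : (ℕ →₀ ℕ) × (ℕ →₀ ℕ) × (ℕ →₀ ℕ) // OkT a b (insert ℓ K) m n t},
      (t.1.1 ℓ, t.1.2.1 ℓ, t.1.2.2 ℓ) ∈ Tn := by
    rintro ⟨t, ht⟩
    have hb := okT_bounds hIns ht ℓ
    have hterm := okT_term_le ht (Finset.mem_insert_self ℓ K)
    simp only [hTn, Finset.mem_filter, Finset.mem_product, Finset.mem_range]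
    exact ⟨⟨by omega, by omega, by omega⟩,
      ⟨ht.2.2.2.1 ℓ, ht.2.2.2.2.1 ℓ, ht.2.2.2.2.2.1 ℓ⟩, hterm⟩
  set key : {t : (ℕ →₀ ℕ) × (ℕ →₀ ℕ) × (ℕ →₀ ℕ) // OkT a b (insert ℓ K) m n t} → {x // x ∈ Tn} :=
    fun t => ⟨(t.1.1 ℓ, t.1.2.1 ℓ, t.1.2.2 ℓ), hmemT t⟩ with hkeydef
  have eraseMem : ∀ (f : ℕ →₀ ℕ), f.support ⊆ insert ℓ K → (f.erase ℓ).support ⊆ K := by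
    intro f hf j hj
    rw [Finsupp.support_erase, Finset.mem_erase] at hj
    rcases Finset.mem_insert.mp (hf hj.2) with h | h
    · exact absurd h hj.1
    · exact h
  have updMem : ∀ (f : ℕ →₀ ℕ) (v : ℕ), f.support ⊆ K →
      (f.update ℓ v).support ⊆ insert ℓ K := by
    intro f v hf j hj
    have hne : (f.update ℓ v) j ≠ 0 := Finsupp.mem_support_iff.mp hj
    rw [Finsupp.coe_update] at hne
    by_cases hjl : j = ℓ
    · exact hjl ▸ Finset.mem_insert_self ℓ K
    · rw [Function.update_of_ne hjl] at hne
      exact Finset.mem_insert_of_mem (hf (Finsupp.mem_support_iff.mpr hne))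
  have fibEq : ∀ (x : ℕ × ℕ × ℕ) (hx : x ∈ Tn),
      Nat.card {t : {t : (ℕ →₀ ℕ) × (ℕ →₀ ℕ) × (ℕ →₀ ℕ) // OkT a b (insert ℓ K) m n t} //
        key t = ⟨x, hx⟩}
        = cnt a b K (m - df x) (n - wt ℓ x) := by
    intro x hx
    have hx' := hx
    simp only [hTn, Finset.mem_filter, Finset.mem_product, Finset.mem_range] at hx'
    obtain ⟨⟨hx1, hx2, hx3⟩, ⟨hb1, hb2, hb3⟩, hwle⟩ := hx'
    apply Nat.card_congr
    refine ⟨fun tt => ⟨(tt.1.1.1.erase ℓ, tt.1.1.2.1.erase ℓ, tt.1.1.2.2.erase ℓ), ?_⟩,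
      fun t => ⟨⟨(t.1.1.update ℓ x.1, t.1.2.1.update ℓ x.2.1, t.1.2.2.update ℓ x.2.2), ?_⟩, ?_⟩,
      ?_, ?_⟩
    · -- forward: OkT K for the erased triple
      obtain ⟨⟨t, ht⟩, hkey⟩ := tt
      have hev : (t.1 ℓ, t.2.1 ℓ, t.2.2 ℓ) = x := congrArg Subtype.val hkey
      have ev1 : t.1 ℓ = x.1 := congrArg Prod.fst hev
      have ev2 : t.2.1 ℓ = x.2.1 := congrArg (fun p => p.2.1) hev
      have ev3 : t.2.2 ℓ = x.2.2 := congrArg (fun p => p.2.2) hev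
      obtain ⟨hs1, hs2, hs3, hb1', hb2', hb3', hw, hm⟩ := ht
      refine ⟨eraseMem _ hs1, eraseMem _ hs2, eraseMem _ hs3, ?_, ?_, ?_, ?_, ?_⟩
      · intro j
        by_cases hjl : j = ℓ
        · subst hjl; rw [Finsupp.erase_same]; exact Nat.zero_le _
        · rw [Finsupp.erase_ne hjl]; exact hb1' j
      · intro j
        by_cases hjl : j = ℓ
        · subst hjl; rw [Finsupp.erase_same]; exact_mod_cast (zero_le : (0:ℕ∞) ≤ b)
        · rw [Finsupp.erase_ne hjl]; exact hb2' j
      · intro j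
        by_cases hjl : j = ℓ
        · subst hjl; rw [Finsupp.erase_same]; exact_mod_cast (zero_le : (0:ℕ∞) ≤ b)
        · rw [Finsupp.erase_ne hjl]; exact hb3' j
      · -- weight sum
        have hsame : ∀ j ∈ K, j * (t.1.erase ℓ j + t.2.1.erase ℓ j + t.2.2.erase ℓ j)
            = j * (t.1 j + t.2.1 j + t.2.2 j) := by
          intro j hj
          have : j ≠ ℓ := fun h => hℓK (h ▸ hj)
          rw [Finsupp.erase_ne this, Finsupp.erase_ne this, Finsupp.erase_ne this]
        rw [Finset.sum_congr rfl hsame]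
        rw [Finset.sum_insert hℓK] at hw
        have : wt ℓ x = ℓ * (t.1 ℓ + t.2.1 ℓ + t.2.2 ℓ) := by rw [wt, ev1, ev2, ev3]
        omega
      · -- m sum
        have hsame : ∀ j ∈ K, ((t.2.1.erase ℓ j : ℤ) - (t.2.2.erase ℓ j : ℤ))
            = ((t.2.1 j : ℤ) - (t.2.2 j : ℤ)) := by
          intro j hj
          have : j ≠ ℓ := fun h => hℓK (h ▸ hj)
          rw [Finsupp.erase_ne this, Finsupp.erase_ne this]
        rw [Finset.sum_congr rfl hsame]
        rw [Finset.sum_insert hℓK] at hm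
        have : df x = (t.2.1 ℓ : ℤ) - (t.2.2 ℓ : ℤ) := by rw [df, ev2, ev3]
        omega
    · -- backward: OkT (insert ℓ K) for the updated triple
      obtain ⟨t, ht⟩ := t
      obtain ⟨hs1, hs2, hs3, hb1', hb2', hb3', hw, hm⟩ := ht
      have hz1 : t.1 ℓ = 0 := Finsupp.notMem_support_iff.mp (fun hs => hℓK (hs1 hs))
      have hz2 : t.2.1 ℓ = 0 := Finsupp.notMem_support_iff.mp (fun hs => hℓK (hs2 hs))
      have hz3 : t.2.2 ℓ = 0 := Finsupp.notMem_support_iff.mp (fun hs => hℓK (hs3 hs))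
      refine ⟨updMem _ _ hs1, updMem _ _ hs2, updMem _ _ hs3, ?_, ?_, ?_, ?_, ?_⟩
      · intro j
        rw [Finsupp.coe_update]
        by_cases hjl : j = ℓ
        · subst hjl; rw [Function.update_self]; exact hb1
        · rw [Function.update_of_ne hjl]; exact hb1' j
      · intro j
        rw [Finsupp.coe_update]
        by_cases hjl : j = ℓ
        · subst hjl; rw [Function.update_self]; exact hb2
        · rw [Function.update_of_ne hjl]; exact hb2' j
      · intro j
        rw [Finsupp.coe_update]
        by_cases hjl : j = ℓ
        · subst hjl; rw [Function.update_self]; exact hb3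
        · rw [Function.update_of_ne hjl]; exact hb3' j
      · rw [Finset.sum_insert hℓK]
        have h1 : (t.1.update ℓ x.1) ℓ = x.1 := by
          rw [Finsupp.coe_update, Function.update_self]
        have h2 : (t.2.1.update ℓ x.2.1) ℓ = x.2.1 := by
          rw [Finsupp.coe_update, Function.update_self]
        have h3 : (t.2.2.update ℓ x.2.2) ℓ = x.2.2 := by
          rw [Finsupp.coe_update, Function.update_self]
        have hsame : ∀ j ∈ K,
            j * (t.1.update ℓ x.1 j + t.2.1.update ℓ x.2.1 j + t.2.2.update ℓ x.2.2 j)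
            = j * (t.1 j + t.2.1 j + t.2.2 j) := by
          intro j hj
          have hne : j ≠ ℓ := fun h => hℓK (h ▸ hj)
          rw [Finsupp.coe_update, Finsupp.coe_update, Finsupp.coe_update,
            Function.update_of_ne hne, Function.update_of_ne hne, Function.update_of_ne hne]
        rw [Finset.sum_congr rfl hsame, h1, h2, h3, hw]
        have : wt ℓ x = ℓ * (x.1 + x.2.1 + x.2.2) := rfl
        omega
      · rw [Finset.sum_insert hℓK]
        have h2 : (t.2.1.update ℓ x.2.1) ℓ = x.2.1 := by
          rw [Finsupp.coe_update, Function.update_self]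
        have h3 : (t.2.2.update ℓ x.2.2) ℓ = x.2.2 := by
          rw [Finsupp.coe_update, Function.update_self]
        have hsame : ∀ j ∈ K,
            ((t.2.1.update ℓ x.2.1 j : ℤ) - (t.2.2.update ℓ x.2.2 j : ℤ))
            = ((t.2.1 j : ℤ) - (t.2.2 j : ℤ)) := by
          intro j hj
          have hne : j ≠ ℓ := fun h => hℓK (h ▸ hj)
          rw [Finsupp.coe_update, Finsupp.coe_update,
            Function.update_of_ne hne, Function.update_of_ne hne]
        rw [Finset.sum_congr rfl hsame, h2, h3, hm, df]
        ring
    · -- key of backward = x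
      apply Subtype.ext
      show ((_ : ℕ →₀ ℕ) ℓ, _, _) = x
      rw [Finsupp.coe_update, Finsupp.coe_update, Finsupp.coe_update,
        Function.update_self, Function.update_self, Function.update_self]
    · -- left inverse
      rintro ⟨⟨t, ht⟩, hkey⟩
      have hev : (t.1 ℓ, t.2.1 ℓ, t.2.2 ℓ) = x := congrArg Subtype.val hkey
      have ev1 : t.1 ℓ = x.1 := congrArg Prod.fst hev
      have ev2 : t.2.1 ℓ = x.2.1 := congrArg (fun p => p.2.1) hev
      have ev3 : t.2.2 ℓ = x.2.2 := congrArg (fun p => p.2.2) hev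
      apply Subtype.ext
      apply Subtype.ext
      have hupd : ∀ (f : ℕ →₀ ℕ) (v : ℕ), f ℓ = v → (f.erase ℓ).update ℓ v = f := by
        intro f v hv
        ext j
        rw [Finsupp.coe_update]
        by_cases hjl : j = ℓ
        · subst hjl; rw [Function.update_self, hv]
        · rw [Function.update_of_ne hjl, Finsupp.erase_ne hjl]
      exact Prod.ext (hupd _ _ ev1) (Prod.ext (hupd _ _ ev2) (hupd _ _ ev3))
    · -- right inverse
      rintro ⟨t, ht⟩
      apply Subtype.ext
      have hz1 : t.1 ℓ = 0 := Finsupp.notMem_support_iff.mp (fun hs => hℓK (ht.1 hs))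
      have hz2 : t.2.1 ℓ = 0 := Finsupp.notMem_support_iff.mp (fun hs => hℓK (ht.2.1 hs))
      have hz3 : t.2.2 ℓ = 0 := Finsupp.notMem_support_iff.mp (fun hs => hℓK (ht.2.2.1 hs))
      have herase : ∀ (f : ℕ →₀ ℕ) (v : ℕ), f ℓ = 0 → (f.update ℓ v).erase ℓ = f := by
        intro f v hv
        ext j
        by_cases hjl : j = ℓ
        · subst hjl; rw [Finsupp.erase_same, hv]
        · rw [Finsupp.erase_ne hjl, Finsupp.coe_update, Function.update_of_ne hjl]
      exact Prod.ext (herase _ _ hz1) (Prod.ext (herase _ _ hz2) (herase _ _ hz3))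
  -- now assemble
  letI : Fintype {x // x ∈ Tn} := FinsetCoe.fintype _
  have e0 : cnt a b (insert ℓ K) m n
      = Nat.card (Σ x : {x // x ∈ Tn},
          {t : {t : (ℕ →₀ ℕ) × (ℕ →₀ ℕ) × (ℕ →₀ ℕ) // OkT a b (insert ℓ K) m n t} //
            key t = x}) := by
    rw [cnt]
    exact (Nat.card_congr (Equiv.sigmaFiberEquiv key)).symm
  rw [e0]
  letI : ∀ x : {x // x ∈ Tn}, Fintype
      {t : {t : (ℕ →₀ ℕ) × (ℕ →₀ ℕ) × (ℕ →₀ ℕ) // OkT a b (insert ℓ K) m n t} // key t = x} :=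
    fun x => Fintype.ofFinite _
  rw [Nat.card_eq_fintype_card, Fintype.card_sigma]
  rw [← Finset.sum_coe_sort Tn (fun x => cnt a b K (m - df x) (n - wt ℓ x))]
  apply Finset.sum_congr rfl
  intro x _
  rw [← Nat.card_eq_fintype_card]
  have := fibEq x.1 x.2
  convert this using 3


/-- `pColored S a b m n`: the number of three-colored partitions of `n` (colors red, green,
blue) with all parts from `S`, each red part appearing at most `2 - a` times, each green and
blue part appearing at most `b` times (in `ℕ∞`), such that the number of green parts minus
the number of blue parts is `m`. The triple of finitely supported multiplicity functions is
`(f_red, f_green, f_blue)`. -/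
noncomputable def pColored (S : Set ℕ) (a : ℕ) (b : ℕ∞) (m : ℤ) (n : ℕ) : ℕ :=
  Nat.card {t : (ℕ →₀ ℕ) × (ℕ →₀ ℕ) × (ℕ →₀ ℕ) //
    (↑t.1.support ⊆ S) ∧ (↑t.2.1.support ⊆ S) ∧ (↑t.2.2.support ⊆ S) ∧
    (∀ ℓ : ℕ, t.1 ℓ ≤ 2 - a) ∧
    (∀ ℓ : ℕ, (t.2.1 ℓ : ℕ∞) ≤ b) ∧ (∀ ℓ : ℕ, (t.2.2 ℓ : ℕ∞) ≤ b) ∧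
    (∑ᶠ ℓ : ℕ, ℓ * (t.1 ℓ + t.2.1 ℓ + t.2.2 ℓ)) = n ∧
    (∑ᶠ ℓ : ℕ, ((t.2.1 ℓ : ℤ) - (t.2.2 ℓ : ℤ))) = m}

lemma group_sum {a : ℕ} (b : ℕ∞) (ℓ n : ℕ) (C : ℤ → ℕ → ℕ) (m : ℤ) :
    ∑ x ∈ (Finset.range (n+1) ×ˢ Finset.range (n+1) ×ˢ Finset.range (n+1)).filter
        (fun x => okb a b x ∧ wt ℓ x ≤ n),
      C (m - df x) (n - wt ℓ x)
    = ∑ w ∈ Finset.range (n+1), ∑ d ∈ Finset.Icc (-(n : ℤ)) n,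
        Apart a b ℓ n w d * C (m - d) (n - w) := by
  classical
  set Tn := (Finset.range (n+1) ×ˢ Finset.range (n+1) ×ˢ Finset.range (n+1)).filter
      (fun x => okb a b x ∧ wt ℓ x ≤ n) with hTn
  have hmaps : ∀ x ∈ Tn, (wt ℓ x, df x) ∈ Finset.range (n+1) ×ˢ Finset.Icc (-(n : ℤ)) n := by
    intro x hx
    simp only [hTn, Finset.mem_filter, Finset.mem_product, Finset.mem_range] at hx
    simp only [Finset.mem_product, Finset.mem_range, Finset.mem_Icc]
    refine ⟨by omega, ?_, ?_⟩ <;> (rw [df]; push_cast; omega)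
  rw [← Finset.sum_fiberwise_of_maps_to hmaps (fun x => C (m - df x) (n - wt ℓ x)),
    Finset.sum_product]
  apply Finset.sum_congr rfl
  intro w hw
  apply Finset.sum_congr rfl
  intro d hd
  rw [Finset.mem_range] at hw
  have hfib : Tn.filter (fun x => (wt ℓ x, df x) = (w, d))
      = (Finset.range (n+1) ×ˢ Finset.range (n+1) ×ˢ Finset.range (n+1)).filter
        (fun x => okb a b x ∧ wt ℓ x = w ∧ df x = d) := by
    rw [hTn, Finset.filter_filter]
    apply Finset.filter_congr
    intro x hx
    constructor
    · rintro ⟨⟨ho, -⟩, he⟩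
      rw [Prod.ext_iff] at he
      exact ⟨ho, he.1, he.2⟩
    · rintro ⟨ho, he1, he2⟩
      exact ⟨⟨ho, by omega⟩, by rw [Prod.ext_iff]; exact ⟨he1, he2⟩⟩
  have hconst : ∀ x ∈ Tn.filter (fun x => (wt ℓ x, df x) = (w, d)),
      C (m - df x) (n - wt ℓ x) = C (m - d) (n - w) := by
    intro x hx
    rw [Finset.mem_filter, Prod.ext_iff] at hx
    have e1 : wt ℓ x = w := hx.2.1
    have e2 : df x = d := hx.2.2
    rw [e1, e2]
  rw [Finset.sum_congr rfl hconst, Finset.sum_const, smul_eq_mul, hfib]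
  rfl

lemma cnt_symStep {a : ℕ} (ha : a = 1 ∨ a = 2) (b : ℕ∞) :
    ∀ K : Finset ℕ, (∀ j ∈ K, 0 < j) → ∀ n : ℕ, SymStep a (fun m => cnt a b K m n) := by
  have ha1 : 1 ≤ a := by rcases ha with h | h <;> omega
  intro K
  induction K using Finset.induction_on with
  | empty =>
    intro _ n
    constructor
    · intro m
      show cnt a b ∅ (-m) n = cnt a b ∅ m n
      rw [cnt_empty, cnt_empty]
      congr 1
      simp [neg_eq_zero]
    · intro x hx
      show cnt a b ∅ (x + a) n ≤ cnt a b ∅ x n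
      rw [cnt_empty, cnt_empty]
      split_ifs with h1 h2 h2
      · rfl
      · exfalso; apply h2; constructor
        · have := h1.1; omega
        · exact h1.2
      · exact Nat.zero_le _
      · rfl
  | @insert ℓ K hℓK ih =>
    intro hpos n
    have hℓ : 0 < ℓ := hpos ℓ (Finset.mem_insert_self ℓ K)
    have hK : ∀ j ∈ K, 0 < j := fun j hj => hpos j (Finset.mem_insert_of_mem hj)
    have hrw : (fun m => cnt a b (insert ℓ K) m n)
        = fun m => ∑ w ∈ Finset.range (n+1), ∑ d ∈ Finset.Icc (-(n : ℤ)) n,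
            Apart a b ℓ n w d * cnt a b K (m - d) (n - w) := by
      funext m
      rw [cnt_insert b hℓK hℓ hK m n]
      exact group_sum b ℓ n (fun m' n' => cnt a b K m' n') m
    rw [hrw]
    apply symStep_sum
    intro w hw
    have hAsupp : (Function.support (Apart a b ℓ n w)).Finite := by
      apply Set.Finite.subset (Set.finite_Icc (-(n : ℤ)) n)
      intro d hd
      have := Apart_support (Function.mem_support.mp hd)
      exact Set.mem_Icc.mpr this
    have hconv := symStep_conv ha hAsupp (Apart_symStep ha b ℓ n w) (ih hK (n - w))
    have heq : (fun m => ∑ d ∈ Finset.Icc (-(n : ℤ)) n,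
        Apart a b ℓ n w d * cnt a b K (m - d) (n - w))
        = fun m => ∑ᶠ d : ℤ, Apart a b ℓ n w d * cnt a b K (m - d) (n - w) := by
      funext m
      symm
      apply finsum_eq_sum_of_support_subset
      intro d hd
      rw [Function.mem_support] at hd
      have hA : Apart a b ℓ n w d ≠ 0 := by
        intro h0
        exact hd (by rw [h0, Nat.zero_mul])
      have := Apart_support hA
      simp only [Finset.coe_Icc, Set.mem_Icc]
      exact this
    rw [heq]
    exact hconv

lemma pColored_eq_cnt (S : Set ℕ) (hS : ∀ s ∈ S, 0 < s) (a : ℕ) (b : ℕ∞) (m : ℤ) (n : ℕ) :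
    pColored S a b m n = cnt a b ((Finset.range (n+1)).filter (· ∈ S)) m n := by
  classical
  set L := (Finset.range (n+1)).filter (· ∈ S) with hL
  rw [pColored, cnt]
  apply Nat.card_congr
  apply Equiv.subtypeEquivRight
  intro t
  have hwsupp : (Function.support fun j => j * (t.1 j + t.2.1 j + t.2.2 j)).Finite := by
    apply Set.Finite.subset
      (Set.finite_coe_iff.mp (by infer_instance) :
        (↑(t.1.support ∪ t.2.1.support ∪ t.2.2.support) : Set ℕ).Finite)
    intro j hj
    rw [Function.mem_support] at hj
    simp only [Finset.coe_union, Set.mem_union, Finset.mem_coe, Finsupp.mem_support_iff]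
    by_contra hc
    push_neg at hc
    rw [hc.1.1, hc.1.2, hc.2] at hj
    simp at hj
  have hdsupp : (Function.support fun j => ((t.2.1 j : ℤ) - (t.2.2 j : ℤ))).Finite := by
    apply Set.Finite.subset
      (Set.finite_coe_iff.mp (by infer_instance) :
        (↑(t.2.1.support ∪ t.2.2.support) : Set ℕ).Finite)
    intro j hj
    rw [Function.mem_support] at hj
    simp only [Finset.coe_union, Set.mem_union, Finset.mem_coe, Finsupp.mem_support_iff]
    by_contra hc
    push_neg at hc
    rw [hc.1, hc.2] at hj
    simp at hj
  constructor
  · rintro ⟨h1, h2, h3, h4, h5, h6, h7, h8⟩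
    have hterm : ∀ j : ℕ, j * (t.1 j + t.2.1 j + t.2.2 j) ≤ n := by
      intro j
      rw [← h7]
      exact single_le_finsum j hwsupp (fun i => Nat.zero_le _)
    have hsupL : ∀ (f : ℕ →₀ ℕ), (↑f.support : Set ℕ) ⊆ S →
        (∀ j ∈ f.support, j ∈ t.1.support ∪ t.2.1.support ∪ t.2.2.support) →
        f.support ⊆ L := by
      intro f hf hmem j hj
      have hjS : j ∈ S := hf hj
      have hj0 : 0 < j := hS j hjS
      have hv : 0 < t.1 j + t.2.1 j + t.2.2 j := by
        have := hmem j hj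
        simp only [Finset.mem_union, Finsupp.mem_support_iff] at this
        omega
      have : j ≤ n := by
        have := hterm j
        calc j = j * 1 := (Nat.mul_one j).symm
          _ ≤ j * (t.1 j + t.2.1 j + t.2.2 j) := Nat.mul_le_mul_left j hv
          _ ≤ n := hterm j
      rw [hL, Finset.mem_filter, Finset.mem_range]
      exact ⟨by omega, hjS⟩
    have hs1 : t.1.support ⊆ L := hsupL t.1 h1 (fun j hj => by
      simp only [Finset.mem_union]; left; left; exact hj)
    have hs2 : t.2.1.support ⊆ L := hsupL t.2.1 h2 (fun j hj => by
      simp only [Finset.mem_union]; left; right; exact hj)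
    have hs3 : t.2.2.support ⊆ L := hsupL t.2.2 h3 (fun j hj => by
      simp only [Finset.mem_union]; right; exact hj)
    refine ⟨hs1, hs2, hs3, h4, h5, h6, ?_, ?_⟩
    · rw [← h7]
      symm
      apply finsum_eq_sum_of_support_subset
      intro j hj
      rw [Function.mem_support] at hj
      have : t.1 j ≠ 0 ∨ t.2.1 j ≠ 0 ∨ t.2.2 j ≠ 0 := by
        by_contra hc; push_neg at hc
        rw [hc.1, hc.2.1, hc.2.2] at hj
        simp at hj
      rcases this with h | h | h
      · exact hs1 (Finsupp.mem_support_iff.mpr h)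
      · exact hs2 (Finsupp.mem_support_iff.mpr h)
      · exact hs3 (Finsupp.mem_support_iff.mpr h)
    · rw [← h8]
      symm
      apply finsum_eq_sum_of_support_subset
      intro j hj
      rw [Function.mem_support] at hj
      have : t.2.1 j ≠ 0 ∨ t.2.2 j ≠ 0 := by
        by_contra hc; push_neg at hc
        rw [hc.1, hc.2] at hj
        simp at hj
      rcases this with h | h
      · exact hs2 (Finsupp.mem_support_iff.mpr h)
      · exact hs3 (Finsupp.mem_support_iff.mpr h)
  · rintro ⟨h1, h2, h3, h4, h5, h6, h7, h8⟩
    have hLS : ∀ j ∈ L, j ∈ S := by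
      intro j hj
      rw [hL, Finset.mem_filter] at hj
      exact hj.2
    refine ⟨fun j hj => hLS j (h1 hj), fun j hj => hLS j (h2 hj), fun j hj => hLS j (h3 hj),
      h4, h5, h6, ?_, ?_⟩
    · rw [← h7]
      apply finsum_eq_sum_of_support_subset
      intro j hj
      rw [Function.mem_support] at hj
      have : t.1 j ≠ 0 ∨ t.2.1 j ≠ 0 ∨ t.2.2 j ≠ 0 := by
        by_contra hc; push_neg at hc
        rw [hc.1, hc.2.1, hc.2.2] at hj
        simp at hj
      rcases this with h | h | h
      · exact h1 (Finsupp.mem_support_iff.mpr h)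
      · exact h2 (Finsupp.mem_support_iff.mpr h)
      · exact h3 (Finsupp.mem_support_iff.mpr h)
    · rw [← h8]
      apply finsum_eq_sum_of_support_subset
      intro j hj
      rw [Function.mem_support] at hj
      have : t.2.1 j ≠ 0 ∨ t.2.2 j ≠ 0 := by
        by_contra hc; push_neg at hc
        rw [hc.1, hc.2] at hj
        simp at hj
      rcases this with h | h
      · exact h2 (Finsupp.mem_support_iff.mpr h)
      · exact h3 (Finsupp.mem_support_iff.mpr h)

/-- Part of Theorem 3.4 of the paper: `p_{ab,S}(m,n) ≥ p_{ab,S}(m+a,n)` for all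
integers `m, n ≥ 0`. -/
theorem pColored_unimodal (S : Set ℕ) (hS : ∀ s ∈ S, 0 < s)
    (a : ℕ) (ha : a = 1 ∨ a = 2) (b : ℕ∞) (m : ℤ) (hm : 0 ≤ m) (n : ℕ) :
    pColored S a b (m + a) n ≤ pColored S a b m n := by
  classical
  set L := (Finset.range (n+1)).filter (· ∈ S) with hLdef
  have hL : ∀ j ∈ L, 0 < j := by
    intro j hj
    rw [hLdef, Finset.mem_filter] at hj
    exact hS j hj.2
  rw [pColored_eq_cnt S hS a b (m + a) n, pColored_eq_cnt S hS a b m n]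
  have hsym := cnt_symStep ha b L hL n
  have ha1 : (1 : ℤ) ≤ a := by rcases ha with h | h <;> simp [h]
  exact symStep_mono ha hsym (by linarith) (by linarith) ⟨1, by ring⟩
end

section
/- Let S be a set of positive integers. For integers n ≥ 0 and m ∈ ℤ, let d_S(m,n) be the number of pairs (A,B) of finite subsets of S such that Σ_{a∈A} a + Σ_{b∈B} b = n and |A| − |B| = m. Then for all integers m, n ≥ 0 with d_S(m,n) ≠ 0, one has d_S(m,n) > d_S(m+2,n). (Theorem 3.6 of the paper.) -/
/-- `dCount S m n`: the number of pairs `(A, B)` of finite subsets of `S` such that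
`Σ_{a ∈ A} a + Σ_{b ∈ B} b = n` and `|A| - |B| = m`. -/
noncomputable def dCount (S : Set ℕ) (m : ℤ) (n : ℕ) : ℕ :=
  Nat.card {t : Finset ℕ × Finset ℕ //
    (↑t.1 ⊆ S) ∧ (↑t.2 ⊆ S) ∧
    (∑ a ∈ t.1, a) + (∑ b ∈ t.2, b) = n ∧
    (t.1.card : ℤ) - (t.2.card : ℤ) = m}

open Finset

open scoped Classical in
/-- Finset version of the collection counted by `dCount`. -/
noncomputable def Dfin (S : Set ℕ) (m : ℤ) (n : ℕ) : Finset (Finset ℕ × Finset ℕ) :=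
  ((Finset.range (n+1)).powerset ×ˢ (Finset.range (n+1)).powerset).filter
    (fun t => (↑t.1 ⊆ S) ∧ (↑t.2 ⊆ S) ∧
      ((∑ a ∈ t.1, a) + (∑ b ∈ t.2, b) = n) ∧
      ((t.1.card : ℤ) - (t.2.card : ℤ) = m))

lemma mem_Dfin {S : Set ℕ} {m : ℤ} {n : ℕ} {t : Finset ℕ × Finset ℕ} :
    t ∈ Dfin S m n ↔ (↑t.1 ⊆ S) ∧ (↑t.2 ⊆ S) ∧
      ((∑ a ∈ t.1, a) + (∑ b ∈ t.2, b) = n) ∧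
      ((t.1.card : ℤ) - (t.2.card : ℤ) = m) := by
  classical
  constructor
  · intro h
    exact (Finset.mem_filter.mp h).2
  · intro h
    obtain ⟨h1, h2, h3, h4⟩ := h
    refine Finset.mem_filter.mpr ⟨Finset.mem_product.mpr ⟨?_, ?_⟩, h1, h2, h3, h4⟩
    · refine Finset.mem_powerset.mpr fun a ha => Finset.mem_range.mpr (Nat.lt_succ_of_le ?_)
      calc a ≤ ∑ x ∈ t.1, x := Finset.single_le_sum (fun i _ => Nat.zero_le i) ha
        _ ≤ n := by omega
    · refine Finset.mem_powerset.mpr fun a ha => Finset.mem_range.mpr (Nat.lt_succ_of_le ?_)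
      calc a ≤ ∑ x ∈ t.2, x := Finset.single_le_sum (fun i _ => Nat.zero_le i) ha
        _ ≤ n := by omega

lemma dCount_eq (S : Set ℕ) (m : ℤ) (n : ℕ) : dCount S m n = (Dfin S m n).card := by
  rw [dCount, ← Nat.card_eq_finsetCard]
  exact Nat.card_congr (Equiv.subtypeEquivRight fun t => mem_Dfin.symm)

/-- The key of a pair: intersection and union. -/
def keyf (t : Finset ℕ × Finset ℕ) : Finset ℕ × Finset ℕ := (t.1 ∩ t.2, t.1 ∪ t.2)

/-- Counting the binomial-type fibers. -/
lemma cnt_card (T : Finset ℕ) (μ : ℕ) (k : ℕ) (hk : T.card + μ = 2 * k) :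
    (T.powerset.filter (fun P => 2 * P.card = T.card + μ)).card = T.card.choose k := by
  classical
  have : T.powerset.filter (fun P => 2 * P.card = T.card + μ)
      = T.powerset.filter (fun P => P.card = k) := by
    apply Finset.filter_congr
    intro P _
    constructor <;> intro h <;> omega
  rw [this, ← Finset.powersetCard_eq_filter, Finset.card_powersetCard]

lemma cnt_le (T : Finset ℕ) (μ : ℕ) :
    (T.powerset.filter (fun P => 2 * P.card = T.card + (μ + 2))).card
      ≤ (T.powerset.filter (fun P => 2 * P.card = T.card + μ)).card := by
  classical
  by_cases h2 : 2 ∣ T.card + μ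
  · obtain ⟨k, hk⟩ := h2
    rw [cnt_card T μ k (by omega), cnt_card T (μ+2) (k+1) (by omega)]
    have hid := Nat.choose_succ_right_eq T.card k
    have htk : T.card - k ≤ k + 1 := by omega
    have := Nat.mul_le_mul_left (T.card.choose k) htk
    refine Nat.le_of_mul_le_mul_right ?_ (Nat.succ_pos k)
    calc T.card.choose (k+1) * (k+1) = T.card.choose k * (T.card - k) := hid
      _ ≤ T.card.choose k * (k+1) := this
  · have e : ∀ ν : ℕ, 2 ∣ T.card + ν → False → True := fun _ _ _ => trivial
    have h0 : T.powerset.filter (fun P => 2 * P.card = T.card + (μ + 2)) = ∅ := by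
      refine Finset.filter_eq_empty_iff.mpr fun P _ => ?_
      intro h
      exact h2 ⟨P.card - 1, by omega⟩
    simp [h0]

lemma cnt_lt (T : Finset ℕ) (μ : ℕ)
    (h : (T.powerset.filter (fun P => 2 * P.card = T.card + μ)).card ≠ 0) :
    (T.powerset.filter (fun P => 2 * P.card = T.card + (μ + 2))).card
      < (T.powerset.filter (fun P => 2 * P.card = T.card + μ)).card := by
  classical
  by_cases h2 : 2 ∣ T.card + μ
  · obtain ⟨k, hk⟩ := h2
    rw [cnt_card T μ k (by omega)] at h ⊢
    rw [cnt_card T (μ+2) (k+1) (by omega)]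
    have hid := Nat.choose_succ_right_eq T.card k
    have hpos : 0 < T.card.choose k := Nat.pos_of_ne_zero h
    have htk : T.card - k < k + 1 := by omega
    refine lt_of_mul_lt_mul_right ?_ (Nat.zero_le (k+1))
    calc T.card.choose (k+1) * (k+1) = T.card.choose k * (T.card - k) := hid
      _ < T.card.choose k * (k+1) := mul_lt_mul_of_pos_left htk hpos
  · exfalso
    apply h
    rw [Finset.card_eq_zero]
    refine Finset.filter_eq_empty_iff.mpr fun P _ => ?_
    intro hP
    exact h2 ⟨P.card, by omega⟩

/-- Any member of `Dfin` has a "good" key. -/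
lemma key_good {S : Set ℕ} {m : ℤ} {n : ℕ} {t : Finset ℕ × Finset ℕ}
    (ht : t ∈ Dfin S m n) :
    (t.1 ∩ t.2) ⊆ (t.1 ∪ t.2) ∧ (↑(t.1 ∪ t.2) : Set ℕ) ⊆ S ∧
      (∑ x ∈ t.1 ∩ t.2, x) + (∑ x ∈ t.1 ∪ t.2, x) = n := by
  classical
  obtain ⟨h1, h2, h3, _⟩ := mem_Dfin.mp ht
  refine ⟨Finset.inter_subset_union, ?_, ?_⟩
  · rw [Finset.coe_union]
    exact Set.union_subset h1 h2
  · have := Finset.sum_union_inter (s₁ := t.1) (s₂ := t.2) (f := id)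
    simp only [id] at this
    omega

/-- The cardinality of a fiber of the key map over a good key. -/
lemma fiber_card (S : Set ℕ) (ν : ℤ) (n : ℕ) (I U : Finset ℕ)
    (hIU : I ⊆ U) (hUS : (↑U : Set ℕ) ⊆ S)
    (hsum : (∑ x ∈ I, x) + (∑ x ∈ U, x) = n) :
    ((Dfin S ν n).filter (fun t => keyf t = (I, U))).card
      = ((U \ I).powerset.filter
          (fun P => 2 * (P.card : ℤ) - ((U \ I).card : ℤ) = ν)).card := by
  classical
  symm
  refine Finset.card_bij (fun P _ => (I ∪ P, U \ P)) ?_ ?_ ?_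
  · -- maps into the fiber
    rintro P hP
    rw [Finset.mem_filter, Finset.mem_powerset] at hP
    obtain ⟨hPT, hcond⟩ := hP
    have hPU : P ⊆ U := hPT.trans sdiff_subset
    have hPI : Disjoint I P := (Finset.sdiff_disjoint.mono_left hPT).symm
    have hcardIP : (I ∪ P).card = I.card + P.card := Finset.card_union_of_disjoint hPI
    have hcardUP : (U \ P).card + P.card = U.card := Finset.card_sdiff_add_card_eq_card hPU
    have hcardT : (U \ I).card + I.card = U.card := Finset.card_sdiff_add_card_eq_card hIU
    have hxP : ∀ x, x ∈ P → x ∈ U ∧ x ∉ I := fun x hx => Finset.mem_sdiff.mp (hPT hx)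
    refine Finset.mem_filter.mpr ⟨mem_Dfin.mpr ⟨?_, ?_, ?_, ?_⟩, ?_⟩
    · rw [Finset.coe_union]
      exact Set.union_subset ((Finset.coe_subset.mpr hIU).trans hUS)
        ((Finset.coe_subset.mpr hPU).trans hUS)
    · exact (Finset.coe_subset.mpr sdiff_subset).trans hUS
    · show (∑ a ∈ I ∪ P, a) + (∑ b ∈ U \ P, b) = n
      have e1 : ∑ x ∈ I ∪ P, x = (∑ x ∈ I, x) + ∑ x ∈ P, x :=
        Finset.sum_union hPI
      have e2 : (∑ x ∈ U \ P, x) + ∑ x ∈ P, x = ∑ x ∈ U, x :=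
        Finset.sum_sdiff hPU
      omega
    · show ((I ∪ P).card : ℤ) - ((U \ P).card : ℤ) = ν
      omega
    · have e1 : (I ∪ P) ∩ (U \ P) = I := by
        ext x
        have h1 := hxP x
        have h2 : x ∈ I → x ∈ U := fun h => hIU h
        simp only [Finset.mem_inter, Finset.mem_union, Finset.mem_sdiff]
        tauto
      have e2 : (I ∪ P) ∪ (U \ P) = U := by
        ext x
        have h1 := hxP x
        have h2 : x ∈ I → x ∈ U := fun h => hIU h
        simp only [Finset.mem_union, Finset.mem_sdiff]
        tauto
      simp [keyf, e1, e2]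
  · -- injectivity
    intro P1 hP1 P2 hP2 heq
    rw [Finset.mem_filter, Finset.mem_powerset] at hP1 hP2
    have h1 : P1 ⊆ U := hP1.1.trans sdiff_subset
    have h2 : P2 ⊆ U := hP2.1.trans sdiff_subset
    have := congrArg Prod.snd heq
    simp only at this
    calc P1 = U \ (U \ P1) := (Finset.sdiff_sdiff_eq_self h1).symm
      _ = U \ (U \ P2) := by rw [this]
      _ = P2 := Finset.sdiff_sdiff_eq_self h2

  · -- surjectivity
    rintro t ht
    rw [Finset.mem_filter] at ht
    obtain ⟨htD, hkey⟩ := ht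
    obtain ⟨hS1, hS2, hsum', hcard'⟩ := mem_Dfin.mp htD
    have hI : t.1 ∩ t.2 = I := congrArg Prod.fst hkey
    have hU : t.1 ∪ t.2 = U := congrArg Prod.snd hkey
    refine ⟨t.1 \ t.2, ?_, ?_⟩
    · rw [Finset.mem_filter, Finset.mem_powerset]
      constructor
      · intro x hx
        rw [Finset.mem_sdiff] at hx ⊢
        rw [← hI, ← hU]
        simp only [Finset.mem_union, Finset.mem_inter]
        tauto
      · have e1 : (t.1 \ t.2).card + (t.1 ∩ t.2).card = t.1.card :=
          Finset.card_sdiff_add_card_inter t.1 t.2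
        have e2 : (t.1 ∪ t.2).card + (t.1 ∩ t.2).card = t.1.card + t.2.card :=
          Finset.card_union_add_card_inter t.1 t.2
        have e3 : (U \ I).card + I.card = U.card := Finset.card_sdiff_add_card_eq_card hIU
        have hIc : (t.1 ∩ t.2).card = I.card := by rw [hI]
        have hUc : (t.1 ∪ t.2).card = U.card := by rw [hU]
        omega
    · have e1 : I ∪ (t.1 \ t.2) = t.1 := by
        rw [← hI]
        ext x
        simp only [Finset.mem_union, Finset.mem_inter, Finset.mem_sdiff]
        tauto
      have e2 : U \ (t.1 \ t.2) = t.2 := by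
        rw [← hU]
        ext x
        simp only [Finset.mem_union, Finset.mem_sdiff]
        by_cases hx2 : x ∈ t.2 <;> simp [hx2] <;> tauto
      show (I ∪ (t.1 \ t.2), U \ (t.1 \ t.2)) = t
      rw [e1, e2]

/-- Theorem 3.6 of the paper: for all integers `m, n ≥ 0` with `d_S(m,n) ≠ 0`,
`d_S(m,n) > d_S(m+2,n)`. -/
theorem dCount_strictly_unimodal (S : Set ℕ) (hS : ∀ s ∈ S, 0 < s)
    (m : ℤ) (hm : 0 ≤ m) (n : ℕ) (hne : dCount S m n ≠ 0) :
    dCount S (m + 2) n < dCount S m n := by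
  classical
  rw [dCount_eq] at hne ⊢
  rw [dCount_eq]
  set μ := m.toNat with hμ
  have hmμ : m = (μ : ℤ) := (Int.toNat_of_nonneg hm).symm
  -- the common key set
  set K := (Dfin S m n).image keyf ∪ (Dfin S (m+2) n).image keyf with hK
  have hfib1 : (Dfin S m n).card
      = ∑ k ∈ K, ((Dfin S m n).filter (fun t => keyf t = k)).card :=
    Finset.card_eq_sum_card_fiberwise fun t ht =>
      Finset.mem_union.mpr (Or.inl (Finset.mem_image_of_mem _ ht))
  have hfib2 : (Dfin S (m+2) n).card
      = ∑ k ∈ K, ((Dfin S (m+2) n).filter (fun t => keyf t = k)).card :=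
    Finset.card_eq_sum_card_fiberwise fun t ht =>
      Finset.mem_union.mpr (Or.inr (Finset.mem_image_of_mem _ ht))
  rw [hfib1, hfib2]
  -- goodness of keys in K
  have hgood : ∀ k ∈ K, k.1 ⊆ k.2 ∧ (↑k.2 : Set ℕ) ⊆ S ∧
      (∑ x ∈ k.1, x) + (∑ x ∈ k.2, x) = n := by
    intro k hk
    rcases Finset.mem_union.mp hk with h | h <;>
    · obtain ⟨t, ht, rfl⟩ := Finset.mem_image.mp h
      exact key_good ht
  -- rewrite fibers via fiber_card and convert the integer condition to ℕ
  have hconv : ∀ (T : Finset ℕ) (ν : ℕ),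
      T.powerset.filter (fun P => 2 * (P.card : ℤ) - (T.card : ℤ) = (ν : ℤ))
        = T.powerset.filter (fun P => 2 * P.card = T.card + ν) := by
    intro T ν
    apply Finset.filter_congr
    intro P _
    constructor <;> intro h <;> omega
  have hfc : ∀ k ∈ K, ∀ ν : ℕ,
      ((Dfin S (ν : ℤ) n).filter (fun t => keyf t = k)).card
        = ((k.2 \ k.1).powerset.filter
            (fun P => 2 * P.card = (k.2 \ k.1).card + ν)).card := by
    intro k hk ν
    obtain ⟨h1, h2, h3⟩ := hgood k hk
    rw [fiber_card S (ν : ℤ) n k.1 k.2 h1 h2 h3, hconv]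
  have hm2' : m + 2 = ((μ + 2 : ℕ) : ℤ) := by omega
  apply Finset.sum_lt_sum
  · intro k hk
    rw [hm2', hfc k hk (μ + 2), hmμ, hfc k hk μ]
    exact cnt_le _ μ
  · obtain ⟨t0, ht0⟩ := Finset.card_ne_zero.mp hne
    refine ⟨keyf t0, Finset.mem_union.mpr (Or.inl (Finset.mem_image_of_mem _ ht0)), ?_⟩
    have hkK : keyf t0 ∈ K := Finset.mem_union.mpr (Or.inl (Finset.mem_image_of_mem _ ht0))
    rw [hm2', hfc _ hkK (μ + 2), hmμ, hfc _ hkK μ]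
    apply cnt_lt
    rw [← hfc _ hkK μ, ← hmμ]
    rw [Finset.card_ne_zero]
    exact ⟨t0, Finset.mem_filter.mpr ⟨ht0, rfl⟩⟩
end

section
/- Let k ≥ 2 be an integer. For integers n ≥ 0 and m ∈ ℤ, define N_k(m,n) as the number of tuples (n₁ ≤ n₂ ≤ ⋯ ≤ n_{k−1}; μ₂, …, μ_{k−1}; α, β) where n₁, …, n_{k−1} are nonnegative integers, each μ_i (2 ≤ i ≤ k−1) is a partition all of whose parts are at most n_i − n_{i−1}, and α, β are partitions all of whose parts are at most n₁, subject to n₁² + n₂² + ⋯ + n_{k−1}² + |μ₂| + ⋯ + |μ_{k−1}| + |α| + |β| = n and (number of parts of α) − (number of parts of β) = m. Then N_k(m,n) ≥ N_k(m+2,n) for all integers m, n ≥ 0. (Theorem 4.1 of the paper; for k = 2 this is the Chan–Mao parity unimodality of Dyson's rank.) -/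
/-- A Garvan `k`-rank tuple of size `n` and rank `m`: nonnegative integers
`n₁ ≤ n₂ ≤ ⋯ ≤ n_{k-1}` (encoded by `ns : ℕ → ℕ`, supported on `1, …, k-1`),
partitions `μ₂, …, μ_{k-1}` (encoded as multisets of positive integers, `μ i` having all
parts at most `n_i - n_{i-1}`, and `μ i` empty outside `2 ≤ i ≤ k-1`), and partitions
`α, β` with all parts at most `n₁`, subject to
`n₁² + ⋯ + n_{k-1}² + |μ₂| + ⋯ + |μ_{k-1}| + |α| + |β| = n` and
`(number of parts of α) - (number of parts of β) = m`. -/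
def IsGarvanTuple (k : ℕ) (m : ℤ) (n : ℕ)
    (t : (ℕ → ℕ) × (ℕ → Multiset ℕ) × Multiset ℕ × Multiset ℕ) : Prop :=
  (∀ i : ℕ, 1 ≤ i → i < k - 1 → t.1 i ≤ t.1 (i + 1)) ∧
  (∀ i : ℕ, i = 0 ∨ k - 1 < i → t.1 i = 0) ∧
  (∀ i : ℕ, i < 2 ∨ k - 1 < i → t.2.1 i = 0) ∧
  (∀ i : ℕ, 2 ≤ i → i ≤ k - 1 → ∀ x ∈ t.2.1 i, 0 < x ∧ x ≤ t.1 i - t.1 (i - 1)) ∧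
  (∀ x ∈ t.2.2.1, 0 < x ∧ x ≤ t.1 1) ∧
  (∀ x ∈ t.2.2.2, 0 < x ∧ x ≤ t.1 1) ∧
  ((∑ i ∈ Finset.Icc 1 (k - 1), (t.1 i) ^ 2) +
    (∑ i ∈ Finset.Icc 2 (k - 1), (t.2.1 i).sum) + t.2.2.1.sum + t.2.2.2.sum = n) ∧
  ((Multiset.card t.2.2.1 : ℤ) - (Multiset.card t.2.2.2 : ℤ) = m)

/-- `Nk k m n` is Garvan's `k`-rank count: the number of partitions of `n` into at least
`k-1` successive Durfee squares with `k`-rank equal to `m`, in its combinatorial form. -/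
noncomputable def Nk (k : ℕ) (m : ℤ) (n : ℕ) : ℕ :=
  Nat.card {t : (ℕ → ℕ) × (ℕ → Multiset ℕ) × Multiset ℕ × Multiset ℕ //
    IsGarvanTuple k m n t}



open Multiset Finset

/-- The set of submultisets `α ≤ A` with `2|α| = m + |A|`, i.e. pairs `(α, A - α)` of
rank `m`. -/
def QSet (A : Multiset ℕ) (m : ℤ) : Finset (Multiset ℕ) :=
  A.powerset.toFinset.filter (fun α => 2 * (Multiset.card α : ℤ) = m + Multiset.card A)

lemma mem_QSet {A α : Multiset ℕ} {m : ℤ} :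
    α ∈ QSet A m ↔ α ≤ A ∧ 2 * (Multiset.card α : ℤ) = m + Multiset.card A := by
  simp [QSet, Multiset.mem_toFinset, Multiset.mem_powerset]

lemma QSet_sym (A : Multiset ℕ) (m : ℤ) : (QSet A m).card = (QSet A (-m)).card := by
  apply Finset.card_nbij' (i := fun α => A - α) (j := fun α => A - α)
  · intro α hα
    obtain ⟨h1, h2⟩ := mem_QSet.1 hα
    have h3 : α + (A - α) = A := add_tsub_cancel_of_le h1
    have h4 : Multiset.card α + Multiset.card (A - α) = Multiset.card A := by
      rw [← Multiset.card_add, h3]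
    refine mem_QSet.2 ⟨tsub_le_self, ?_⟩
    push_cast at h4 ⊢
    omega
  · intro α hα
    obtain ⟨h1, h2⟩ := mem_QSet.1 hα
    have h3 : α + (A - α) = A := add_tsub_cancel_of_le h1
    have h4 : Multiset.card α + Multiset.card (A - α) = Multiset.card A := by
      rw [← Multiset.card_add, h3]
    refine mem_QSet.2 ⟨tsub_le_self, ?_⟩
    push_cast at h4 ⊢
    omega
  · intro α hα
    exact tsub_tsub_cancel_of_le (mem_QSet.1 hα).1
  · intro α hα
    exact tsub_tsub_cancel_of_le (mem_QSet.1 hα).1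

lemma filter_ne_add_replicate (s : Multiset ℕ) (x : ℕ) :
    s.filter (· ≠ x) + Multiset.replicate (s.count x) x = s := by
  conv_rhs => rw [← Multiset.filter_add_not (· ≠ x) s]
  congr 1
  rw [← Multiset.filter_eq']
  apply Multiset.filter_congr
  intro y _
  simp [not_not, eq_comm]

lemma QSet_congr (A : Multiset ℕ) {a b : ℤ} (h : a = b) : (QSet A a).card = (QSet A b).card := by
  rw [h]

lemma fiber_card_s13 (A : Multiset ℕ) (x : ℕ) (m : ℤ) (e : ℕ) (he : e ≤ A.count x) :
    ((QSet A m).filter (fun α => α.count x = e)).card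
      = (QSet (A.filter (· ≠ x)) (m + A.count x - 2 * e)).card := by
  have hcA : Multiset.card (A.filter (· ≠ x)) + A.count x = Multiset.card A := by
    conv_rhs => rw [← filter_ne_add_replicate A x]
    simp
  have hA'x : (A.filter (· ≠ x)).count x = 0 := Multiset.count_filter_of_neg (by simp)
  apply Finset.card_nbij' (i := fun α => α.filter (· ≠ x))
    (j := fun α₀ => α₀ + Multiset.replicate e x)
  · intro α hα
    obtain ⟨hQ, hcnt⟩ := Finset.mem_filter.1 hα
    obtain ⟨hle, hc⟩ := mem_QSet.1 hQ
    have hcα : Multiset.card (α.filter (· ≠ x)) + e = Multiset.card α := by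
      conv_rhs => rw [← filter_ne_add_replicate α x]
      simp [hcnt]
    refine mem_QSet.2 ⟨Multiset.filter_le_filter _ hle, ?_⟩
    push_cast at hc hcα hcA ⊢
    omega
  · intro α₀ hα₀
    obtain ⟨hle, hc⟩ := mem_QSet.1 hα₀
    have hx0 : α₀.count x = 0 := Nat.le_zero.1 (hA'x ▸ Multiset.count_le_of_le x hle)
    refine Finset.mem_filter.2 ⟨mem_QSet.2 ⟨?_, ?_⟩, ?_⟩
    · rw [Multiset.le_iff_count]
      intro y
      rw [Multiset.count_add, Multiset.count_replicate]
      by_cases hy : y = x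
      · subst hy
        rw [hx0, if_pos rfl]
        omega
      · rw [if_neg fun h => hy h.symm, add_zero]
        calc α₀.count y ≤ (A.filter (· ≠ x)).count y := Multiset.count_le_of_le y hle
          _ ≤ A.count y := Multiset.count_le_of_le y (Multiset.filter_le _ _)
    · rw [Multiset.card_add, Multiset.card_replicate]
      push_cast at hc hcA ⊢
      omega
    · rw [Multiset.count_add, Multiset.count_replicate, hx0]
      simp
  · intro α hα
    obtain ⟨_, hcnt⟩ := Finset.mem_filter.1 hα
    rw [← hcnt]
    exact filter_ne_add_replicate α x
  · intro α₀ hα₀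
    obtain ⟨hle, _⟩ := mem_QSet.1 hα₀
    have hx0 : α₀.count x = 0 := Nat.le_zero.1 (hA'x ▸ Multiset.count_le_of_le x hle)
    dsimp only
    rw [Multiset.filter_add]
    have h1 : α₀.filter (· ≠ x) = α₀ :=
      Multiset.filter_eq_self.2 (fun a ha => by
        intro h; subst h; exact absurd (Multiset.count_pos.2 ha) (by omega))
    have h2 : (Multiset.replicate e x).filter (· ≠ x) = 0 :=
      Multiset.filter_eq_nil.2 (fun a ha => by
        have := Multiset.eq_of_mem_replicate ha; simp [this])
    rw [h1, h2, add_zero]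

lemma KI (A : Multiset ℕ) (x : ℕ) (m : ℤ) :
    (QSet A m).card = ∑ e ∈ Finset.range (A.count x + 1),
      (QSet (A.filter (· ≠ x)) (m + A.count x - 2 * e)).card := by
  rw [Finset.card_eq_sum_card_fiberwise (f := fun α => α.count x)
    (t := Finset.range (A.count x + 1))
    (fun α hα => Finset.mem_range.2 (Nat.lt_succ_of_le
      (Multiset.count_le_of_le x (mem_QSet.1 hα).1)))]
  exact Finset.sum_congr rfl fun e he =>
    fiber_card_s13 A x m e (Nat.lt_succ_iff.1 (Finset.mem_range.1 he))

lemma QSet_mono : ∀ (A : Multiset ℕ) (m : ℤ), 0 ≤ m →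
    (QSet A (m + 2)).card ≤ (QSet A m).card := by
  intro A
  induction A using Multiset.strongInductionOn with
  | _ A ih =>
  intro m hm
  by_cases hA : A = 0
  · subst hA
    have : QSet 0 (m + 2) = ∅ := by
      ext α
      simp only [mem_QSet, Finset.notMem_empty, iff_false, not_and]
      intro h1
      have : α = 0 := Multiset.le_zero.1 h1
      subst this
      simp only [Multiset.card_zero, Nat.cast_zero, mul_zero, add_zero]
      omega
    simp [this]
  · obtain ⟨x, hx⟩ := Multiset.exists_mem_of_ne_zero hA
    set c := A.count x with hc
    set A' := A.filter (· ≠ x) with hA'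
    have hlt : A' < A := by
      refine lt_of_le_of_ne (Multiset.filter_le _ _) ?_
      intro h
      have h0 : A'.count x = 0 := Multiset.count_filter_of_neg (by simp)
      rw [h] at h0
      exact absurd (Multiset.count_pos.2 hx) (by omega)
    have ihA' : ∀ m' : ℤ, 0 ≤ m' → (QSet A' (m' + 2)).card ≤ (QSet A' m').card :=
      fun m' => ih A' hlt m'
    have hchain : ∀ (a : ℤ) (j : ℕ), 0 ≤ a →
        (QSet A' (a + 2 * j)).card ≤ (QSet A' a).card := by
      intro a j ha
      induction j with
      | zero => simp
      | succ j hj =>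
          have h1 : a + 2 * ((j + 1 : ℕ) : ℤ) = (a + 2 * j) + 2 := by push_cast; ring
          rw [QSet_congr A' h1]
          exact le_trans (ihA' (a + 2 * j) (by omega)) hj
    have h1 := KI A x m
    have h2 := KI A x (m + 2)
    simp only [← hA', ← hc] at h1 h2
    rw [Finset.sum_range_succ] at h1
    rw [Finset.sum_range_succ'] at h2
    rw [Finset.sum_congr rfl (fun e _ => QSet_congr A'
      (show m + 2 + (c : ℤ) - 2 * ((e + 1 : ℕ) : ℤ) = m + c - 2 * e by push_cast; ring))] at h2
    have key : (QSet A' (m + 2 + c - 2 * ((0 : ℕ) : ℤ))).card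
        ≤ (QSet A' (m + c - 2 * ((c : ℕ) : ℤ))).card := by
      by_cases hcm : (c : ℤ) ≤ m
      · have e1 : m + 2 + (c : ℤ) - 2 * ((0 : ℕ) : ℤ) = (m - c) + 2 * ((c + 1 : ℕ) : ℤ) := by
          push_cast; ring
        have e2 : m + (c : ℤ) - 2 * ((c : ℕ) : ℤ) = m - c := by push_cast; ring
        rw [QSet_congr A' e1, QSet_congr A' e2]
        exact hchain (m - c) (c + 1) (by omega)
      · have e2 : m + (c : ℤ) - 2 * ((c : ℕ) : ℤ) = m - c := by push_cast; ring
        rw [QSet_congr A' e2, QSet_sym A' (m - c)]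
        have e3 : -(m - (c : ℤ)) = c - m := by ring
        rw [QSet_congr A' e3]
        have e1 : m + 2 + (c : ℤ) - 2 * ((0 : ℕ) : ℤ)
            = (c - m) + 2 * (((m + 1).toNat : ℕ) : ℤ) := by
          push_cast
          rw [Int.toNat_of_nonneg (by omega)]
          ring
        rw [QSet_congr A' e1]
        exact hchain (c - m) (m + 1).toNat (by omega)
    omega

lemma mcard_le_sum {s : Multiset ℕ} (h : ∀ x ∈ s, 0 < x) : Multiset.card s ≤ s.sum := by
  induction s using Multiset.induction with
  | empty => simp
  | cons a s ih =>
    simp only [Multiset.card_cons, Multiset.sum_cons]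
    have h1 := h a (Multiset.mem_cons_self a s)
    have h2 := ih (fun x hx => h x (Multiset.mem_cons_of_mem hx))
    omega

lemma le_bigT {n : ℕ} {s : Multiset ℕ} (hp : ∀ x ∈ s, 0 < x ∧ x ≤ n) (hs : s.sum ≤ n) :
    s ≤ n • (Finset.Icc 1 n).val := by
  rw [Multiset.le_iff_count]
  intro x
  by_cases hx : x ∈ s
  · obtain ⟨hx1, hx2⟩ := hp x hx
    rw [Multiset.count_nsmul]
    have hmem : x ∈ Finset.Icc 1 n := Finset.mem_Icc.2 ⟨hx1, hx2⟩
    rw [Multiset.count_eq_one_of_mem (Finset.Icc 1 n).nodup hmem, mul_one]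
    calc Multiset.count x s ≤ Multiset.card s := Multiset.count_le_card _ _
      _ ≤ s.sum := mcard_le_sum (fun y hy => (hp y hy).1)
      _ ≤ n := hs
  · simp [Multiset.count_eq_zero_of_notMem hx]

lemma garvan_finite (k : ℕ) (hk : 2 ≤ k) (m : ℤ) (n : ℕ) :
    Finite {t : (ℕ → ℕ) × (ℕ → Multiset ℕ) × Multiset ℕ × Multiset ℕ //
      IsGarvanTuple k m n t} := by
  classical
  set T : Multiset ℕ := n • (Finset.Icc 1 n).val with hT
  set P : Finset (Multiset ℕ) := T.powerset.toFinset with hP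
  -- bounds for valid tuples
  have hns : ∀ t, IsGarvanTuple k m n t → ∀ i, t.1 i ≤ n := by
    intro t ht i
    obtain ⟨h1, h2, h3, h4, h5, h6, h7, h8⟩ := ht
    by_cases hi : 1 ≤ i ∧ i ≤ k - 1
    · have hsq : t.1 i ^ 2 ≤ ∑ j ∈ Finset.Icc 1 (k - 1), (t.1 j) ^ 2 :=
        Finset.single_le_sum (f := fun j => (t.1 j) ^ 2) (fun _ _ => Nat.zero_le _)
          (Finset.mem_Icc.2 hi)
      have : t.1 i ^ 2 ≤ n := le_trans hsq (by omega)
      have h0 : t.1 i ≤ t.1 i ^ 2 := Nat.le_self_pow two_ne_zero _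
      omega
    · rw [h2 i (by omega)]
      exact Nat.zero_le _
  have hsums : ∀ t, IsGarvanTuple k m n t →
      t.2.2.1 ≤ T ∧ t.2.2.2 ≤ T ∧ ∀ i, t.2.1 i ≤ T := by
    intro t ht
    have hn1 := hns t ht 1
    obtain ⟨h1, h2, h3, h4, h5, h6, h7, h8⟩ := ht
    refine ⟨le_bigT (fun x hx => ⟨(h5 x hx).1, le_trans (h5 x hx).2 hn1⟩) (by omega),
      le_bigT (fun x hx => ⟨(h6 x hx).1, le_trans (h6 x hx).2 hn1⟩) (by omega), ?_⟩
    intro i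
    by_cases hi : 2 ≤ i ∧ i ≤ k - 1
    · have hμsum : (t.2.1 i).sum ≤ ∑ j ∈ Finset.Icc 2 (k - 1), (t.2.1 j).sum :=
        Finset.single_le_sum (f := fun j => (t.2.1 j).sum) (fun _ _ => Nat.zero_le _)
          (Finset.mem_Icc.2 hi)
      refine le_bigT (fun x hx => ⟨(h4 i hi.1 hi.2 x hx).1, ?_⟩) (by omega)
      have := (h4 i hi.1 hi.2 x hx).2
      have h0 := hns t ⟨h1, h2, h3, h4, h5, h6, h7, h8⟩ i
      omega
    · rw [h3 i (by omega)]
      exact Multiset.zero_le _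
  have hmemP : ∀ s : Multiset ℕ, s ≤ T → s ∈ P := by
    intro s hs
    rw [hP, Multiset.mem_toFinset, Multiset.mem_powerset]
    exact hs
  refine Finite.of_injective (β := (Fin (k + 1) → Fin (n + 1)) × (Fin k → {s // s ∈ P}) ×
    {s // s ∈ P} × {s // s ∈ P})
    (fun t => (fun i => ⟨t.1.1 i, Nat.lt_succ_of_le (hns t.1 t.2 i)⟩,
      fun i => ⟨t.1.2.1 i, hmemP _ ((hsums t.1 t.2).2.2 i)⟩,
      ⟨t.1.2.2.1, hmemP _ (hsums t.1 t.2).1⟩,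
      ⟨t.1.2.2.2, hmemP _ (hsums t.1 t.2).2.1⟩)) ?_
  intro t1 t2 h
  have hf := congrArg Prod.fst h
  have hg := congrArg (fun p => p.2.1) h
  have ha := congrArg (fun p => p.2.2.1) h
  have hb := congrArg (fun p => p.2.2.2) h
  simp only at hf hg ha hb
  apply Subtype.ext
  have e1 : t1.1.1 = t2.1.1 := by
    funext i
    by_cases hi : i ≤ k
    · have := congrFun hf ⟨i, by omega⟩
      exact congrArg Fin.val (by exact this)
    · rw [t1.2.2.1 i (by omega), t2.2.2.1 i (by omega)]
  have e2 : t1.1.2.1 = t2.1.2.1 := by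
    funext i
    by_cases hi : i < k
    · have := congrFun hg ⟨i, hi⟩
      exact congrArg Subtype.val this
    · rw [t1.2.2.2.1 i (by omega), t2.2.2.2.1 i (by omega)]
  have e3 : t1.1.2.2.1 = t2.1.2.2.1 := congrArg Subtype.val ha
  have e4 : t1.1.2.2.2 = t2.1.2.2.2 := congrArg Subtype.val hb
  exact Prod.ext e1 (Prod.ext e2 (Prod.ext e3 e4))

lemma Phi_cast {m : ℤ}
    (Φ : ∀ A : Multiset ℕ, {α // α ∈ QSet A (m + 2)} ↪ {α // α ∈ QSet A m})
    {A B : Multiset ℕ} (h : A = B) (a : Multiset ℕ) (ha : a ∈ QSet A (m + 2)) :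
    ((Φ A ⟨a, ha⟩ : Multiset ℕ)) = (Φ B ⟨a, h ▸ ha⟩ : Multiset ℕ) := by
  subst h
  rfl

lemma garvan_target {k n : ℕ} {m : ℤ} {ns : ℕ → ℕ} {μ : ℕ → Multiset ℕ}
    {α β α' : Multiset ℕ}
    (ht : IsGarvanTuple k (m + 2) n (ns, μ, α, β)) (hα' : α' ∈ QSet (α + β) m) :
    IsGarvanTuple k m n (ns, μ, α', (α + β) - α') := by
  obtain ⟨h1, h2, h3, h4, h5, h6, h7, h8⟩ := ht
  obtain ⟨hle, hcard⟩ := mem_QSet.1 hα'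
  have hsum : α' + ((α + β) - α') = α + β := add_tsub_cancel_of_le hle
  have hcc : Multiset.card α' + Multiset.card ((α + β) - α')
      = Multiset.card α + Multiset.card β := by
    rw [← Multiset.card_add, hsum, Multiset.card_add]
  have hss : α'.sum + ((α + β) - α').sum = α.sum + β.sum := by
    rw [← Multiset.sum_add, hsum, Multiset.sum_add]
  have hmem : ∀ x : ℕ, x ∈ α + β → 0 < x ∧ x ≤ ns 1 := by
    intro x hx
    rcases Multiset.mem_add.1 hx with h | h
    · exact h5 x h
    · exact h6 x h
  refine ⟨h1, h2, h3, h4, ?_, ?_, ?_, ?_⟩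
  · intro x hx
    exact hmem x (Multiset.mem_of_le hle hx)
  · intro x hx
    exact hmem x (Multiset.mem_of_le tsub_le_self hx)
  · dsimp only at h7 ⊢
    omega
  · dsimp only at h8 ⊢
    rw [Multiset.card_add] at hcard
    push_cast at hcard hcc ⊢
    omega

/-- Theorem 4.1 of the paper: `N_k(m,n) ≥ N_k(m+2,n)` for all `k ≥ 2` and `m, n ≥ 0`. -/
theorem garvan_krank_parity_unimodal (k : ℕ) (hk : 2 ≤ k)
    (m : ℤ) (hm : 0 ≤ m) (n : ℕ) :
    Nk k (m + 2) n ≤ Nk k m n := by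
  classical
  have hfin : Finite {t : (ℕ → ℕ) × (ℕ → Multiset ℕ) × Multiset ℕ × Multiset ℕ //
      IsGarvanTuple k m n t} := garvan_finite k hk m n
  have hΦ : ∀ A : Multiset ℕ,
      Nonempty ({α // α ∈ QSet A (m + 2)} ↪ {α // α ∈ QSet A m}) := by
    intro A
    apply Function.Embedding.nonempty_of_card_le
    simpa [Fintype.card_coe] using QSet_mono A m hm
  let Φ : ∀ A : Multiset ℕ, {α // α ∈ QSet A (m + 2)} ↪ {α // α ∈ QSet A m} :=
    fun A => (hΦ A).some
  have hmem2 : ∀ t : (ℕ → ℕ) × (ℕ → Multiset ℕ) × Multiset ℕ × Multiset ℕ,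
      IsGarvanTuple k (m + 2) n t → t.2.2.1 ∈ QSet (t.2.2.1 + t.2.2.2) (m + 2) := by
    intro t ht
    refine mem_QSet.2 ⟨Multiset.le_add_right _ _, ?_⟩
    have h8 := ht.2.2.2.2.2.2.2
    rw [Multiset.card_add]
    push_cast
    omega
  let F : {t : (ℕ → ℕ) × (ℕ → Multiset ℕ) × Multiset ℕ × Multiset ℕ //
        IsGarvanTuple k (m + 2) n t} →
      {t : (ℕ → ℕ) × (ℕ → Multiset ℕ) × Multiset ℕ × Multiset ℕ //
        IsGarvanTuple k m n t} := fun t =>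
    ⟨(t.1.1, t.1.2.1, (Φ (t.1.2.2.1 + t.1.2.2.2) ⟨t.1.2.2.1, hmem2 t.1 t.2⟩ : Multiset ℕ),
      (t.1.2.2.1 + t.1.2.2.2) - (Φ (t.1.2.2.1 + t.1.2.2.2) ⟨t.1.2.2.1, hmem2 t.1 t.2⟩ : Multiset ℕ)),
      garvan_target t.2 (Φ (t.1.2.2.1 + t.1.2.2.2) ⟨t.1.2.2.1, hmem2 t.1 t.2⟩).2⟩
  have hFinj : Function.Injective F := by
    intro t1 t2 h
    have h' := congrArg Subtype.val h
    simp only [F, Prod.mk.injEq] at h'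
    obtain ⟨e1, e2, e3, e4⟩ := h'
    set A1 := t1.1.2.2.1 + t1.1.2.2.2 with hA1
    set A2 := t2.1.2.2.1 + t2.1.2.2.2 with hA2
    have hle1 : (Φ A1 ⟨t1.1.2.2.1, hmem2 t1.1 t1.2⟩ : Multiset ℕ) ≤ A1 :=
      (mem_QSet.1 (Φ A1 ⟨t1.1.2.2.1, hmem2 t1.1 t1.2⟩).2).1
    have hle2 : (Φ A2 ⟨t2.1.2.2.1, hmem2 t2.1 t2.2⟩ : Multiset ℕ) ≤ A2 :=
      (mem_QSet.1 (Φ A2 ⟨t2.1.2.2.1, hmem2 t2.1 t2.2⟩).2).1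
    have hA : A1 = A2 := by
      have := congrArg₂ (· + ·) e3 e4
      exact (add_tsub_cancel_of_le hle1).symm.trans (this.trans (add_tsub_cancel_of_le hle2))
    have hcast := Phi_cast Φ hA t1.1.2.2.1 (hmem2 t1.1 t1.2)
    have e3' : (Φ A2 ⟨t1.1.2.2.1, hA ▸ hmem2 t1.1 t1.2⟩ : Multiset ℕ)
        = (Φ A2 ⟨t2.1.2.2.1, hmem2 t2.1 t2.2⟩ : Multiset ℕ) := hcast.symm.trans e3
    have eα : t1.1.2.2.1 = t2.1.2.2.1 := by
      have := (Φ A2).injective (Subtype.ext e3')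
      exact congrArg Subtype.val this
    have eβ : t1.1.2.2.2 = t2.1.2.2.2 := by
      have : t1.1.2.2.1 + t1.1.2.2.2 = t2.1.2.2.1 + t2.1.2.2.2 := hA
      rw [eα] at this
      exact add_left_cancel this
    apply Subtype.ext
    exact Prod.ext e1 (Prod.ext e2 (Prod.ext eα eβ))
  exact Nat.card_le_card_of_injective F hFinj
end

section
/- For all integers m, n ≥ 0, V(m,n) ≥ V(m+2,n), where V(m,n) is the number of concave compositions of n with rank m. (Part of Theorem 4.2 of the paper.) -/
/-- A concave composition of `n` with rank `m`: a triple `(a, c, b)` where `a` is a weakly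
decreasing list of positive integers, `b` is a weakly increasing list of positive integers,
`c ≥ 0` is the central part, every entry of `a` and of `b` exceeds `c`,
`Σ a + c + Σ b = n`, and `(length of b) - (length of a) = m`. -/
def IsConcaveComposition (n : ℕ) (m : ℤ) (t : List ℕ × ℕ × List ℕ) : Prop :=
  List.Chain' (fun x y => y ≤ x) t.1 ∧
  List.Chain' (fun x y => x ≤ y) t.2.2 ∧
  (∀ x ∈ t.1, t.2.1 < x) ∧ (∀ x ∈ t.2.2, t.2.1 < x) ∧
  t.1.sum + t.2.1 + t.2.2.sum = n ∧
  (t.2.2.length : ℤ) - (t.1.length : ℤ) = m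

lemma list_len_le_sum (l : List ℕ) (h : ∀ x ∈ l, 0 < x) : l.length ≤ l.sum := by
  induction l with
  | nil => simp
  | cons x t ih =>
    simp only [List.length_cons, List.sum_cons]
    have := h x (by simp)
    have := ih (fun y hy => h y (by simp [hy]))
    omega

lemma mem_le_sum {l : List ℕ} {x : ℕ} (h : x ∈ l) : x ≤ l.sum := by
  induction l with
  | nil => simp at h
  | cons y t ih =>
    rcases List.mem_cons.1 h with rfl | h
    · simp
    · simp only [List.sum_cons]; exact le_add_of_nonneg_of_le (by omega) (ih h)

lemma bddL_finite (n : ℕ) : {l : List ℕ | l.length ≤ n ∧ ∀ x ∈ l, x ≤ n}.Finite := by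
  have h := (List.finite_length_le (Fin (n + 1)) n).image (List.map Fin.val)
  refine h.subset ?_
  rintro l ⟨h1, h2⟩
  refine ⟨l.pmap (fun x hx => (⟨x, hx⟩ : Fin (n + 1)))
      (fun x hx => Nat.lt_succ_of_le (h2 x hx)), by simpa, ?_⟩
  simp [List.map_pmap, List.pmap_eq_map]

lemma cc_finite (n : ℕ) (m : ℤ) : Finite {t : List ℕ × ℕ × List ℕ // IsConcaveComposition n m t} := by
  have hfin : ({t : List ℕ × ℕ × List ℕ | IsConcaveComposition n m t}).Finite := by
    refine Set.Finite.subset ((bddL_finite n).prod ((Set.finite_Iic n).prod (bddL_finite n))) ?_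
    rintro ⟨a, c, b⟩ ⟨ha, hb, hac, hbc, hsum, hrank⟩
    dsimp only at hsum hac hbc ⊢
    have hsa : a.sum ≤ n := by omega
    have hsb : b.sum ≤ n := by omega
    refine ⟨⟨le_trans (list_len_le_sum a fun x hx => (Nat.zero_le c).trans_lt (hac x hx)) hsa,
      fun x hx => le_trans (mem_le_sum hx) hsa⟩, by simp; omega,
      ⟨le_trans (list_len_le_sum b fun x hx => (Nat.zero_le c).trans_lt (hbc x hx)) hsb,
      fun x hx => le_trans (mem_le_sum hx) hsb⟩⟩
  exact hfin.to_subtype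

/-- The injection: move one unit of rank from `b` to `a`. -/
def ccPhi (t : List ℕ × ℕ × List ℕ) : List ℕ × ℕ × List ℕ :=
  match t with
  | (a, c, b) =>
    (a.map (· + (b.headD (c + 1) - (c + 1))) ++ [c + 1 + (b.headD (c + 1) - (c + 1))], c,
      (b.tail.take a.length).map (· - (b.headD (c + 1) - (c + 1))) ++ b.tail.drop a.length)

def ccPsi (t : List ℕ × ℕ × List ℕ) : List ℕ × ℕ × List ℕ :=
  match t with
  | (a, c, b) =>
    (a.dropLast.map (· - (a.getLastD (c + 1) - (c + 1))), c,
      (c + 1 + (a.getLastD (c + 1) - (c + 1))) ::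
        ((b.take (a.length - 1)).map (· + (a.getLastD (c + 1) - (c + 1))) ++
          b.drop (a.length - 1)))

lemma sum_map_add (k : ℕ) (l : List ℕ) : (l.map (· + k)).sum = l.sum + l.length * k := by
  induction l with
  | nil => simp
  | cons x t ih => simp [ih]; ring

lemma sum_map_sub (k : ℕ) (l : List ℕ) (h : ∀ x ∈ l, k ≤ x) :
    (l.map (· - k)).sum + l.length * k = l.sum := by
  induction l with
  | nil => simp
  | cons x t ih =>
    have h1 := h x (by simp)
    have h2 := ih (fun y hy => h y (by simp [hy]))
    simp only [List.map_cons, List.sum_cons, List.length_cons, add_mul, one_mul]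
    omega

section
variable {n mn : ℕ} {a : List ℕ} {c : ℕ} {b : List ℕ}

lemma phi_isCC (hcc : IsConcaveComposition n ((mn : ℤ) + 2) (a, c, b)) :
    IsConcaveComposition n mn (ccPhi (a, c, b)) := by
  obtain ⟨ha, hb, hac, hbc, hsum, hrank⟩ := hcc
  dsimp only at ha hb hac hbc hsum hrank
  haveI : IsTrans ℕ (fun x y => y ≤ x) := ⟨fun _ _ _ h1 h2 => le_trans h2 h1⟩
  haveI : IsTrans ℕ (fun x y : ℕ => x ≤ y) := ⟨fun _ _ _ h1 h2 => le_trans h1 h2⟩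
  cases b with
  | nil => exfalso; simp at hrank; omega
  | cons h tb =>
  have hk : c + 1 ≤ h := hbc h (by simp)
  set k := h - (c + 1) with hkdef
  have hkk : c + 1 + k = h := by omega
  have hlen : tb.length = a.length + mn + 1 := by
    simp only [List.length_cons] at hrank; push_cast at hrank; omega
  have hpb : List.Pairwise (fun x y : ℕ => x ≤ y) (h :: tb) := List.isChain_iff_pairwise.1 hb
  have hminb : ∀ x ∈ tb, h ≤ x := fun x hx => (List.pairwise_cons.1 hpb).1 x hx
  have hptb : List.Pairwise (fun x y : ℕ => x ≤ y) tb := (List.pairwise_cons.1 hpb).2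
  set R := a.length with hR
  set u := tb.take R with hu
  set v := tb.drop R with hv
  clear_value k R u v
  subst hR
  have huv : u ++ v = tb := by rw [hu, hv]; exact List.take_append_drop _ tb
  have hul : u.length = a.length := by rw [hu, List.length_take]; omega
  have hvl : v.length = mn + 1 := by rw [hv, List.length_drop]; omega
  have humem : ∀ x ∈ u, x ∈ tb := by rw [hu]; exact fun x hx => List.take_subset _ _ hx
  have hvmem : ∀ x ∈ v, x ∈ tb := by rw [hv]; exact fun x hx => List.drop_subset _ _ hx
  have huvle : ∀ x ∈ u, ∀ y ∈ v, x ≤ y := by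
    rw [← huv] at hptb
    exact fun x hx y hy => (List.pairwise_append.1 hptb).2.2 x hx y hy
  have hpa : List.Pairwise (fun x y : ℕ => y ≤ x) a := List.isChain_iff_pairwise.1 ha
  have hphi : ccPhi (a, c, h :: tb) =
      (a.map (· + k) ++ [c + 1 + k], c, u.map (· - k) ++ v) := by
    simp only [ccPhi, List.headD_cons, List.tail_cons]
    rw [hu, hv, hkdef]
  rw [hphi]
  refine ⟨?_, ?_, ?_, ?_, ?_, ?_⟩
  · dsimp only
    refine List.isChain_iff_pairwise.2 ?_
    rw [List.pairwise_append]
    refine ⟨List.pairwise_map.2 (hpa.imp fun hxy => by omega), by simp, ?_⟩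
    intro x hx y hy
    simp only [List.mem_singleton] at hy
    obtain ⟨z, hz, rfl⟩ := List.mem_map.1 hx
    have := hac z hz
    omega
  · dsimp only
    refine List.isChain_iff_pairwise.2 ?_
    rw [List.pairwise_append]
    refine ⟨List.pairwise_map.2 ((hptb.sublist (hu ▸ List.take_sublist a.length tb)).imp
      fun hxy => by omega), hptb.sublist (hv ▸ List.drop_sublist a.length tb), ?_⟩
    intro x hx y hy
    obtain ⟨z, hz, rfl⟩ := List.mem_map.1 hx
    have := huvle z hz y hy
    omega
  · dsimp only
    intro x hx
    rcases List.mem_append.1 hx with hx | hx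
    · obtain ⟨z, hz, rfl⟩ := List.mem_map.1 hx
      have := hac z hz; omega
    · simp only [List.mem_singleton] at hx; omega
  · dsimp only
    intro x hx
    rcases List.mem_append.1 hx with hx | hx
    · obtain ⟨z, hz, rfl⟩ := List.mem_map.1 hx
      have := hminb z (humem z hz); omega
    · exact hbc x (by simp [hvmem x hx])
  · dsimp only
    have h1 := sum_map_add k a
    have h2 := sum_map_sub k u (fun x hx => le_trans (by omega) (hminb x (humem x hx)))
    have h3 : u.sum + v.sum = tb.sum := by rw [← huv, List.sum_append]
    simp only [List.sum_append, List.sum_cons, List.sum_singleton, List.sum_nil] at hsum ⊢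
    rw [h1]
    rw [hul] at h2
    omega
  · dsimp only
    simp only [List.length_append, List.length_map, List.length_singleton, hul, hvl]
    push_cast
    omega

lemma psi_phi (hcc : IsConcaveComposition n ((mn : ℤ) + 2) (a, c, b)) :
    ccPsi (ccPhi (a, c, b)) = (a, c, b) := by
  obtain ⟨ha, hb, hac, hbc, hsum, hrank⟩ := hcc
  dsimp only at ha hb hac hbc hsum hrank
  cases b with
  | nil => exfalso; simp at hrank; omega
  | cons h tb =>
  have hk : c + 1 ≤ h := hbc h (by simp)
  set k := h - (c + 1) with hkdef
  have hkk : c + 1 + k = h := by omega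
  have hlen : tb.length = a.length + mn + 1 := by
    simp only [List.length_cons] at hrank; push_cast at hrank; omega
  have hpb : List.Pairwise (fun x y : ℕ => x ≤ y) (h :: tb) :=
    List.isChain_iff_pairwise.1 hb
  have hminb : ∀ x ∈ tb, h ≤ x := fun x hx => (List.pairwise_cons.1 hpb).1 x hx
  set R := a.length with hR
  set u := tb.take R with hu
  set v := tb.drop R with hv
  clear_value k R u v
  subst hR
  have huv : u ++ v = tb := by rw [hu, hv]; exact List.take_append_drop _ tb
  have hul : u.length = a.length := by rw [hu, List.length_take]; omega
  have hphi : ccPhi (a, c, h :: tb) =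
      (a.map (· + k) ++ [c + 1 + k], c, u.map (· - k) ++ v) := by
    simp only [ccPhi, List.headD_cons, List.tail_cons]
    rw [hu, hv, hkdef]
  rw [hphi]
  have hgl : (a.map (· + k) ++ [c + 1 + k]).getLastD (c + 1) = c + 1 + k :=
    List.getLastD_concat
  have hlength : (a.map (· + k) ++ [c + 1 + k]).length - 1 = a.length := by
    simp
  simp only [ccPsi, hgl, hlength, Nat.add_sub_cancel_left, List.dropLast_concat]
  refine Prod.ext ?_ (Prod.ext rfl ?_)
  · dsimp only
    rw [List.map_map]
    have : ∀ x ∈ a, ((fun x => x - k) ∘ fun x => x + k) x = id x := fun x _ => by simp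
    rw [List.map_congr_left this, List.map_id]
  · dsimp only
    rw [List.take_left' (by simp [hul]), List.drop_left' (by simp [hul]), List.map_map]
    have : ∀ x ∈ u, ((· + k) ∘ (· - k)) x = id x := by
      intro x hx
      have hxtb : x ∈ tb := by rw [hu] at hx; exact List.take_subset _ _ hx
      have := hminb x hxtb
      simp only [Function.comp, id]
      omega
    rw [List.map_congr_left this, List.map_id, huv, hkk]

end

/-- `V m n`: the number of concave compositions of `n` with rank `m`. -/
noncomputable def V (m : ℤ) (n : ℕ) : ℕ :=
  Nat.card {t : List ℕ × ℕ × List ℕ // IsConcaveComposition n m t}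

/-- Part of Theorem 4.2 of the paper: `V(m,n) ≥ V(m+2,n)` for all integers `m, n ≥ 0`. -/
theorem concave_rank_parity_unimodal (m : ℤ) (hm : 0 ≤ m) (n : ℕ) :
    V (m + 2) n ≤ V m n := by
  lift m to ℕ using hm
  haveI := cc_finite n (m : ℤ)
  refine Nat.card_le_card_of_injective
    (fun t => ⟨ccPhi t.val, ?_⟩) ?_
  · obtain ⟨⟨a, c, b⟩, ht⟩ := t
    exact phi_isCC ht
  · rintro ⟨⟨a₁, c₁, b₁⟩, h₁⟩ ⟨⟨a₂, c₂, b₂⟩, h₂⟩ hxy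
    have : ccPhi (a₁, c₁, b₁) = ccPhi (a₂, c₂, b₂) := congrArg Subtype.val hxy
    have h := congrArg ccPsi this
    rw [psi_phi h₁, psi_phi h₂] at h
    exact Subtype.ext h
end

section
/- For all integers m, n ≥ 0 with V_d(m,n) ≠ 0, one has V_d(m,n) > V_d(m+2,n), where V_d(m,n) is the number of strictly concave compositions of n with rank m. (Part of Theorem 4.3 of the paper.) -/
/-- A strictly concave composition of `n` with rank `m`: a triple `(a, c, b)` where `a` is a
strictly decreasing list of positive integers, `b` is a strictly increasing list of positive
integers, `c ≥ 0` is the central part, every entry of `a` and of `b` exceeds `c`,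
`Σ a + c + Σ b = n`, and `(length of b) - (length of a) = m`. -/
def IsStrictConcaveComposition (n : ℕ) (m : ℤ) (t : List ℕ × ℕ × List ℕ) : Prop :=
  List.Chain' (fun x y => y < x) t.1 ∧
  List.Chain' (fun x y => x < y) t.2.2 ∧
  (∀ x ∈ t.1, t.2.1 < x) ∧ (∀ x ∈ t.2.2, t.2.1 < x) ∧
  t.1.sum + t.2.1 + t.2.2.sum = n ∧
  (t.2.2.length : ℤ) - (t.1.length : ℤ) = m

/-- `Vd m n`: the number of strictly concave compositions of `n` with rank `m`. -/
noncomputable def Vd (m : ℤ) (n : ℕ) : ℕ :=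
  Nat.card {t : List ℕ × ℕ × List ℕ // IsStrictConcaveComposition n m t}

namespace SCCProof

open Finset

abbrev Q : Type := ℕ × Finset ℕ × Finset ℕ × Finset ℕ

def qkey (q : Q) : ℕ × Finset ℕ × Finset ℕ := (q.1, q.2.1, q.2.2.1)

/-- Quadruple encoding: `(c, E, U, B')` with `E = A ∩ B`, `U = A Δ B`, `B' = B \ A`. -/
def Tset (n : ℕ) (r : ℤ) : Set Q :=
  {q | Disjoint q.2.1 q.2.2.1 ∧ q.2.2.2 ⊆ q.2.2.1 ∧
       (∀ x ∈ q.2.1 ∪ q.2.2.1, q.1 < x) ∧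
       2 * q.2.1.sum id + q.2.2.1.sum id + q.1 = n ∧
       2 * (q.2.2.2.card : ℤ) - (q.2.2.1.card : ℤ) = r}

lemma nodup_of_chain_gt {l : List ℕ} (h : List.Chain' (fun x y => y < x) l) : l.Nodup := by
  have : List.Pairwise (fun x y => y < x) l := List.isChain_iff_pairwise.mp h
  exact this.imp (fun h => (ne_of_lt h).symm)

lemma nodup_of_chain_lt {l : List ℕ} (h : List.Chain' (fun x y => x < y) l) : l.Nodup := by
  have : List.Pairwise (fun x y => x < y) l := List.isChain_iff_pairwise.mp h
  exact this.imp (fun h => ne_of_lt h)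

def Fmap (t : List ℕ × ℕ × List ℕ) : Q :=
  (t.2.1, t.1.toFinset ∩ t.2.2.toFinset,
   (t.1.toFinset ∪ t.2.2.toFinset) \ (t.1.toFinset ∩ t.2.2.toFinset),
   t.2.2.toFinset \ t.1.toFinset)

def Gmap (q : Q) : List ℕ × ℕ × List ℕ :=
  (((q.2.1 ∪ (q.2.2.1 \ q.2.2.2)).sort (· ≤ ·)).reverse, q.1,
   (q.2.1 ∪ q.2.2.2).sort (· ≤ ·))

lemma sum_sort (s : Finset ℕ) : ((s.sort (· ≤ ·)).sum) = s.sum id := by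
  rw [(Finset.sort_perm_toList s (· ≤ ·)).sum_eq, ← List.map_id s.toList,
    Finset.sum_map_toList]

lemma Fmap_mem {n : ℕ} {r : ℤ} {t : List ℕ × ℕ × List ℕ}
    (ht : IsStrictConcaveComposition n r t) : Fmap t ∈ Tset n r := by
  obtain ⟨a, c, b⟩ := t
  obtain ⟨ha, hb, hac, hbc, hsum, hrank⟩ := ht
  dsimp only at ha hb hac hbc hsum hrank
  simp only [Tset, Fmap, Set.mem_setOf_eq]
  have hna : a.Nodup := nodup_of_chain_gt ha
  have hnb : b.Nodup := nodup_of_chain_lt hb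
  set X := a.toFinset with hX
  set Y := b.toFinset with hY
  have hsX : X.sum id = a.sum := by
    rw [hX, List.sum_toFinset _ hna, List.map_id]
  have hsY : Y.sum id = b.sum := by
    rw [hY, List.sum_toFinset _ hnb, List.map_id]
  have hcX : X.card = a.length := List.toFinset_card_of_nodup hna
  have hcY : Y.card = b.length := List.toFinset_card_of_nodup hnb
  have hXY : (X ∩ Y) ∪ ((X ∪ Y) \ (X ∩ Y)) = X ∪ Y := by
    ext z; simp only [mem_union, mem_inter, mem_sdiff]; tauto
  refine ⟨Finset.disjoint_sdiff, ?_, ?_, ?_, ?_⟩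
  · intro x hx
    simp only [mem_sdiff, mem_union, mem_inter] at hx ⊢
    tauto
  · intro x hx
    rw [hXY, mem_union] at hx
    rcases hx with hx | hx
    · exact hac x (List.mem_toFinset.mp hx)
    · exact hbc x (List.mem_toFinset.mp hx)
  · have h1 : ((X ∪ Y) \ (X ∩ Y)).sum id + (X ∩ Y).sum id = (X ∪ Y).sum id :=
      Finset.sum_sdiff Finset.inter_subset_union
    have h2 : (X ∪ Y).sum id + (X ∩ Y).sum id = X.sum id + Y.sum id :=
      Finset.sum_union_inter
    omega
  · have h3 : ((X ∪ Y) \ (X ∩ Y)).card + (X ∩ Y).card = (X ∪ Y).card :=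
      Finset.card_sdiff_add_card_eq_card Finset.inter_subset_union
    have h4 : (X ∪ Y).card + (X ∩ Y).card = X.card + Y.card :=
      Finset.card_union_add_card_inter X Y
    have e5 : (X ∪ Y) \ X = Y \ X := by
      ext z; simp only [mem_sdiff, mem_union]; tauto
    have h5 : (Y \ X).card + X.card = (X ∪ Y).card := by
      rw [← e5]; exact Finset.card_sdiff_add_card_eq_card Finset.subset_union_left
    omega

lemma Gmap_mem {n : ℕ} {r : ℤ} {q : Q} (hq : q ∈ Tset n r) :
    IsStrictConcaveComposition n r (Gmap q) := by
  obtain ⟨c, E, U, B⟩ := q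
  obtain ⟨hd, hsub, hmem, hsum, hrank⟩ := hq
  dsimp only at hd hsub hmem hsum hrank
  have hdE : Disjoint E (U \ B) := hd.mono_right sdiff_subset
  have hdB : Disjoint E B := hd.mono_right hsub
  simp only [IsStrictConcaveComposition, Gmap]
  refine ⟨?_, ?_, ?_, ?_, ?_, ?_⟩
  · refine List.isChain_reverse.mpr ?_
    exact (Finset.sortedLT_sort _).isChain
  · exact (Finset.sortedLT_sort _).isChain
  · intro x hx
    simp only [List.mem_reverse, Finset.mem_sort, mem_union, mem_sdiff] at hx
    exact hmem x (by simp only [mem_union]; tauto)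
  · intro x hx
    simp only [Finset.mem_sort, mem_union] at hx
    apply hmem
    rw [mem_union]
    rcases hx with h | h
    · exact Or.inl h
    · exact Or.inr (hsub h)
  · rw [List.sum_reverse, sum_sort, sum_sort, Finset.sum_union hdE, Finset.sum_union hdB]
    have h1 : (U \ B).sum id + B.sum id = U.sum id := Finset.sum_sdiff hsub
    simp only [Function.id_def] at h1 hsum ⊢
    omega
  · rw [List.length_reverse, Finset.length_sort, Finset.length_sort,
      Finset.card_union_of_disjoint hdE, Finset.card_union_of_disjoint hdB,
      Finset.card_sdiff_of_subset hsub]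
    have hle : B.card ≤ U.card := Finset.card_le_card hsub
    omega

lemma GF {n : ℕ} {r : ℤ} {t : List ℕ × ℕ × List ℕ}
    (ht : IsStrictConcaveComposition n r t) : Gmap (Fmap t) = t := by
  obtain ⟨a, c, b⟩ := t
  obtain ⟨ha, hb, -, -, -, -⟩ := ht
  dsimp only at ha hb
  have hna : a.Nodup := nodup_of_chain_gt ha
  have hnb : b.Nodup := nodup_of_chain_lt hb
  simp only [Gmap, Fmap, Prod.mk.injEq]
  set X := a.toFinset with hX
  set Y := b.toFinset with hY
  have e1 : (X ∩ Y) ∪ (((X ∪ Y) \ (X ∩ Y)) \ (Y \ X)) = X := by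
    ext z; simp only [mem_union, mem_inter, mem_sdiff]; tauto
  have e2 : (X ∩ Y) ∪ (Y \ X) = Y := by
    ext z; simp only [mem_union, mem_inter, mem_sdiff]; tauto
  have har : List.Chain' (· < ·) a.reverse := List.isChain_reverse.mpr ha
  have hsar : a.reverse.Pairwise (· ≤ ·) :=
    (List.isChain_iff_pairwise.mp har).imp le_of_lt
  have hsb : b.Pairwise (· ≤ ·) := (List.isChain_iff_pairwise.mp hb).imp le_of_lt
  refine ⟨?_, trivial, ?_⟩
  · rw [e1]
    have hXr : X = a.reverse.toFinset := by rw [hX, List.toFinset_reverse]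
    rw [hXr, (List.toFinset_sort _ (List.nodup_reverse.mpr hna)).mpr hsar,
      List.reverse_reverse]
  · rw [e2]
    exact (List.toFinset_sort _ hnb).mpr hsb

lemma FG {n : ℕ} {r : ℤ} {q : Q} (hq : q ∈ Tset n r) : Fmap (Gmap q) = q := by
  obtain ⟨c, E, U, B⟩ := q
  obtain ⟨hd, hsub, -, -, -⟩ := hq
  dsimp only at hd hsub
  have hd' : ∀ z, z ∈ E → z ∉ U := fun z hz => Finset.disjoint_left.mp hd hz
  have hs' : ∀ z, z ∈ B → z ∈ U := fun z hz => hsub hz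
  have tA : ((((E ∪ (U \ B)).sort (· ≤ ·)).reverse)).toFinset = E ∪ (U \ B) := by
    rw [List.toFinset_reverse, Finset.sort_toFinset]
  have tB : (((E ∪ B).sort (· ≤ ·))).toFinset = E ∪ B := Finset.sort_toFinset _ _
  simp only [Fmap, Gmap, Prod.mk.injEq]
  rw [tA, tB]
  refine ⟨trivial, ?_, ?_, ?_⟩
  · ext z
    simp only [mem_union, mem_inter, mem_sdiff]
    have h1 := hd' z; have h2 := hs' z; tauto
  · ext z
    simp only [mem_union, mem_inter, mem_sdiff]
    have h1 := hd' z; have h2 := hs' z; tauto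
  · ext z
    simp only [mem_union, mem_inter, mem_sdiff]
    have h1 := hd' z; have h2 := hs' z; tauto

lemma card_eq (n : ℕ) (r : ℤ) :
    Nat.card {t : List ℕ × ℕ × List ℕ // IsStrictConcaveComposition n r t}
      = Nat.card (Tset n r) := by
  refine Nat.card_congr ⟨fun t => ⟨Fmap t.1, Fmap_mem t.2⟩, fun q => ⟨Gmap q.1, Gmap_mem q.2⟩,
    fun t => Subtype.ext (GF t.2), fun q => Subtype.ext (FG q.2)⟩

lemma Tfinite (n : ℕ) (r : ℤ) : (Tset n r).Finite := by
  apply Set.Finite.subset (Finset.finite_toSet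
    ((range (n+1)) ×ˢ ((range (n+1)).powerset ×ˢ ((range (n+1)).powerset ×ˢ
      (range (n+1)).powerset))))
  rintro ⟨c, E, U, B⟩ ⟨hd, hsub, hmem, hsum, hrank⟩
  dsimp only at hd hsub hmem hsum hrank
  have hE : ∀ x ∈ E, x ≤ n := by
    intro x hx
    have := Finset.single_le_sum (f := id) (fun i _ => Nat.zero_le _) hx
    simp only [Function.id_def, id_eq] at this hsum
    omega
  have hU : ∀ x ∈ U, x ≤ n := by
    intro x hx
    have := Finset.single_le_sum (f := id) (fun i _ => Nat.zero_le _) hx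
    simp only [Function.id_def, id_eq] at this hsum
    omega
  simp only [Finset.coe_product, Set.mem_prod, Finset.mem_coe, Finset.mem_range,
    Finset.mem_powerset]
  refine ⟨by omega, ?_, ?_, ?_⟩
  · intro x hx; simp only [Finset.mem_range]; exact Nat.lt_succ_of_le (hE x hx)
  · intro x hx; simp only [Finset.mem_range]; exact Nat.lt_succ_of_le (hU x hx)
  · intro x hx; simp only [Finset.mem_range]; exact Nat.lt_succ_of_le (hU x (hsub hx))

lemma choose_strict {u k : ℕ} (h1 : k ≤ u) (h2 : u ≤ 2 * k) :
    u.choose (k + 1) < u.choose k := by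
  have h := Nat.choose_succ_right_eq u k
  have hpos : 0 < u.choose k := Nat.choose_pos h1
  have h3 : u.choose k * (u - k) < u.choose k * (k + 1) :=
    Nat.mul_lt_mul_of_le_of_lt (le_refl _) (by omega) hpos
  have h4 : u.choose (k + 1) * (k + 1) < u.choose k * (k + 1) := by omega
  exact Nat.lt_of_mul_lt_mul_right h4

lemma mem_Tfin {n : ℕ} {r : ℤ} {q : Q} :
    q ∈ (Tfinite n r).toFinset ↔ q ∈ Tset n r := Set.Finite.mem_toFinset _

lemma fiber_lemma (n : ℕ) (m : ℤ) (hm : 0 ≤ m) (kk : ℕ × Finset ℕ × Finset ℕ) :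
    (((Tfinite n (m+2)).toFinset.filter (fun q => qkey q = kk)).card ≤
      ((Tfinite n m).toFinset.filter (fun q => qkey q = kk)).card) ∧
    (((Tfinite n m).toFinset.filter (fun q => qkey q = kk)).Nonempty →
      ((Tfinite n (m+2)).toFinset.filter (fun q => qkey q = kk)).card <
      ((Tfinite n m).toFinset.filter (fun q => qkey q = kk)).card) := by
  classical
  have claimA : ((Tfinite n (m+2)).toFinset.filter (fun q => qkey q = kk)).Nonempty →
      ((Tfinite n m).toFinset.filter (fun q => qkey q = kk)).Nonempty := by
    rintro ⟨q, hq⟩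
    rw [mem_filter, mem_Tfin] at hq
    obtain ⟨hqT, hqk⟩ := hq
    obtain ⟨c, E, U, B2⟩ := q
    simp only [qkey] at hqk
    subst hqk
    obtain ⟨hd, hsub, hmem, hsum, hrank⟩ := hqT
    dsimp only at hd hsub hmem hsum hrank
    have hle : B2.card ≤ U.card := Finset.card_le_card hsub
    have hpos : 0 < B2.card := by omega
    obtain ⟨x, hx⟩ := Finset.card_pos.mp hpos
    refine ⟨(c, E, U, B2.erase x), ?_⟩
    rw [mem_filter, mem_Tfin]
    refine ⟨⟨hd, (Finset.erase_subset _ _).trans hsub, hmem, hsum, ?_⟩, rfl⟩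
    have hc : (B2.erase x).card = B2.card - 1 := Finset.card_erase_of_mem hx
    dsimp only
    omega
  have claimB : ((Tfinite n m).toFinset.filter (fun q => qkey q = kk)).Nonempty →
      ((Tfinite n (m+2)).toFinset.filter (fun q => qkey q = kk)).card <
      ((Tfinite n m).toFinset.filter (fun q => qkey q = kk)).card := by
    rintro ⟨q0, hq0⟩
    rw [mem_filter, mem_Tfin] at hq0
    obtain ⟨hqT, hqk⟩ := hq0
    obtain ⟨c, E, U, B0⟩ := q0
    simp only [qkey] at hqk
    subst hqk
    obtain ⟨hd, hsub, hmem, hsum, hrank⟩ := hqT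
    dsimp only at hd hsub hmem hsum hrank
    set k := B0.card with hk
    have hkU : k ≤ U.card := Finset.card_le_card hsub
    have hk2 : U.card ≤ 2 * k := by omega
    have hinj : Function.Injective (fun B' : Finset ℕ => ((c, E, U, B') : Q)) := by
      intro x y h
      simpa using h
    have hf : ((Tfinite n m).toFinset.filter (fun q => qkey q = (c,E,U)))
        = (U.powersetCard k).image (fun B' => (c, E, U, B')) := by
      ext q
      rw [mem_filter, mem_Tfin, Finset.mem_image]
      constructor
      · rintro ⟨hqT, hqk⟩
        obtain ⟨c1, E1, U1, B'⟩ := q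
        simp only [qkey, Prod.mk.injEq] at hqk
        obtain ⟨rfl, rfl, rfl⟩ := hqk
        obtain ⟨-, hsub', -, -, hrank'⟩ := hqT
        dsimp only at hsub' hrank'
        refine ⟨B', Finset.mem_powersetCard.mpr ⟨hsub', by omega⟩, rfl⟩
      · rintro ⟨B', hB', rfl⟩
        obtain ⟨hsub', hcard'⟩ := Finset.mem_powersetCard.mp hB'
        exact ⟨⟨hd, hsub', hmem, hsum, by dsimp only; omega⟩, rfl⟩
    have hf2 : ((Tfinite n (m+2)).toFinset.filter (fun q => qkey q = (c,E,U)))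
        = (U.powersetCard (k+1)).image (fun B' => (c, E, U, B')) := by
      ext q
      rw [mem_filter, mem_Tfin, Finset.mem_image]
      constructor
      · rintro ⟨hqT, hqk⟩
        obtain ⟨c1, E1, U1, B'⟩ := q
        simp only [qkey, Prod.mk.injEq] at hqk
        obtain ⟨rfl, rfl, rfl⟩ := hqk
        obtain ⟨-, hsub', -, -, hrank'⟩ := hqT
        dsimp only at hsub' hrank'
        refine ⟨B', Finset.mem_powersetCard.mpr ⟨hsub', by omega⟩, rfl⟩
      · rintro ⟨B', hB', rfl⟩
        obtain ⟨hsub', hcard'⟩ := Finset.mem_powersetCard.mp hB'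
        exact ⟨⟨hd, hsub', hmem, hsum, by dsimp only; omega⟩, rfl⟩
    rw [hf, hf2, Finset.card_image_of_injective _ hinj, Finset.card_image_of_injective _ hinj,
      Finset.card_powersetCard, Finset.card_powersetCard]
    exact choose_strict hkU hk2
  refine ⟨?_, claimB⟩
  rcases Finset.eq_empty_or_nonempty
      ((Tfinite n m).toFinset.filter (fun q => qkey q = kk)) with he | hne
  · have he2 : ((Tfinite n (m+2)).toFinset.filter (fun q => qkey q = kk)) = ∅ := by
      rcases Finset.eq_empty_or_nonempty
          ((Tfinite n (m+2)).toFinset.filter (fun q => qkey q = kk)) with h | h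
      · exact h
      · exact absurd (claimA h) (by rw [he]; exact Finset.not_nonempty_empty)
    rw [he, he2]
  · exact (claimB hne).le

end SCCProof

/-- Part of Theorem 4.3 of the paper: for all integers `m, n ≥ 0` with `V_d(m,n) ≠ 0`,
`V_d(m,n) > V_d(m+2,n)`. -/
theorem strict_concave_rank_strictly_unimodal (m : ℤ) (hm : 0 ≤ m) (n : ℕ)
    (hne : Vd m n ≠ 0) :
    Vd (m + 2) n < Vd m n := by
  classical
  have h1 : Vd m n = ((SCCProof.Tfinite n m).toFinset).card := by
    unfold Vd
    rw [SCCProof.card_eq, Nat.card_coe_set_eq,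
      Set.ncard_eq_toFinset_card _ (SCCProof.Tfinite n m)]
  have h2 : Vd (m+2) n = ((SCCProof.Tfinite n (m+2)).toFinset).card := by
    unfold Vd
    rw [SCCProof.card_eq, Nat.card_coe_set_eq,
      Set.ncard_eq_toFinset_card _ (SCCProof.Tfinite n (m+2))]
  rw [h1, h2]
  have hsne : ((SCCProof.Tfinite n m).toFinset).Nonempty := by
    rw [← Finset.card_pos, ← h1]
    exact Nat.pos_of_ne_zero hne
  set s := (SCCProof.Tfinite n m).toFinset with hs
  set s2 := (SCCProof.Tfinite n (m+2)).toFinset with hs2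
  rw [Finset.card_eq_sum_card_fiberwise (f := SCCProof.qkey)
      (t := s.image SCCProof.qkey ∪ s2.image SCCProof.qkey)
      (fun x hx => Finset.mem_union_right _ (Finset.mem_image_of_mem _ hx)),
    Finset.card_eq_sum_card_fiberwise (f := SCCProof.qkey)
      (t := s.image SCCProof.qkey ∪ s2.image SCCProof.qkey)
      (fun x hx => Finset.mem_union_left _ (Finset.mem_image_of_mem _ hx))]
  apply Finset.sum_lt_sum
  · intro i _
    exact (SCCProof.fiber_lemma n m hm i).1
  · obtain ⟨q0, hq0⟩ := hsne
    refine ⟨SCCProof.qkey q0, Finset.mem_union_left _ (Finset.mem_image_of_mem _ hq0), ?_⟩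
    exact (SCCProof.fiber_lemma n m hm (SCCProof.qkey q0)).2
      ⟨q0, Finset.mem_filter.mpr ⟨hq0, rfl⟩⟩
end
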